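/- arXiv:1106.6097 — 7 statements merged into one kernel-verified Lean document; each statement's English description precedes it below -/
import Mathlib

section
/- The integral over [0,1] of log|1 − e^{2πix}| with respect to Lebesgue measure equals 0. -/
open Real MeasureTheory Set intervalIntegral

noncomputable def gg : ℝ → ℝ :=
  fun x => Real.log ‖1 - Complex.exp (2 * Real.pi * Complex.I * x)‖

lemma habs (x : ℝ) :
    ‖1 - Complex.exp (2 * Real.pi * Complex.I * x)‖ = 2 * |Real.sin (Real.pi * x)| := by
  have key : (1:ℂ) - Complex.exp (2 * Real.pi * Complex.I * x)
      = Complex.exp (((Real.pi * x : ℝ)) * Complex.I) * (-2 * Complex.I * Complex.sin ((Real.pi * x : ℝ))) := by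
    have h2 : (2 * (Real.pi:ℂ) * Complex.I * x) = ((Real.pi * x : ℝ):ℂ) * Complex.I + ((Real.pi * x : ℝ):ℂ) * Complex.I := by
      push_cast; ring
    rw [h2, Complex.exp_add, Complex.exp_mul_I]
    linear_combination (-1 : ℂ) * Complex.sin_sq_add_cos_sq ((Real.pi * x : ℝ):ℂ)
      + (Complex.sin ((Real.pi * x : ℝ):ℂ))^2 * Complex.I_sq
  rw [key, norm_mul, Complex.norm_exp_ofReal_mul_I, one_mul, norm_mul, norm_mul,
    ← Complex.ofReal_sin, Complex.norm_real, Complex.norm_I]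
  norm_num

lemma loglog : IntervalIntegrable Real.log volume 0 1 := by
  have hcont : ContinuousOn (fun x : ℝ => x - x * Real.log x) (Icc 0 1) :=
    (continuous_id.sub Real.continuous_mul_log).continuousOn
  have hderiv : ∀ x ∈ Ioo (0:ℝ) 1, HasDerivAt (fun x : ℝ => x - x * Real.log x) (-Real.log x) x := by
    intro x hx
    have h1 : HasDerivAt (fun x : ℝ => x * Real.log x) (Real.log x + 1) x :=
      Real.hasDerivAt_mul_log (ne_of_gt hx.1)
    have : HasDerivAt (fun x : ℝ => x - x * Real.log x) (1 - (Real.log x + 1)) x := (hasDerivAt_id x).sub h1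
    convert this using 1; ring
  have hpos : ∀ x ∈ Ioo (0:ℝ) 1, 0 ≤ -Real.log x := by
    intro x hx
    simp only [neg_nonneg]
    exact Real.log_nonpos hx.1.le hx.2.le
  have h := integrableOn_deriv_of_nonneg hcont hderiv hpos
  have h2 : IntegrableOn Real.log (Ioc (0:ℝ) 1) volume := by
    exact integrable_neg_iff.mp h
  rw [intervalIntegrable_iff_integrableOn_Ioc_of_le zero_le_one]
  exact h2

lemma sin_lb {x : ℝ} (h0 : 0 < x) (h1 : x < 1) : 2 * (x * (1 - x)) ≤ Real.sin (Real.pi * x) := by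
  rcases le_or_gt x (1/2) with h | h
  · have := Real.mul_le_sin (x := Real.pi * x) (by positivity)
      (by nlinarith [Real.pi_pos])
    have hπ : 2 / Real.pi * (Real.pi * x) = 2 * x := by
      field_simp
    rw [hπ] at this
    nlinarith
  · have hy0 : 0 < 1 - x := by linarith
    have hs : Real.sin (Real.pi * x) = Real.sin (Real.pi * (1 - x)) := by
      rw [mul_sub, mul_one, Real.sin_pi_sub]
    have := Real.mul_le_sin (x := Real.pi * (1 - x)) (by positivity)
      (by nlinarith [Real.pi_pos])
    have hπ : 2 / Real.pi * (Real.pi * (1 - x)) = 2 * (1 - x) := by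
      field_simp
    rw [hπ] at this
    rw [hs]
    nlinarith

lemma ggInt : IntervalIntegrable gg volume 0 1 := by
  rw [intervalIntegrable_iff_integrableOn_Ioc_of_le zero_le_one]
  have hB : IntegrableOn (fun x : ℝ => Real.log 2 - Real.log x - Real.log (1 - x)) (Ioc 0 1) volume := by
    have h1 : IntervalIntegrable (fun x : ℝ => Real.log (1 - x)) volume 0 1 := by
      have := (loglog.comp_sub_left 1).symm
      simpa using this
    have h2 : IntervalIntegrable (fun x : ℝ => Real.log 2 - Real.log x - Real.log (1 - x)) volume 0 1 :=
      (((_root_.intervalIntegrable_const (c := Real.log 2)).sub loglog).sub h1)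
    rw [intervalIntegrable_iff_integrableOn_Ioc_of_le zero_le_one] at h2
    exact h2
  have hmeas : AEStronglyMeasurable gg (volume.restrict (Ioc (0:ℝ) 1)) := by
    apply Measurable.aestronglyMeasurable
    exact Real.measurable_log.comp (Continuous.measurable (by continuity))
  refine Integrable.mono' hB hmeas ?_
  rw [ae_restrict_iff' measurableSet_Ioc]
  refine .of_forall fun x hx => ?_
  rcases eq_or_lt_of_le hx.2 with h1 | h1
  · subst h1
    simp only [gg, habs, mul_one, Real.sin_pi, abs_zero, mul_zero, Real.log_zero,
      Real.norm_eq_abs, abs_zero, Real.log_one, sub_zero]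
    have h2pos : 0 ≤ Real.log 2 := Real.log_nonneg (by norm_num)
    norm_num
    linarith
  · have h0 := hx.1
    have hs0 : 0 < Real.sin (Real.pi * x) := by
      have := sin_lb h0 h1; nlinarith
    have habs2 : |Real.sin (Real.pi * x)| = Real.sin (Real.pi * x) := abs_of_pos hs0
    have hxlog : Real.log x ≤ 0 := Real.log_nonpos h0.le h1.le
    have hylog : Real.log (1 - x) ≤ 0 := Real.log_nonpos (by linarith) (by linarith)
    rw [Real.norm_eq_abs, abs_le]
    constructor
    · have hx1 : (0:ℝ) < 1 - x := by linarith
      have hxx : (0:ℝ) < x * (1 - x) := mul_pos h0 hx1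
      have hlow : Real.log (2 * (2 * (x * (1 - x)))) ≤ gg x := by
        simp only [gg, habs, habs2]
        apply Real.log_le_log (by linarith)
        nlinarith [sin_lb h0 h1]
      have hsplit : Real.log (2 * (2 * (x * (1 - x))))
          = Real.log 2 + Real.log 2 + Real.log x + Real.log (1 - x) := by
        rw [Real.log_mul (by norm_num) (by positivity), Real.log_mul (by norm_num) (ne_of_gt hxx),
          Real.log_mul (ne_of_gt h0) (ne_of_gt hx1)]
        ring
      have h2pos : 0 ≤ Real.log 2 := Real.log_nonneg (by norm_num)
      nlinarith
    · have hup : gg x ≤ Real.log 2 := by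
        simp only [gg, habs, habs2]
        apply Real.log_le_log (by linarith)
        nlinarith [Real.sin_le_one (Real.pi * x)]
      linarith

lemma hper : Function.Periodic gg 1 := by
  intro x
  have hexp : Complex.exp (2 * Real.pi * Complex.I * ((x + 1 : ℝ) : ℂ))
      = Complex.exp (2 * Real.pi * Complex.I * x) := by
    rw [show (2 * (Real.pi:ℂ) * Complex.I * ((x + 1 : ℝ) : ℂ))
        = 2 * Real.pi * Complex.I * x + 2 * Real.pi * Complex.I by push_cast; ring,
      Complex.exp_add, Complex.exp_two_pi_mul_I, mul_one]
  simp only [gg]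
  push_cast
  push_cast at hexp
  rw [hexp]

lemma hdouble {x : ℝ} (hs : Real.sin (Real.pi * x) ≠ 0) (hc : Real.cos (Real.pi * x) ≠ 0) :
    gg (2 * x) = gg x + gg (x + 1/2) := by
  set e := Complex.exp (2 * Real.pi * Complex.I * x) with he
  have f1 : (1:ℂ) - Complex.exp (2 * Real.pi * Complex.I * ((2*x:ℝ):ℂ)) = (1 - e) * (1 + e) := by
    rw [show (2 * (Real.pi:ℂ) * Complex.I * ((2*x:ℝ):ℂ))
        = 2 * Real.pi * Complex.I * x + 2 * Real.pi * Complex.I * x by push_cast; ring,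
      Complex.exp_add, ← he]
    ring
  have f2 : (1:ℂ) - Complex.exp (2 * Real.pi * Complex.I * ((x + 1/2:ℝ):ℂ)) = 1 + e := by
    rw [show (2 * (Real.pi:ℂ) * Complex.I * ((x + 1/2:ℝ):ℂ))
        = 2 * Real.pi * Complex.I * x + Real.pi * Complex.I by push_cast; ring,
      Complex.exp_add, Complex.exp_pi_mul_I, ← he]
    ring
  have h1 : ‖1 - e‖ ≠ 0 := by
    rw [he, habs]
    simp [hs]
  have h2 : ‖1 + e‖ ≠ 0 := by
    have hf2 : ‖1 + e‖ = ‖1 - Complex.exp (2 * Real.pi * Complex.I * ((x + 1/2 : ℝ):ℂ))‖ := by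
      rw [f2]
    rw [hf2, habs (x + 1/2)]
    have : Real.sin (Real.pi * (x + 1/2)) = Real.cos (Real.pi * x) := by
      rw [show Real.pi * (x + 1/2) = Real.pi * x + Real.pi / 2 by ring, Real.sin_add_pi_div_two]
    rw [this]
    simp [hc]
  simp only [gg]
  push_cast
  push_cast at f1 f2
  rw [f1, f2, norm_mul, Real.log_mul h1 h2]

/-- The integral over `[0,1]` of `log |1 - e^{2πix}|` equals `0`. -/
theorem integral_log_abs_one_sub_exp :
    ∫ x in (0:ℝ)..1, Real.log ‖1 - Complex.exp (2 * Real.pi * Complex.I * x)‖ = 0 := by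
  show ∫ x in (0:ℝ)..1, gg x = 0
  -- integrability on 1..2
  have h12 : IntervalIntegrable gg volume 1 2 := by
    have h := ggInt.comp_sub_right 1
    have heq : (fun x : ℝ => gg (x - 1)) = gg := funext fun x => by
      simpa using (hper (x - 1)).symm
    rw [heq] at h
    norm_num at h
    exact h
  have h02 : IntervalIntegrable gg volume 0 2 := ggInt.trans h12
  have hhalf : IntervalIntegrable (fun x : ℝ => gg (x + 1/2)) volume 0 1 := by
    have hsub : IntervalIntegrable gg volume (1/2) (3/2) := by
      apply h02.mono_set
      rw [Set.uIcc_subset_uIcc_iff_le]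
      norm_num
    have h := hsub.comp_add_right (1/2)
    norm_num at h
    exact h
  -- step A
  have hA : ∫ x in (0:ℝ)..1, gg (2 * x) = ∫ x in (0:ℝ)..1, gg x := by
    have h := integral_comp_mul_left (a := (0:ℝ)) (b := 1) (c := 2) gg two_ne_zero
    rw [h]
    norm_num
    have hsplit : ∫ x in (0:ℝ)..2, gg x = (∫ x in (0:ℝ)..1, gg x) + ∫ x in (1:ℝ)..2, gg x :=
      (integral_add_adjacent_intervals ggInt h12).symm
    have hshift : ∫ x in (1:ℝ)..2, gg x = ∫ x in (0:ℝ)..1, gg x := by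
      have := hper.intervalIntegral_add_eq 1 0
      norm_num at this
      exact this
    rw [hsplit, hshift]
    ring
  -- step B
  have hB : ∫ x in (0:ℝ)..1, gg (x + 1/2) = ∫ x in (0:ℝ)..1, gg x := by
    calc ∫ x in (0:ℝ)..1, gg (x + 1/2)
        = ∫ x in (0+(1/2):ℝ)..(1+(1/2)), gg x := integral_comp_add_right gg (1/2)
      _ = ∫ x in (1/2 : ℝ)..(1/2+1), gg x := by norm_num
      _ = ∫ x in (0:ℝ)..(0+1), gg x := hper.intervalIntegral_add_eq (1/2) 0
      _ = ∫ x in (0:ℝ)..1, gg x := by norm_num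
  -- step C : a.e. equality
  have hC : ∫ x in (0:ℝ)..1, gg (2 * x) = ∫ x in (0:ℝ)..1, (gg x + gg (x + 1/2)) := by
    apply intervalIntegral.integral_congr_ae
    have hSsub : {x : ℝ | Real.sin (Real.pi * x) = 0 ∨ Real.cos (Real.pi * x) = 0}
        ⊆ Set.range (fun n : ℤ => (n:ℝ)/2) := by
      intro x hx
      rcases hx with h | h
      · rcases Real.sin_eq_zero_iff.mp h with ⟨n, hn⟩
        refine ⟨2*n, ?_⟩
        have hx : (n:ℝ) = x := mul_right_cancel₀ Real.pi_ne_zero (by linarith [hn])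
        push_cast
        linarith
      · rcases Real.cos_eq_zero_iff.mp h with ⟨k, hk⟩
        refine ⟨2*k+1, ?_⟩
        have hx : x = (2*(k:ℝ)+1)/2 := mul_right_cancel₀ Real.pi_ne_zero (by linarith [hk])
        push_cast
        linarith
    have hS0 : volume {x : ℝ | Real.sin (Real.pi * x) = 0 ∨ Real.cos (Real.pi * x) = 0} = 0 :=
      measure_mono_null hSsub ((Set.countable_range _).measure_zero _)
    have hae : ∀ᵐ x ∂(volume : Measure ℝ),
        x ∉ {x : ℝ | Real.sin (Real.pi * x) = 0 ∨ Real.cos (Real.pi * x) = 0} :=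
      measure_eq_zero_iff_ae_notMem.mp hS0
    filter_upwards [hae] with x hx _
    push_neg at hx
    exact hdouble hx.1 hx.2
  -- step D : split RHS
  have hD : ∫ x in (0:ℝ)..1, (gg x + gg (x + 1/2))
      = (∫ x in (0:ℝ)..1, gg x) + ∫ x in (0:ℝ)..1, gg x := by
    rw [integral_add ggInt hhalf, hB]
  have key : (∫ x in (0:ℝ)..1, gg x) = (∫ x in (0:ℝ)..1, gg x) + ∫ x in (0:ℝ)..1, gg x := by
    conv_lhs => rw [← hA]
    rw [hC, hD]
  linarith
end

section
/- (Pólya) Let p be a monic complex polynomial of degree n ≥ 1 and let y ∈ ℝ. Then for every ε > 0, the Lebesgue measure of the set {x ∈ ℝ : |p(x + iy)| ≤ ε} is at most 4·ε^{1/n}. -/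
open Polynomial Finset Real MeasureTheory

lemma cheb_facts : ∀ n : ℕ, (Polynomial.Chebyshev.T ℝ (n+1)).natDegree = n+1 ∧
    (Polynomial.Chebyshev.T ℝ (n+1)).coeff (n+1) = 2^n := by
  intro n
  induction n using Nat.twoStepInduction with
  | zero => simp [Polynomial.Chebyshev.T_one]
  | one =>
    rw [show ((1:ℕ)+1 : ℤ) = 2 by norm_num, Polynomial.Chebyshev.T_two]
    constructor
    · compute_degree!
    · simp [coeff_sub, coeff_ofNat_mul, coeff_one]
  | more k ih1 ih2 =>
    obtain ⟨hd1, hc1⟩ := ih1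
    obtain ⟨hd2, hc2⟩ := ih2
    have hrec : Polynomial.Chebyshev.T ℝ (↑(k+2)+1) =
        2 * X * Polynomial.Chebyshev.T ℝ (↑(k+1)+1) - Polynomial.Chebyshev.T ℝ (↑k+1) := by
      have := Polynomial.Chebyshev.T_add_two ℝ (↑k+1)
      rw [show ((k:ℤ)+1+2) = (↑(k+2)+1 : ℤ) by push_cast; ring,
        show ((k:ℤ)+1+1) = (↑(k+1)+1 : ℤ) by push_cast; ring] at this
      exact this
    have h2X : (2 * X * Polynomial.Chebyshev.T ℝ (↑(k+1)+1)) =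
        C 2 * (X * Polynomial.Chebyshev.T ℝ (↑(k+1)+1)) := by
      rw [mul_assoc]; congr 1
    have hcoeff : (Polynomial.Chebyshev.T ℝ (↑(k+2)+1)).coeff (k+2+1) = 2^(k+2) := by
      rw [hrec, coeff_sub, h2X, coeff_C_mul, show k+2+1 = (k+1+1)+1 by ring, coeff_X_mul, hc2,
        coeff_eq_zero_of_natDegree_lt (by rw [hd1]; omega)]
      ring
    have hdegle : (Polynomial.Chebyshev.T ℝ (↑(k+2)+1)).natDegree ≤ k+2+1 := by
      rw [hrec]
      refine le_trans (natDegree_sub_le _ _) (max_le ?_ (by rw [hd1]; omega))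
      refine le_trans (natDegree_mul_le) ?_
      have : (2 * X : ℝ[X]).natDegree ≤ 1 :=
        le_trans natDegree_mul_le (by simp)
      omega
    have hdeg : (Polynomial.Chebyshev.T ℝ (↑(k+2)+1)).natDegree = k+2+1 := by
      refine le_antisymm hdegle (le_natDegree_of_ne_zero ?_)
      rw [hcoeff]; positivity
    exact ⟨hdeg, hcoeff⟩

lemma lagrange_leading {F : Type*} [Field F] {n : ℕ} (v : ℕ → F)
    (hv : Set.InjOn v (Finset.range (n+1))) (P : F[X]) (hP : P.Monic)
    (hPd : P.natDegree = n) :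
    ∑ i ∈ Finset.range (n+1), P.eval (v i) *
      ∏ j ∈ (Finset.range (n+1)).erase i, (v i - v j)⁻¹ = 1 := by
  have hcard : #(Finset.range (n+1)) = n + 1 := Finset.card_range _
  have hdeg : P.degree < (#(Finset.range (n+1)) : WithBot ℕ) := by
    rw [hcard]
    refine lt_of_le_of_lt degree_le_natDegree ?_
    rw [hPd]
    exact_mod_cast (WithBot.coe_lt_coe).mpr (Nat.lt_succ_self n)
  have hPi := Lagrange.eq_interpolate hv hdeg
  have hco := congrArg (fun q => Polynomial.coeff q n) hPi
  simp only [Lagrange.interpolate_apply] at hco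
  rw [finset_sum_coeff] at hco
  have hbasis : ∀ i ∈ Finset.range (n+1),
      (C (eval (v i) P) * Lagrange.basis (Finset.range (n+1)) v i).coeff n
        = P.eval (v i) * ∏ j ∈ (Finset.range (n+1)).erase i, (v i - v j)⁻¹ := by
    intro i hi
    have hb : Lagrange.basis (Finset.range (n+1)) v i
        = C (Lagrange.nodalWeight (Finset.range (n+1)) v i)
          * Lagrange.nodal ((Finset.range (n+1)).erase i) v := by
      rw [Lagrange.basis_eq_prod_sub_inv_mul_nodal_div hi, Lagrange.nodal_erase_eq_nodal_div hi]
    have hnd : (Lagrange.nodal ((Finset.range (n+1)).erase i) v).natDegree = n := by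
      rw [Lagrange.natDegree_nodal, Finset.card_erase_of_mem hi, hcard]; omega
    have hmon : (Lagrange.nodal ((Finset.range (n+1)).erase i) v).coeff n = 1 := by
      have h2 := (Lagrange.nodal_monic (s := (Finset.range (n+1)).erase i) (v := v)).coeff_natDegree
      rwa [hnd] at h2
    rw [hb, coeff_C_mul, coeff_C_mul, hmon, mul_one, Lagrange.nodalWeight]
  rw [Finset.sum_congr rfl hbasis] at hco
  rw [← hco]
  rw [show P.coeff n = 1 by rw [← hPd]; exact hP.coeff_natDegree]

lemma cos_nodes_lt (n : ℕ) (hn : 1 ≤ n) : ∀ i j : ℕ, i ≤ n → j ≤ n → i < j →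
    Real.cos (j*π/n) < Real.cos (i*π/n) := by
  have hnR : (0:ℝ) < n := by exact_mod_cast hn
  have hangle : ∀ i : ℕ, i ≤ n → (i*π/n : ℝ) ∈ Set.Icc 0 π := by
    intro i hi
    constructor
    · positivity
    · rw [div_le_iff₀ hnR]
      have : (i:ℝ) ≤ n := by exact_mod_cast hi
      nlinarith [Real.pi_pos]
  intro i j hi hj hij
  refine Real.strictAntiOn_cos (hangle i hi) (hangle j hj) ?_
  have h1 : (i:ℝ) < j := by exact_mod_cast hij
  rw [div_lt_div_iff_of_pos_right hnR]
  have := Real.pi_pos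
  nlinarith

lemma chebsum (n : ℕ) (hn : 1 ≤ n) :
    ∑ i ∈ Finset.range (n+1),
      (∏ j ∈ (Finset.range (n+1)).erase i,
        |Real.cos (i*π/n) - Real.cos (j*π/n)|)⁻¹ = 2^(n-1) := by
  have hnR : (0:ℝ) < n := by exact_mod_cast hn
  set x : ℕ → ℝ := fun i => Real.cos (i*π/n) with hx
  have hangle : ∀ i : ℕ, i ≤ n → (i*π/n : ℝ) ∈ Set.Icc 0 π := by
    intro i hi
    constructor
    · positivity
    · rw [div_le_iff₀ hnR]
      have : (i:ℝ) ≤ n := by exact_mod_cast hi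
      nlinarith [Real.pi_pos]
  have hmono : ∀ i j : ℕ, i ≤ n → j ≤ n → i < j → x j < x i := by
    intro i j hi hj hij
    refine Real.strictAntiOn_cos (hangle i hi) (hangle j hj) ?_
    have h1 : (i:ℝ) < j := by exact_mod_cast hij
    rw [div_lt_div_iff_of_pos_right hnR]
    have := Real.pi_pos
    nlinarith
  have hinj : Set.InjOn x (Finset.range (n+1)) := by
    intro a ha b hb hab
    simp only [Finset.coe_range, Set.mem_Iio] at ha hb
    by_contra hne
    rcases Nat.lt_or_ge a b with h | h
    · exact (hmono a b (by omega) (by omega) h).ne' hab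
    · exact (hmono b a (by omega) (by omega) (by omega)).ne hab
  -- the scaled Chebyshev polynomial
  set Q : ℝ[X] := C ((2:ℝ)^(n-1))⁻¹ * Polynomial.Chebyshev.T ℝ n with hQ
  obtain ⟨hTd, hTc⟩ := cheb_facts (n-1)
  have hn1 : n - 1 + 1 = n := by omega
  rw [show ((n-1:ℕ):ℤ)+1 = (n:ℤ) by omega] at hTd hTc
  rw [hn1] at hTd hTc
  have hQdeg : Q.natDegree = n := by
    rw [hQ, natDegree_C_mul (by positivity), hTd]
  have hQmonic : Q.Monic := by
    rw [Monic, leadingCoeff, hQdeg, hQ, coeff_C_mul]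
    rw [hTc]
    rw [inv_mul_cancel₀ (by positivity)]
  have hLag := lagrange_leading x hinj Q hQmonic hQdeg
  have hQeval : ∀ i : ℕ, i ≤ n → Q.eval (x i) = ((2:ℝ)^(n-1))⁻¹ * (-1)^i := by
    intro i hi
    rw [hQ, eval_mul, eval_C, hx]
    have hev := Polynomial.Chebyshev.T_real_cos ((i:ℝ)*π/n) (n:ℤ)
    simp only [Int.cast_natCast] at hev
    rw [hev, show (n:ℝ) * ((i:ℝ)*π/n) = (i:ℝ)*π - 0 by field_simp; ring,
      Real.cos_nat_mul_pi_sub 0 i, Real.cos_zero, mul_one]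
  have hsplit : ∀ i : ℕ, i ∈ Finset.range (n+1) →
      ∏ j ∈ (Finset.range (n+1)).erase i, (x i - x j)
        = (-1)^i * ∏ j ∈ (Finset.range (n+1)).erase i, |x i - x j| := by
    intro i hi
    rw [Finset.mem_range] at hi
    have hset : (Finset.range (n+1)).erase i = Finset.range i ∪ Finset.Ico (i+1) (n+1) := by
      ext j
      simp only [Finset.mem_erase, Finset.mem_range, Finset.mem_union, Finset.mem_Ico]
      omega
    have hdisj : Disjoint (Finset.range i) (Finset.Ico (i+1) (n+1)) := by
      rw [Finset.disjoint_left]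
      intro j hj1 hj2
      rw [Finset.mem_range] at hj1
      rw [Finset.mem_Ico] at hj2
      omega
    rw [hset, Finset.prod_union hdisj, Finset.prod_union hdisj]
    have h1 : ∏ j ∈ Finset.range i, (x i - x j)
        = (-1)^i * ∏ j ∈ Finset.range i, |x i - x j| := by
      rw [show (((-1:ℝ))^i) = ∏ _j ∈ Finset.range i, (-1:ℝ) by
        rw [Finset.prod_const, Finset.card_range],
        ← Finset.prod_mul_distrib]
      refine Finset.prod_congr rfl ?_
      intro j hj
      rw [Finset.mem_range] at hj
      have : x i - x j < 0 := by
        have := hmono j i (by omega) (by omega) hj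
        linarith
      rw [abs_of_neg this]; ring
    have h2 : ∏ j ∈ Finset.Ico (i+1) (n+1), (x i - x j)
        = ∏ j ∈ Finset.Ico (i+1) (n+1), |x i - x j| := by
      refine Finset.prod_congr rfl ?_
      intro j hj
      rw [Finset.mem_Ico] at hj
      have : 0 < x i - x j := by
        have := hmono i j (by omega) (by omega) (by omega)
        linarith
      rw [abs_of_pos this]
    rw [h1, h2]; ring
  have hterm : ∀ i : ℕ, i ∈ Finset.range (n+1) →
      Q.eval (x i) * ∏ j ∈ (Finset.range (n+1)).erase i, (x i - x j)⁻¹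
        = ((2:ℝ)^(n-1))⁻¹ * (∏ j ∈ (Finset.range (n+1)).erase i, |x i - x j|)⁻¹ := by
    intro i hi
    rw [Finset.prod_inv_distrib, hsplit i hi, hQeval i (by rw [Finset.mem_range] at hi; omega)]
    rw [mul_inv]
    rw [show ((-1:ℝ)^i)⁻¹ = (-1)^i by rw [← inv_pow]; norm_num]
    have hsq : ((-1:ℝ)^i) * ((-1:ℝ)^i) = 1 := by
      rw [← pow_add]
      exact Even.neg_one_pow ⟨i, rfl⟩
    linear_combination ((2:ℝ)^(n-1))⁻¹ *
      (∏ j ∈ (Finset.range (n+1)).erase i, |x i - x j|)⁻¹ * hsq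
  rw [Finset.sum_congr rfl hterm, ← Finset.mul_sum] at hLag
  have h2n : ((2:ℝ)^(n-1)) ≠ 0 := by positivity
  calc ∑ i ∈ Finset.range (n+1), (∏ j ∈ (Finset.range (n+1)).erase i, |x i - x j|)⁻¹
      = 2^(n-1) * (((2:ℝ)^(n-1))⁻¹ * ∑ i ∈ Finset.range (n+1),
          (∏ j ∈ (Finset.range (n+1)).erase i, |x i - x j|)⁻¹) := by
        field_simp
    _ = 2^(n-1) := by rw [hLag, mul_one]

lemma polya_core (n : ℕ) (hn : 1 ≤ n) (P : Polynomial ℂ) (hP : P.Monic)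
    (hPd : P.natDegree = n) (ε : ℝ) (hε : 0 < ε) (A : Set ℝ) (hA : IsClosed A)
    (R : ℝ) (hsub : A ⊆ Set.Icc (-R) R)
    (hval : ∀ x : ℝ, x ∈ A → ‖P.eval (x:ℂ)‖ ≤ ε) :
    volume A ≤ ENNReal.ofReal (4 * ε ^ (1 / (n : ℝ))) := by
  have hnR : (0:ℝ) < n := by exact_mod_cast hn
  set c := 4 * ε ^ (1 / (n : ℝ)) with hcdef
  have hc : 0 < c := by positivity
  have hfin : volume A ≠ ⊤ :=
    ne_top_of_le_ne_top (measure_Icc_lt_top).ne (measure_mono hsub)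
  set m := (volume A).toReal with hm
  rw [← ENNReal.ofReal_toReal hfin]
  refine ENNReal.ofReal_le_ofReal ?_
  -- suffices: m ≤ c
  by_contra hmc
  push_neg at hmc  -- c < m
  obtain ⟨m', hm'pos, hm'lt, hcm'⟩ : ∃ m' : ℝ, 0 < m' ∧ m' < m ∧ c < m' :=
    ⟨(c + m)/2, ⟨by linarith, by constructor <;> linarith⟩⟩
  -- the distribution function
  set F : ℝ → ℝ := fun t => (volume (A ∩ Set.Iic t)).toReal with hF
  have hfint : ∀ t, volume (A ∩ Set.Iic t) ≠ ⊤ := fun t =>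
    ne_top_of_le_ne_top hfin (measure_mono Set.inter_subset_left)
  have hFmono : Monotone F := fun a b hab =>
    ENNReal.toReal_mono (hfint b)
      (measure_mono (Set.inter_subset_inter_right _ (Set.Iic_subset_Iic.mpr hab)))
  have hFlip : ∀ a b : ℝ, a ≤ b → F b ≤ F a + (b - a) := by
    intro a b hab
    have hsub2 : A ∩ Set.Iic b ⊆ (A ∩ Set.Iic a) ∪ Set.Ioc a b := by
      rintro x ⟨hxA, hxb⟩
      rcases le_or_gt x a with h | h
      · exact Or.inl ⟨hxA, h⟩
      · exact Or.inr ⟨h, hxb⟩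
    have hle : volume (A ∩ Set.Iic b) ≤ volume (A ∩ Set.Iic a) + ENNReal.ofReal (b - a) := by
      refine le_trans (measure_mono hsub2) (le_trans (measure_union_le _ _) ?_)
      rw [Real.volume_Ioc]
    calc F b ≤ (volume (A ∩ Set.Iic a) + ENNReal.ofReal (b-a)).toReal :=
          ENNReal.toReal_mono (ENNReal.add_ne_top.mpr ⟨hfint a, ENNReal.ofReal_ne_top⟩) hle
      _ = F a + (b - a) := by
          rw [ENNReal.toReal_add (hfint a) ENNReal.ofReal_ne_top,
            ENNReal.toReal_ofReal (by linarith)]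
  have hFcont : Continuous F := by
    have key : ∀ a b : ℝ, a ≤ b → F b - F a ≤ b - a := fun a b h => by
      have := hFlip a b h; linarith
    refine (LipschitzWith.of_dist_le_mul (K := 1) ?_).continuous
    intro a b
    rw [NNReal.coe_one, one_mul, Real.dist_eq, Real.dist_eq, abs_sub_le_iff]
    rcases le_total a b with h | h
    · have h1 := key a b h
      have h2 := hFmono h
      have h3 : b - a ≤ |a - b| := by rw [abs_sub_comm]; exact le_abs_self _
      constructor <;> linarith
    · have h1 := key b a h
      have h2 := hFmono h
      have h3 : a - b ≤ |a - b| := le_abs_self _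
      constructor <;> linarith
  have hFR : F R = m := by
    have : A ∩ Set.Iic R = A := Set.inter_eq_self_of_subset_left (fun x hx => (hsub hx).2)
    rw [hF]; simp only [this, hm]
  have hFlow : ∀ t : ℝ, t < -R → F t = 0 := by
    intro t ht
    have : A ∩ Set.Iic t = ∅ := by
      ext x
      simp only [Set.mem_inter_iff, Set.mem_Iic, Set.mem_empty_iff_false, iff_false, not_and]
      intro hxA hxt
      have := (hsub hxA).1
      linarith
    rw [hF]; simp only [this, measure_empty, ENNReal.toReal_zero]
  -- the inverse function τ
  set τ : ℝ → ℝ := fun v => sInf {t : ℝ | v ≤ F t} with hτ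
  have hSne : ∀ v : ℝ, v ≤ m → ({t : ℝ | v ≤ F t}).Nonempty := fun v hv => ⟨R, by
    simp only [Set.mem_setOf_eq, hFR]; exact hv⟩
  have hSbdd : ∀ v : ℝ, 0 < v → BddBelow {t : ℝ | v ≤ F t} := by
    intro v hv
    refine ⟨-R-1, fun t ht => ?_⟩
    simp only [Set.mem_setOf_eq] at ht
    by_contra h
    push_neg at h
    rw [hFlow t (by linarith)] at ht
    linarith
  have hSclosed : ∀ v : ℝ, IsClosed {t : ℝ | v ≤ F t} := fun v =>
    isClosed_le continuous_const hFcont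
  have hτS : ∀ v : ℝ, 0 < v → v ≤ m → v ≤ F (τ v) := fun v hv hvm =>
    (hSclosed v).csInf_mem (hSne v hvm) (hSbdd v hv)
  have hτle : ∀ v : ℝ, 0 < v → v ≤ m → F (τ v) ≤ v := by
    intro v hv hvm
    refine le_of_tendsto (hFcont.continuousAt.tendsto.mono_left nhdsWithin_le_nhds)
      (?_ : ∀ᶠ t in nhdsWithin (τ v) (Set.Iio (τ v)), F t ≤ v)
    refine eventually_mem_nhdsWithin.mono ?_
    intro t ht
    have h1 : t < τ v := ht
    have h2 : t ∉ {t : ℝ | v ≤ F t} := fun hmem => absurd h1 (not_lt.mpr (csInf_le (hSbdd v hv) hmem))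
    simp only [Set.mem_setOf_eq, not_le] at h2
    linarith
  have hτA : ∀ v : ℝ, 0 < v → v ≤ m → τ v ∈ A := by
    intro v hv hvm
    by_contra h
    obtain ⟨δ, hδpos, hball⟩ := Metric.isOpen_iff.mp hA.isOpen_compl (τ v) h
    have heq : A ∩ Set.Iic (τ v - δ/2) = A ∩ Set.Iic (τ v) := by
      ext z
      simp only [Set.mem_inter_iff, Set.mem_Iic]
      constructor
      · rintro ⟨hzA, hz⟩; exact ⟨hzA, by linarith⟩
      · rintro ⟨hzA, hz⟩
        refine ⟨hzA, ?_⟩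
        by_contra hz2
        push_neg at hz2
        have : z ∈ Metric.ball (τ v) δ := by
          rw [Metric.mem_ball, Real.dist_eq, abs_sub_lt_iff]
          constructor <;> linarith
        exact hball this hzA
    have hFv : v ≤ F (τ v - δ/2) := by
      have := hτS v hv hvm
      rw [hF] at this ⊢
      simp only [heq]
      exact this
    have : τ v ≤ τ v - δ/2 := csInf_le (hSbdd v hv) hFv
    linarith
  have hτmono : ∀ v w : ℝ, 0 < v → v ≤ w → w ≤ m → τ v ≤ τ w ∧ w - v ≤ τ w - τ v := by
    intro v w hv hvw hwm
    have hτvw : τ v ≤ τ w := by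
      refine csInf_le_csInf (hSbdd v hv) (hSne w hwm) ?_
      intro t ht
      simp only [Set.mem_setOf_eq] at ht ⊢
      linarith
    refine ⟨hτvw, ?_⟩
    have h1 := hFlip (τ v) (τ w) hτvw
    have h2 := hτS w (by linarith) hwm
    have h3 := hτle v hv (by linarith)
    linarith
  -- nodes
  set x : ℕ → ℝ := fun i => Real.cos (i*π/n) with hx
  have hmono : ∀ i j : ℕ, i ≤ n → j ≤ n → i < j → x j < x i :=
    fun i j hi hj hij => cos_nodes_lt n hn i j hi hj hij
  set v : ℕ → ℝ := fun i => (m - m') + (m'/2) * (1 + x i) with hv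
  have hxm1 : ∀ i : ℕ, -1 ≤ x i := fun i => Real.neg_one_le_cos _
  have hx1 : ∀ i : ℕ, x i ≤ 1 := fun i => Real.cos_le_one _
  have hvpos : ∀ i : ℕ, 0 < v i := by
    intro i
    have := hxm1 i
    simp only [hv]
    nlinarith
  have hvle : ∀ i : ℕ, v i ≤ m := by
    intro i
    have := hx1 i
    simp only [hv]
    nlinarith
  set t : ℕ → ℝ := fun i => τ (v i) with ht
  have htA : ∀ i : ℕ, t i ∈ A := fun i => hτA (v i) (hvpos i) (hvle i)
  have hgapij : ∀ i j : ℕ, i ≤ n → j ≤ n → i < j → (m'/2)*(x i - x j) ≤ t i - t j := by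
    intro i j hi hj hij
    have hxij := hmono i j hi hj hij
    have hvji : v j ≤ v i := by simp only [hv]; nlinarith
    have := (hτmono (v j) (v i) (hvpos j) hvji (hvle i)).2
    have heq : v i - v j = (m'/2)*(x i - x j) := by simp only [hv]; ring
    simp only [ht]
    linarith [heq ▸ this]
  have habs : ∀ i j : ℕ, i ≤ n → j ≤ n → i ≠ j → (m'/2)*|x i - x j| ≤ |t i - t j| := by
    intro i j hi hj hij
    rcases Nat.lt_or_ge i j with h | h
    · have h1 := hmono i j hi hj h
      have h2 := hgapij i j hi hj h
      rw [abs_of_pos (by linarith), abs_of_nonneg (by nlinarith)]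
      exact h2
    · have hji : j < i := by omega
      have h1 := hmono j i hj hi hji
      have h2 := hgapij j i hj hi hji
      rw [abs_of_neg (by linarith), abs_of_nonpos (by nlinarith)]
      rw [neg_sub, neg_sub]
      exact h2
  have htlt : ∀ i j : ℕ, i ≤ n → j ≤ n → i < j → t j < t i := by
    intro i j hi hj hij
    have h1 := hmono i j hi hj hij
    have h2 := hgapij i j hi hj hij
    nlinarith
  set u : ℕ → ℂ := fun i => ((t i : ℝ) : ℂ) with hu
  have huinj : Set.InjOn u (Finset.range (n+1)) := by
    intro a ha b hb hab
    simp only [Finset.coe_range, Set.mem_Iio] at ha hb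
    have : t a = t b := by
      simpa only [hu, Complex.ofReal_inj] using hab
    by_contra hne
    rcases Nat.lt_or_ge a b with h | h
    · exact (htlt a b (by omega) (by omega) h).ne this.symm
    · exact (htlt b a (by omega) (by omega) (by omega)).ne this
  have hLag := lagrange_leading u huinj P hP hPd
  -- bound the terms
  have habsne : ∀ i j : ℕ, i ≤ n → j ≤ n → i ≠ j → 0 < |x i - x j| := by
    intro i j hi hj hij
    rcases Nat.lt_or_ge i j with h | h
    · have := hmono i j hi hj h; rw [abs_pos]; intro hc; linarith [sub_eq_zero.mp hc]
    · have := hmono j i hj hi (by omega); rw [abs_pos]; intro hc; linarith [sub_eq_zero.mp hc]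
  have hterm : ∀ i : ℕ, i ∈ Finset.range (n+1) →
      ‖P.eval (u i) * ∏ j ∈ (Finset.range (n+1)).erase i, (u i - u j)⁻¹‖
        ≤ ε * (((m'/2)^n)⁻¹ * (∏ j ∈ (Finset.range (n+1)).erase i, |x i - x j|)⁻¹) := by
    intro i hi
    rw [Finset.mem_range] at hi
    rw [norm_mul]
    have hprodabs : ‖∏ j ∈ (Finset.range (n+1)).erase i, (u i - u j)⁻¹‖
        = ∏ j ∈ (Finset.range (n+1)).erase i, |t i - t j|⁻¹ := by
      rw [norm_prod]
      refine Finset.prod_congr rfl ?_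
      intro j hj
      rw [norm_inv, hu]
      norm_cast
      rw [← Complex.ofReal_sub, Complex.norm_real, Real.norm_eq_abs]
    rw [hprodabs]
    have hb1 : ‖P.eval (u i)‖ ≤ ε := hval (t i) (htA i)
    have hb2 : ∏ j ∈ (Finset.range (n+1)).erase i, |t i - t j|⁻¹
        ≤ ∏ j ∈ (Finset.range (n+1)).erase i, ((m'/2) * |x i - x j|)⁻¹ := by
      refine Finset.prod_le_prod (fun j hj => by positivity) ?_
      intro j hj
      rw [Finset.mem_erase, Finset.mem_range] at hj
      have hjne : j ≠ i := hj.1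
      have hjn : j ≤ n := by omega
      have hpos : 0 < (m'/2) * |x i - x j| := by
        have := habsne i j (by omega) hjn (fun h => hjne h.symm)
        positivity
      exact inv_anti₀ hpos (habs i j (by omega) hjn (fun h => hjne h.symm))
    have hb3 : ∏ j ∈ (Finset.range (n+1)).erase i, ((m'/2) * |x i - x j|)⁻¹
        = ((m'/2)^n)⁻¹ * (∏ j ∈ (Finset.range (n+1)).erase i, |x i - x j|)⁻¹ := by
      rw [Finset.prod_inv_distrib, Finset.prod_mul_distrib, Finset.prod_const,
        Finset.card_erase_of_mem (by rw [Finset.mem_range]; omega), Finset.card_range,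
        Nat.add_sub_cancel, mul_inv]
    calc ‖P.eval (u i)‖ * ∏ j ∈ (Finset.range (n+1)).erase i, |t i - t j|⁻¹
        ≤ ε * ∏ j ∈ (Finset.range (n+1)).erase i, ((m'/2) * |x i - x j|)⁻¹ := by
          refine mul_le_mul hb1 hb2 ?_ hε.le
          exact Finset.prod_nonneg (fun j hj => by positivity)
      _ = ε * (((m'/2)^n)⁻¹ * (∏ j ∈ (Finset.range (n+1)).erase i, |x i - x j|)⁻¹) := by
          rw [hb3]
  -- sum up
  have hsum : (1:ℝ) ≤ ε * (((m'/2)^n)⁻¹ * 2^(n-1)) := by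
    have h0 : (1:ℝ) = ‖∑ i ∈ Finset.range (n+1),
        P.eval (u i) * ∏ j ∈ (Finset.range (n+1)).erase i, (u i - u j)⁻¹‖ := by
      rw [hLag]; simp
    calc (1:ℝ) = _ := h0
      _ ≤ ∑ i ∈ Finset.range (n+1), ‖
          (P.eval (u i) * ∏ j ∈ (Finset.range (n+1)).erase i, (u i - u j)⁻¹)‖ :=
        norm_sum_le _ _
      _ ≤ ∑ i ∈ Finset.range (n+1),
          ε * (((m'/2)^n)⁻¹ * (∏ j ∈ (Finset.range (n+1)).erase i, |x i - x j|)⁻¹) :=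
        Finset.sum_le_sum hterm
      _ = ε * (((m'/2)^n)⁻¹ * ∑ i ∈ Finset.range (n+1),
          (∏ j ∈ (Finset.range (n+1)).erase i, |x i - x j|)⁻¹) := by
        rw [← Finset.mul_sum, ← Finset.mul_sum]
      _ = ε * (((m'/2)^n)⁻¹ * 2^(n-1)) :=
        congrArg (fun S => ε * (((m'/2)^n)⁻¹ * S)) (chebsum n hn)
  have hmp : (0:ℝ) < (m'/2)^n := by positivity
  have hpow : (m'/2)^n ≤ ε * 2^(n-1) := by
    have h2 : (m'/2)^n * (ε * (((m'/2)^n)⁻¹ * 2^(n-1))) = ε * 2^(n-1) := by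
      rw [show (m'/2)^n * (ε * (((m'/2)^n)⁻¹ * 2^(n-1)))
          = ((m'/2)^n * ((m'/2)^n)⁻¹) * (ε * 2^(n-1)) by ring,
        mul_inv_cancel₀ (ne_of_gt hmp), one_mul]
    have h3 := mul_le_mul_of_nonneg_left hsum hmp.le
    rw [mul_one, h2] at h3
    exact h3
  have hm'n : m' ^ n ≤ ε * 4^n := by
    have he1 : m'^n = 2^n * (m'/2)^n := by
      rw [div_pow, mul_comm ((2:ℝ)^n), div_mul_cancel₀ _ (pow_ne_zero n (two_ne_zero (α := ℝ)))]
    have he2 : (2:ℝ)^n * (m'/2)^n ≤ 2^n * (ε * 2^(n-1)) :=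
      mul_le_mul_of_nonneg_left hpow (by positivity)
    have he3 : (2:ℝ)^n * (ε * 2^(n-1)) ≤ ε * 4^n := by
      rw [show (4:ℝ)^n = 2^n * 2^n by rw [← mul_pow]; norm_num]
      have h4 : (2:ℝ)^(n-1) ≤ 2^n := pow_le_pow_right₀ (by norm_num) (by omega)
      calc (2:ℝ)^n * (ε * 2^(n-1)) = ε * 2^(n-1) * 2^n := by ring
        _ ≤ ε * 2^n * 2^n := by
            refine mul_le_mul_of_nonneg_right ?_ (by positivity)
            exact mul_le_mul_of_nonneg_left h4 hε.le
        _ = ε * (2^n * 2^n) := by ring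
    linarith [he1 ▸ le_trans he2 he3]
  have hm'c : m' ≤ c := by
    have h1 : m' = ((m' ^ n : ℝ)) ^ (1/(n:ℝ)) := by
      rw [← Real.rpow_natCast m' n, ← Real.rpow_mul hm'pos.le, mul_one_div,
        div_self (ne_of_gt hnR), Real.rpow_one]
    rw [h1, hcdef]
    calc ((m'^n : ℝ)) ^ (1/(n:ℝ)) ≤ (ε * 4^n) ^ (1/(n:ℝ)) :=
        Real.rpow_le_rpow (by positivity) hm'n (by positivity)
      _ = 4 * ε ^ (1/(n:ℝ)) := by
        rw [Real.mul_rpow hε.le (by positivity), show (((4:ℝ)^n)) ^ (1/(n:ℝ)) = 4 by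
          rw [← Real.rpow_natCast 4 n, ← Real.rpow_mul (by norm_num), mul_one_div,
            div_self (ne_of_gt hnR), Real.rpow_one]]
        ring
  linarith

open MeasureTheory

/-- (Pólya) If `p` is a monic complex polynomial of degree `n ≥ 1` and `y ∈ ℝ`,
then for every `ε > 0` the Lebesgue measure of `{x ∈ ℝ : |p(x+iy)| ≤ ε}` is
at most `4 ε^(1/n)`. -/
theorem polya (n : ℕ) (hn : 1 ≤ n) (p : Polynomial ℂ) (hmonic : p.Monic)
    (hdeg : p.natDegree = n) (y : ℝ) (ε : ℝ) (hε : 0 < ε) :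
    volume {x : ℝ | ‖p.eval (x + y * Complex.I)‖ ≤ ε} ≤
      ENNReal.ofReal (4 * ε ^ (1 / (n : ℝ))) := by
  set P := p.comp (X + C ((y:ℂ) * Complex.I)) with hP
  have hPm : P.Monic := hmonic.comp_X_add_C _
  have hPd : P.natDegree = n := by
    rw [hP, natDegree_comp, natDegree_X_add_C, mul_one, hdeg]
  have hEval : ∀ x : ℝ, P.eval (x:ℂ) = p.eval ((x:ℂ) + (y:ℂ) * Complex.I) := by
    intro x
    rw [hP, eval_comp, eval_add, eval_X, eval_C]
  set E := {x : ℝ | ‖p.eval ((x:ℂ) + (y:ℂ) * Complex.I)‖ ≤ ε} with hE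
  have hEclosed : IsClosed E := by
    have hcont : Continuous fun x : ℝ => ‖p.eval ((x:ℂ) + (y:ℂ)*Complex.I)‖ := by
      have h1 : Continuous fun x : ℝ => ((x:ℂ) + (y:ℂ)*Complex.I) :=
        Complex.continuous_ofReal.add continuous_const
      exact continuous_norm.comp (p.continuous.comp h1)
    exact isClosed_le hcont continuous_const
  have hEunion : E = ⋃ k : ℕ, E ∩ Set.Icc (-(k:ℝ)) (k:ℝ) := by
    ext z
    simp only [Set.mem_iUnion, Set.mem_inter_iff, Set.mem_Icc]
    constructor
    · intro hz
      obtain ⟨k, hk⟩ := exists_nat_ge |z|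
      obtain ⟨h1, h2⟩ := abs_le.mp hk
      exact ⟨k, hz, by linarith, by linarith⟩
    · rintro ⟨k, hk, _, _⟩
      exact hk
  have hdir : Directed (· ⊆ ·) (fun k : ℕ => E ∩ Set.Icc (-(k:ℝ)) (k:ℝ)) := by
    refine Monotone.directed_le ?_
    intro a b hab
    refine Set.inter_subset_inter_right _ (Set.Icc_subset_Icc ?_ ?_) <;>
      · simp only [neg_le_neg_iff, Nat.cast_le]
        first
          | exact hab
          | exact_mod_cast hab
  calc volume E = volume (⋃ k : ℕ, E ∩ Set.Icc (-(k:ℝ)) (k:ℝ)) := by rw [← hEunion]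
    _ = ⨆ k : ℕ, volume (E ∩ Set.Icc (-(k:ℝ)) (k:ℝ)) := hdir.measure_iUnion
    _ ≤ ENNReal.ofReal (4 * ε ^ (1 / (n : ℝ))) := by
      refine iSup_le fun k => ?_
      refine polya_core n hn P hPm hPd ε hε _ (hEclosed.inter isClosed_Icc) (k:ℝ)
        Set.inter_subset_right ?_
      intro x hx
      rw [hEval]
      exact hx.1
end

section
/- (Sharpened Pólya) Let p be a monic complex polynomial of degree n ≥ 1 and y ∈ ℝ. Then for every ε > 0, the Lebesgue measure of {x ∈ ℝ : |p(x + iy)| ≤ ε} is at most 2^{2 − 1/n}·ε^{1/n}. -/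
open MeasureTheory Polynomial Real Set

lemma cheb_deg_coeff : ∀ n : ℕ, (Chebyshev.T ℝ n).natDegree ≤ n ∧
    (1 ≤ n → (Chebyshev.T ℝ n).coeff n = 2 ^ (n - 1)) := by
  intro n
  induction n using Nat.strong_induction_on with
  | _ n ih =>
    match n with
    | 0 => simp [Chebyshev.T_zero]
    | 1 => simp [Chebyshev.T_one]
    | (k + 2) =>
      have h2 : Chebyshev.T ℝ (k + 2 : ℕ) = 2 * X * Chebyshev.T ℝ (k + 1 : ℕ) - Chebyshev.T ℝ (k : ℕ) := by
        push_cast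
        exact Chebyshev.T_add_two ℝ k
      obtain ⟨hd1, hc1⟩ := ih (k + 1) (by omega)
      obtain ⟨hd0, _⟩ := ih k (by omega)
      constructor
      · rw [h2]
        refine le_trans (natDegree_sub_le _ _) ?_
        simp only [sup_le_iff]
        constructor
        · refine le_trans (natDegree_mul_le) ?_
          have : (2 * X : ℝ[X]).natDegree ≤ 1 := by
            refine le_trans (natDegree_mul_le) ?_
            simp
          omega
        · omega
      · intro _
        rw [h2]
        have e1 : (2 * X * Chebyshev.T ℝ (k + 1 : ℕ)).coeff (k + 2) = 2 * (Chebyshev.T ℝ (k + 1 : ℕ)).coeff (k + 1) := by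
          rw [mul_assoc, coeff_ofNat_mul, coeff_X_mul]
        have e0 : (Chebyshev.T ℝ (k : ℕ)).coeff (k + 2) = 0 :=
          coeff_eq_zero_of_natDegree_lt (by omega)
        rw [coeff_sub, e1, e0, hc1 (by omega)]
        rw [show k + 2 - 1 = (k + 1 - 1) + 1 by omega, pow_succ]
        ring

lemma ivt_root {f : ℝ → ℝ} (hf : Continuous f) {a b : ℝ} (hab : a ≤ b)
    (h : f a * f b < 0) : ∃ z ∈ Set.Ioo a b, f z = 0 := by
  rcases lt_or_gt_of_ne (fun h0 : f a = 0 => by simp [h0] at h) with hpos | hneg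
  · have hb : 0 < f b := by nlinarith
    obtain ⟨z, hz, hz0⟩ := intermediate_value_Ioo hab hf.continuousOn (by exact ⟨hpos, hb⟩ : (0:ℝ) ∈ Set.Ioo (f a) (f b))
    exact ⟨z, hz, hz0⟩
  · have hb : f b < 0 := by nlinarith
    obtain ⟨z, hz, hz0⟩ := intermediate_value_Ioo' hab hf.continuousOn (by exact ⟨hb, hneg⟩ : (0:ℝ) ∈ Set.Ioo (f b) (f a))
    exact ⟨z, hz, hz0⟩


lemma cheb_lower (n : ℕ) (hn : 1 ≤ n) (q : ℝ[X]) (hq : q.Monic) (hd : q.natDegree = n) :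
    ∃ u ∈ Set.Icc (-1:ℝ) 1, 1 ≤ 2 ^ (n - 1) * |q.eval u| := by
  by_contra hcon
  push_neg at hcon
  set r : ℝ[X] := Chebyshev.T ℝ n - C ((2:ℝ)^(n-1)) * q with hr
  set c : ℕ → ℝ := fun k => Real.cos (k * π / n) with hc
  have hnpos : (0:ℝ) < n := by exact_mod_cast hn
  -- c is in [-1,1]
  have hcmem : ∀ k, c k ∈ Set.Icc (-1:ℝ) 1 := fun k => ⟨Real.neg_one_le_cos _, Real.cos_le_one _⟩
  -- strict antitone on 0..n
  have hanti : ∀ k l : ℕ, k < l → l ≤ n → c l < c k := by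
    intro k l hkl hln
    apply Real.cos_lt_cos_of_nonneg_of_le_pi
    · positivity
    · rw [div_le_iff₀ hnpos]
      have : (l:ℝ) ≤ n := by exact_mod_cast hln
      nlinarith [Real.pi_pos]
    · have hkl' : (k:ℝ) < l := by exact_mod_cast hkl
      have hpi := Real.pi_pos
      gcongr
  -- evaluation of r at nodes
  have heval : ∀ k : ℕ, r.eval (c k) = (-1)^k - 2^(n-1) * q.eval (c k) := by
    intro k
    have h1 : (Chebyshev.T ℝ (n:ℤ)).eval (c k) = Real.cos (((n:ℤ):ℝ) * (k * π / n)) :=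
      Polynomial.Chebyshev.T_real_cos _ _
    push_cast at h1
    have h1 : (Chebyshev.T ℝ (n:ℤ)).eval (c k) = Real.cos ((n:ℝ) * (k * π / n)) := h1
    have h2 : (n:ℝ) * (k * π / n) = k * π := by field_simp
    have h3 : Real.cos ((k:ℝ) * π) = (-1)^k := by
      simpa using Real.cos_nat_mul_pi_sub 0 k
    rw [hr]
    simp only [eval_sub, eval_mul, eval_C, h1, h2, h3]
  -- sign of r at nodes
  have hsign : ∀ k : ℕ, 0 < (-1:ℝ)^k * r.eval (c k) := by
    intro k
    rw [heval k]
    set t := (2:ℝ)^(n-1) * q.eval (c k) with ht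
    have habs : |t| < 1 := by
      rw [ht, abs_mul, abs_of_pos (by positivity : (0:ℝ) < (2:ℝ)^(n-1))]
      exact hcon _ (hcmem k)
    have h1 : ((-1:ℝ)^k) * t ≤ |t| := by
      calc ((-1:ℝ)^k) * t ≤ |((-1:ℝ)^k) * t| := le_abs_self _
        _ = |t| := by rw [abs_mul, abs_pow, abs_neg, abs_one, one_pow, one_mul]
    have hsq : ((-1:ℝ)^k) * ((-1:ℝ)^k) = 1 := by
      rw [← mul_pow]; norm_num
    calc (0:ℝ) < 1 - ((-1:ℝ)^k) * t := by linarith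
      _ = (-1)^k * ((-1)^k - t) := by rw [mul_sub, hsq]
  -- roots between consecutive nodes
  have hroot : ∀ k : ℕ, ∃ zz : ℝ, k < n → zz ∈ Set.Ioo (c (k+1)) (c k) ∧ r.eval zz = 0 := by
    intro k
    by_cases hk : k < n
    · have hab : c (k+1) ≤ c k := (hanti k (k+1) (by omega) (by omega)).le
      have hprod : r.eval (c (k+1)) * r.eval (c k) < 0 := by
        have h1 := hsign k
        have h2 := hsign (k+1)
        have hsq : ((-1:ℝ)^k) * ((-1:ℝ)^k) = 1 := by rw [← mul_pow]; norm_num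
        rw [pow_succ] at h2
        nlinarith
      obtain ⟨z, hz, hz0⟩ := ivt_root (Polynomial.continuous r) hab hprod
      exact ⟨z, fun _ => ⟨hz, hz0⟩⟩
    · exact ⟨0, fun h => absurd h hk⟩
  choose z hz using hroot
  -- z is strictly decreasing on range n
  have hzlt : ∀ k l : ℕ, k < l → l < n → z l < z k := by
    intro k l hkl hln
    have h1 := (hz l hln).1
    have h2 := (hz k (by omega)).1
    have h3 : c l ≤ c (k+1) := by
      rcases eq_or_lt_of_le (by omega : k + 1 ≤ l) with h | h
      · rw [h]
      · exact (hanti (k+1) l h (by omega)).le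
    calc z l < c l := h1.2
      _ ≤ c (k+1) := h3
      _ < z k := h2.1
  have hinj : Set.InjOn z (Finset.range n) := by
    intro a ha b hb hab
    simp only [Finset.coe_range, Set.mem_Iio] at ha hb
    rcases lt_trichotomy a b with h | h | h
    · exact absurd hab (hzlt a b h hb).ne'
    · exact h
    · exact absurd hab (hzlt b a h ha).ne
  -- r ≠ 0
  have hr0 : r ≠ 0 := by
    intro h0
    have := hsign 0
    rw [h0] at this
    simp at this
  -- n ≤ natDegree r
  have hnle : n ≤ r.natDegree := by
    have hsub : (Finset.range n).image z ⊆ r.roots.toFinset := by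
      intro x hx
      obtain ⟨k, hk, rfl⟩ := Finset.mem_image.mp hx
      rw [Multiset.mem_toFinset, Polynomial.mem_roots']
      exact ⟨hr0, (hz k (Finset.mem_range.mp hk)).2⟩
    calc n = ((Finset.range n).image z).card := by
          rw [Finset.card_image_of_injOn hinj, Finset.card_range]
      _ ≤ r.roots.toFinset.card := Finset.card_le_card hsub
      _ ≤ Multiset.card r.roots := r.roots.toFinset_card_le
      _ ≤ r.natDegree := Polynomial.card_roots' r
  -- natDegree r ≤ n
  have hTdeg := (cheb_deg_coeff n).1
  have hdle : r.natDegree ≤ n := by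
    rw [hr]
    refine le_trans (natDegree_sub_le _ _) ?_
    simp only [sup_le_iff]
    exact ⟨hTdeg, le_trans (natDegree_C_mul_le _ _) hd.le⟩
  have hdeq : r.natDegree = n := le_antisymm hdle hnle
  -- leading coefficient of r is 0
  have hlc : r.coeff n = 0 := by
    rw [hr, coeff_sub, coeff_C_mul, (cheb_deg_coeff n).2 hn]
    have : q.coeff n = 1 := by
      rw [← hd]; exact hq.coeff_natDegree
    rw [this, mul_one, sub_self]
  have := hq -- unused
  exact hr0 (Polynomial.leadingCoeff_eq_zero.mp (by rw [Polynomial.leadingCoeff, hdeq]; exact hlc))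

lemma prod_map_nonneg {α : Type*} {s : Multiset α} {f : α → ℝ} (h : ∀ a ∈ s, 0 ≤ f a) :
    0 ≤ (s.map f).prod := by
  induction s using Multiset.induction with
  | empty => simp
  | cons a t ih =>
    simp only [Multiset.map_cons, Multiset.prod_cons]
    exact mul_nonneg (h a (by simp)) (ih fun b hb => h b (by simp [hb]))


lemma prod_map_mono {α : Type*} {s : Multiset α} {f g : α → ℝ} (h0 : ∀ a ∈ s, 0 ≤ f a)
    (h : ∀ a ∈ s, f a ≤ g a) : (s.map f).prod ≤ (s.map g).prod := by
  induction s using Multiset.induction with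
  | empty => simp
  | cons a t ih =>
    simp only [Multiset.map_cons, Multiset.prod_cons]
    refine mul_le_mul (h a (by simp)) (ih (fun b hb => h0 b (by simp [hb]))
      (fun b hb => h b (by simp [hb]))) (prod_map_nonneg fun b hb => h0 b (by simp [hb]))
      (le_trans (h0 a (by simp)) (h a (by simp)))


lemma pow_le_prod_map {α : Type*} {s : Multiset α} {f : α → ℝ} {c : ℝ} (hc : 0 ≤ c)
    (h : ∀ a ∈ s, c ≤ f a) : c ^ Multiset.card s ≤ (s.map f).prod := by
  induction s using Multiset.induction with
  | empty => simp
  | cons a t ih =>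
    simp only [Multiset.map_cons, Multiset.prod_cons, Multiset.card_cons, pow_succ']
    exact mul_le_mul (h a (by simp)) (ih fun b hb => h b (by simp [hb])) (pow_nonneg hc _)
      (le_trans hc (h a (by simp)))


lemma prod_map_const_mul (s : Multiset ℝ) (c : ℝ) (f : ℝ → ℝ) :
    (s.map fun a => c * f a).prod = c ^ Multiset.card s * (s.map f).prod := by
  induction s using Multiset.induction with
  | empty => simp
  | cons a t ih =>
    simp only [Multiset.map_cons, Multiset.prod_cons, Multiset.card_cons, ih, pow_succ']
    ring


lemma abs_prod_map (s : Multiset ℝ) (f : ℝ → ℝ) :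
    |(s.map f).prod| = (s.map fun a => |f a|).prod := by
  induction s using Multiset.induction with
  | empty => simp
  | cons a t ih => simp only [Multiset.map_cons, Multiset.prod_cons, abs_mul, ih]


lemma cheb_lower_interval (n : ℕ) (hn : 1 ≤ n) (s : Multiset ℝ)
    (hcard : Multiset.card s = n) (m : ℝ) (hm : 0 < m) :
    ∃ u ∈ Set.Icc (0:ℝ) m, 2 * (m/4)^n ≤ (s.map (fun a => |u - a|)).prod := by
  set b : ℝ → ℝ := fun a => 2*a/m - 1 with hb
  set q : ℝ[X] := ((s.map b).map fun c => X - C c).prod with hq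
  have hqm : q.Monic := monic_multiset_prod_of_monic _ _ fun c _ => monic_X_sub_C c
  have hqd : q.natDegree = n := by
    rw [hq, natDegree_multiset_prod_of_monic _ (fun f hf => by
      obtain ⟨c, _, rfl⟩ := Multiset.mem_map.mp hf; exact monic_X_sub_C c)]
    simp [Multiset.map_map, Function.comp, natDegree_X_sub_C, hcard]
  obtain ⟨v, hv, hlow⟩ := cheb_lower n hn q hqm hqd
  refine ⟨m*(v+1)/2, ⟨by nlinarith [hv.1], by nlinarith [hv.2]⟩, ?_⟩
  have heval : |q.eval v| = (s.map fun a => |v - b a|).prod := by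
    rw [hq, eval_multiset_prod, Multiset.map_map, Multiset.map_map]
    simp only [Function.comp, eval_sub, eval_X, eval_C]
    rw [abs_prod_map]
  have hfac : ∀ a : ℝ, |m*(v+1)/2 - a| = (m/2) * |v - b a| := by
    intro a
    rw [hb]
    rw [← abs_of_pos (by positivity : (0:ℝ) < m/2), ← abs_mul]
    congr 1
    field_simp
    ring
  have hrw : (s.map fun a => |m*(v+1)/2 - a|).prod
      = (m/2)^n * (s.map fun a => |v - b a|).prod := by
    simp only [hfac]
    rw [prod_map_const_mul, hcard]
  rw [hrw, ← heval]
  have h2n : (2:ℝ)^n = 2 * 2^(n-1) := by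
    conv_lhs => rw [show n = 1 + (n-1) by omega]
    rw [pow_add]; ring
  have hmn : (m/2)^n = (m/4)^n * (2:ℝ)^n := by
    rw [← mul_pow]; ring_nf
  calc 2*(m/4)^n = (2*(m/4)^n) * 1 := by ring
    _ ≤ (2*(m/4)^n) * (2^(n-1) * |q.eval v|) :=
        mul_le_mul_of_nonneg_left hlow (by positivity)
    _ = (m/4)^n * (2 * 2^(n-1)) * |q.eval v| := by ring
    _ = (m/2)^n * |q.eval v| := by rw [← h2n, ← hmn]

lemma polya_real (n : ℕ) (hn : 1 ≤ n) (s : Multiset ℝ) (hcard : Multiset.card s = n)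
    (ε : ℝ) (hε : 0 < ε) :
    volume {x : ℝ | (s.map (fun a => |x - a|)).prod ≤ ε} ≤
      ENNReal.ofReal (4 * (ε/2) ^ (1/(n:ℝ))) := by
  set f : ℝ → ℝ := fun x => (s.map fun a => |x - a|).prod with hf
  set E := {x : ℝ | f x ≤ ε} with hE
  -- continuity of f
  have hfc : Continuous f := by
    have : f = fun x => |(((s.map fun a => X - C a)).prod).eval x| := by
      funext x
      rw [hf, eval_multiset_prod, Multiset.map_map]
      simp only [Function.comp, eval_sub, eval_X, eval_C]
      rw [abs_prod_map]
    rw [this]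
    exact (Polynomial.continuous _).abs
  have hEclosed : IsClosed E := isClosed_le hfc continuous_const
  have hEmeas : MeasurableSet E := hEclosed.measurableSet
  -- boundedness
  set R : ℝ := (s.map fun a => |a|).sum + ε + 1 with hR
  have hbound : E ⊆ Set.Icc (-R) R := by
    intro x hx
    by_contra hxR
    have hsum0 : 0 ≤ (s.map fun a => |a|).sum := Multiset.sum_nonneg fun y hy => by
      obtain ⟨c, _, rfl⟩ := Multiset.mem_map.mp hy; exact abs_nonneg c
    have hxabs : R < |x| := by
      simp only [Set.mem_Icc, not_and_or, not_le] at hxR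
      rcases hxR with h | h
      · have := neg_abs_le x; linarith
      · have := le_abs_self x; linarith
    have hfac : ∀ a ∈ s, ε + 1 ≤ |x - a| := by
      intro a ha
      have h1 : |a| ≤ (s.map fun a => |a|).sum := by
        apply Multiset.single_le_sum (fun y hy => ?_) _ (Multiset.mem_map_of_mem _ ha)
        obtain ⟨c, _, rfl⟩ := Multiset.mem_map.mp hy
        exact abs_nonneg c
      have := abs_sub_abs_le_abs_sub x a
      linarith
    have h2 : (ε + 1) ^ Multiset.card s ≤ f x := pow_le_prod_map (by linarith) hfac
    have h3 : ε + 1 ≤ (ε + 1) ^ Multiset.card s := by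
      apply le_self_pow₀ (by linarith) (by omega)
    have : f x ≤ ε := hx
    linarith
  have hfin : volume E ≠ ⊤ := by
    refine ne_top_of_le_ne_top ?_ (measure_mono hbound)
    simp [Real.volume_Icc]
  -- trivial case
  rcases eq_or_ne (volume E) 0 with h0 | h0
  · rw [h0]; exact zero_le
  set m : ℝ := (volume E).toReal with hm
  have hmpos : 0 < m := ENNReal.toReal_pos h0 hfin
  have hEne : E.Nonempty := nonempty_of_measure_ne_zero h0
  have hbddA : BddAbove E := BddAbove.mono hbound (bddAbove_Icc)
  have hbddB : BddBelow E := BddBelow.mono hbound (bddBelow_Icc)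
  -- the rearrangement map t
  set t : ℝ → ℝ := fun x => (volume (E ∩ Set.Iic x)).toReal with ht
  have hfinI : ∀ x, volume (E ∩ Set.Iic x) ≠ ⊤ :=
    fun x => ne_top_of_le_ne_top hfin (measure_mono Set.inter_subset_left)
  have htmono : Monotone t := by
    intro a x hax
    exact ENNReal.toReal_le_toReal (hfinI a) (hfinI x) |>.mpr
      (measure_mono (Set.inter_subset_inter_right _ (Set.Iic_subset_Iic.mpr hax)))
  have htlip : ∀ a x, a ≤ x → t x - t a ≤ x - a := by
    intro a x hax
    have hsplit : E ∩ Set.Iic x = (E ∩ Set.Iic a) ∪ (E ∩ Set.Ioc a x) := by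
      rw [← Set.inter_union_distrib_left, Set.Iic_union_Ioc_eq_Iic hax]
    have hdisj : Disjoint (E ∩ Set.Iic a) (E ∩ Set.Ioc a x) :=
      Set.disjoint_of_subset Set.inter_subset_right Set.inter_subset_right
        (Set.Iic_disjoint_Ioc le_rfl)
    have hmeas2 : MeasurableSet (E ∩ Set.Ioc a x) := hEmeas.inter measurableSet_Ioc
    have hadd : volume (E ∩ Set.Iic x) = volume (E ∩ Set.Iic a) + volume (E ∩ Set.Ioc a x) := by
      rw [hsplit, measure_union hdisj hmeas2]
    have hioc : volume (E ∩ Set.Ioc a x) ≤ ENNReal.ofReal (x - a) := by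
      refine le_trans (measure_mono Set.inter_subset_right) ?_
      rw [Real.volume_Ioc]
    have : t x ≤ t a + (x - a) := by
      rw [ht]
      simp only
      rw [hadd, ENNReal.toReal_add (hfinI a) (ne_top_of_le_ne_top (by simp) hioc)]
      have := ENNReal.toReal_le_toReal (ne_top_of_le_ne_top (by simp) hioc)
        (by simp : ENNReal.ofReal (x - a) ≠ ⊤) |>.mpr hioc
      rw [ENNReal.toReal_ofReal (by linarith)] at this
      linarith
    linarith
  have hkey : ∀ a x, |t x - t a| ≤ |x - a| := by
    intro a x
    rcases le_total a x with h | h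
    · rw [abs_of_nonneg (by linarith [htmono h] : 0 ≤ t x - t a), abs_of_nonneg (by linarith)]
      exact htlip a x h
    · rw [abs_of_nonpos (by linarith [htmono h] : t x - t a ≤ 0), abs_of_nonpos (by linarith)]
      have := htlip x a h
      linarith
  have htcont : Continuous t := by
    refine LipschitzWith.continuous (K := 1) ?_
    refine LipschitzWith.of_dist_le_mul fun x y => ?_
    rw [Real.dist_eq, Real.dist_eq]
    simpa using hkey y x
  -- surjectivity onto [0, m] within E
  have hsurj : ∀ u ∈ Set.Icc (0:ℝ) m, ∃ x ∈ E, t x = u := by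
    intro u hu
    set A := E ∩ {x | u ≤ t x} with hA
    have hsupE : sSup E ∈ E := hEclosed.csSup_mem hEne hbddA
    have htsup : t (sSup E) = m := by
      rw [ht]
      simp only
      have hEsub : E ∩ Set.Iic (sSup E) = E := by
        apply Set.inter_eq_left.mpr
        intro x hx
        exact le_csSup hbddA hx
      rw [hEsub, hm]
    have hAne : A.Nonempty := ⟨sSup E, hsupE, by rw [Set.mem_setOf_eq, htsup]; exact hu.2⟩
    have hAclosed : IsClosed A := hEclosed.inter (isClosed_le continuous_const htcont)
    have hAbdd : BddBelow A := hbddB.mono Set.inter_subset_left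
    set x₀ := sInf A with hx₀
    have hx₀A : x₀ ∈ A := hAclosed.csInf_mem hAne hAbdd
    refine ⟨x₀, hx₀A.1, ?_⟩
    have hlt : ∀ x, x < x₀ → t x ≤ u := by
      intro x hx
      by_contra hcon
      push_neg at hcon
      have hvolpos : volume (E ∩ Set.Iic x) ≠ 0 := by
        intro hz
        rw [ht] at hcon
        simp only [hz] at hcon
        simp at hcon
        linarith [hu.1]
      have hBne : (E ∩ Set.Iic x).Nonempty := nonempty_of_measure_ne_zero hvolpos
      have hBclosed : IsClosed (E ∩ Set.Iic x) := hEclosed.inter isClosed_Iic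
      have hBbdd : BddAbove (E ∩ Set.Iic x) := hbddA.mono Set.inter_subset_left
      set x' := sSup (E ∩ Set.Iic x) with hx'
      have hx'mem : x' ∈ E ∩ Set.Iic x := hBclosed.csSup_mem hBne hBbdd
      have heq : E ∩ Set.Iic x' = E ∩ Set.Iic x := by
        apply Set.Subset.antisymm
        · exact Set.inter_subset_inter_right _ (Set.Iic_subset_Iic.mpr hx'mem.2)
        · intro y hy
          exact ⟨hy.1, le_csSup hBbdd hy⟩
      have htx' : t x' = t x := by rw [ht]; simp only [heq]
      have hx'A : x' ∈ A := ⟨hx'mem.1, by rw [Set.mem_setOf_eq, htx']; exact hcon.le⟩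
      have : x₀ ≤ x' := csInf_le hAbdd hx'A
      have : x' < x₀ := lt_of_le_of_lt hx'mem.2 hx
      linarith
    have hup : t x₀ ≤ u := by
      refine le_of_forall_pos_le_add fun δ hδ => ?_
      have h1 := htlip (x₀ - δ) x₀ (by linarith)
      have h2 := hlt (x₀ - δ) (by linarith)
      linarith
    exact le_antisymm hup hx₀A.2
  -- apply the interval Chebyshev bound
  obtain ⟨u, hu, hlow⟩ := cheb_lower_interval n hn (s.map t) (by rw [Multiset.card_map, hcard]) m hmpos
  obtain ⟨x, hxE, hxu⟩ := hsurj u hu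
  rw [Multiset.map_map] at hlow
  have hchain : 2 * (m/4)^n ≤ ε := by
    refine le_trans hlow (le_trans ?_ hxE)
    refine prod_map_mono (fun a _ => abs_nonneg _) fun a _ => ?_
    simp only [Function.comp]
    rw [← hxu]
    exact hkey a x
  -- final arithmetic
  have hmle : m ≤ 4 * (ε/2) ^ (1/(n:ℝ)) := by
    have h1 : (m/4)^n ≤ ε/2 := by linarith
    have hn0 : (n:ℝ) ≠ 0 := by positivity
    have h2 : ((m/4) ^ (n:ℕ) : ℝ) ^ (1/(n:ℝ)) ≤ (ε/2) ^ (1/(n:ℝ)) :=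
      Real.rpow_le_rpow (by positivity) h1 (by positivity)
    have h3 : ((m/4) ^ (n:ℕ) : ℝ) ^ (1/(n:ℝ)) = m/4 := by
      rw [← Real.rpow_natCast (m/4) n, ← Real.rpow_mul (by positivity)]
      rw [mul_one_div, div_self hn0, Real.rpow_one]
    rw [h3] at h2
    linarith
  calc volume E = ENNReal.ofReal m := by rw [hm, ENNReal.ofReal_toReal hfin]
    _ ≤ ENNReal.ofReal (4 * (ε/2) ^ (1/(n:ℝ))) := ENNReal.ofReal_le_ofReal hmle


/-- (Sharpened Pólya) If `p` is a monic complex polynomial of degree `n ≥ 1` and `y ∈ ℝ`,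
then for every `ε > 0` the Lebesgue measure of `{x ∈ ℝ : |p(x+iy)| ≤ ε}` is
at most `2^(2 - 1/n) ε^(1/n)`. -/
theorem polya_sharp (n : ℕ) (hn : 1 ≤ n) (p : Polynomial ℂ) (hmonic : p.Monic)
    (hdeg : p.natDegree = n) (y : ℝ) (ε : ℝ) (hε : 0 < ε) :
    volume {x : ℝ | ‖p.eval (x + y * Complex.I)‖ ≤ ε} ≤
      ENNReal.ofReal ((2 : ℝ) ^ (2 - 1 / (n : ℝ)) * ε ^ (1 / (n : ℝ))) := by
  have hsplits : p.Splits := IsAlgClosed.splits p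
  have hcard : Multiset.card (p.roots.map Complex.re) = n := by
    rw [Multiset.card_map, Polynomial.splits_iff_card_roots.mp hsplits, hdeg]
  have hsub : {x : ℝ | ‖p.eval (x + y * Complex.I)‖ ≤ ε}
      ⊆ {x : ℝ | ((p.roots.map Complex.re).map (fun a => |x - a|)).prod ≤ ε} := by
    intro x hx
    simp only [Set.mem_setOf_eq] at hx ⊢
    set z : ℂ := (x:ℂ) + y * Complex.I with hz
    have habs : ‖p.eval z‖ = (p.roots.map fun r => ‖z - r‖).prod := by
      conv_lhs => rw [hsplits.eq_prod_roots_of_monic hmonic]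
      rw [Polynomial.eval_multiset_prod, Multiset.map_map, ← normHom_apply (α := ℂ) (Multiset.prod _), map_multiset_prod (normHom : ℂ →*₀ ℝ),
        Multiset.map_map]
      simp only [Function.comp, normHom_apply, Polynomial.eval_sub, Polynomial.eval_X, Polynomial.eval_C]
    have hle : ((p.roots.map Complex.re).map (fun a => |x - a|)).prod
        ≤ (p.roots.map fun r => ‖z - r‖).prod := by
      rw [Multiset.map_map]
      refine prod_map_mono (fun r _ => abs_nonneg _) fun r _ => ?_
      have h1 : (z - r).re = x - r.re := by simp [hz]
      calc |x - r.re| = |(z - r).re| := by rw [h1]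
        _ ≤ ‖z - r‖ := Complex.abs_re_le_norm _
    calc ((p.roots.map Complex.re).map (fun a => |x - a|)).prod
        ≤ (p.roots.map fun r => ‖z - r‖).prod := hle
      _ = ‖p.eval z‖ := habs.symm
      _ ≤ ε := hx
  have hrhs : 4 * (ε/2) ^ (1/(n:ℝ)) = (2:ℝ) ^ (2 - 1/(n:ℝ)) * ε ^ (1/(n:ℝ)) := by
    have h1 : ((ε/2):ℝ) ^ (1/(n:ℝ)) = ε ^ (1/(n:ℝ)) / (2:ℝ) ^ (1/(n:ℝ)) :=
      Real.div_rpow hε.le (by norm_num : (0:ℝ) ≤ 2) _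
    have h2 : (2:ℝ) ^ (2 - 1/(n:ℝ)) = (2:ℝ) ^ (2:ℝ) / (2:ℝ) ^ (1/(n:ℝ)) :=
      Real.rpow_sub (by norm_num) _ _
    have h3 : (2:ℝ) ^ (2:ℝ) = 4 := by
      rw [show (2:ℝ) = ((2:ℕ):ℝ) by norm_num, Real.rpow_natCast]
      norm_num
    rw [h1, h2, h3]
    ring
  calc volume {x : ℝ | ‖p.eval (x + y * Complex.I)‖ ≤ ε}
      ≤ volume {x : ℝ | ((p.roots.map Complex.re).map (fun a => |x - a|)).prod ≤ ε} :=
        measure_mono hsub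
    _ ≤ ENNReal.ofReal (4 * (ε/2) ^ (1/(n:ℝ))) := polya_real n hn _ hcard ε hε
    _ = ENNReal.ofReal ((2:ℝ) ^ (2 - 1/(n:ℝ)) * ε ^ (1/(n:ℝ))) := by rw [hrhs]
end

section
/- Let K ⊆ ℂ be compact. The map assigning to each function f holomorphic on a neighborhood of K and not identically zero its zero set 𝔷(f;K) ⊆ K is continuous with respect to the Hausdorff metric on compact subsets of K and the sup-norm topology on functions, at every f whose zeros in K all lie in the interior of K. -/
open MeasureTheory

open Metric in
lemma aux_exists_zero_of_close {V : Set ℂ} (hV : IsOpen V) {g : ℂ → ℂ}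
    (hg : DifferentiableOn ℂ g V) {z₀ : ℂ} {r c : ℝ} (hr : 0 < r)
    (hball : closedBall z₀ r ⊆ V)
    (hlb : ∀ z ∈ sphere z₀ r, c ≤ ‖g z‖)
    (hcenter : ‖g z₀‖ < c) :
    ∃ w ∈ closedBall z₀ r, g w = 0 := by
  by_contra hcon
  push_neg at hcon
  have hc : 0 < c := lt_of_le_of_lt (norm_nonneg _) hcenter
  have hgd : ∀ z ∈ closedBall z₀ r, DifferentiableAt ℂ g z := fun z hz =>
    hg.differentiableAt (hV.mem_nhds (hball hz))
  have hdiff : DiffContOnCl ℂ (fun z => (g z)⁻¹) (ball z₀ r) := by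
    constructor
    · intro z hz
      exact ((hgd z (ball_subset_closedBall hz)).inv
        (hcon z (ball_subset_closedBall hz))).differentiableWithinAt
    · rw [closure_ball z₀ hr.ne']
      exact ContinuousOn.inv₀
        (fun z hz => (hgd z hz).continuousAt.continuousWithinAt) hcon
  have hb : ‖(g z₀)⁻¹‖ ≤ c⁻¹ := by
    refine Complex.norm_le_of_forall_mem_frontier_norm_le isBounded_ball hdiff ?_ ?_
    · intro z hz
      rw [frontier_ball z₀ hr.ne'] at hz
      rw [norm_inv]
      exact inv_anti₀ hc (hlb z hz)
    · rw [closure_ball z₀ hr.ne']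
      exact mem_closedBall_self hr.le
  rw [norm_inv] at hb
  have hgz : g z₀ ≠ 0 := hcon z₀ (mem_closedBall_self hr.le)
  have h0 : 0 < ‖g z₀‖ := norm_pos_iff.mpr hgz
  exact absurd hcenter (not_lt.mpr ((inv_le_inv₀ h0 hc).mp hb))

/-- Continuity of zero sets in the Hausdorff metric: if `f` is holomorphic near the
compact set `K`, nowhere locally identically zero, with all its zeros in `K` lying in
the interior of `K`, then for every `ε > 0` every `g` holomorphic near `K` and
sufficiently sup-norm close to `f` on `K` has zero set within Hausdorff distance `ε`
of the zero set of `f`. -/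
theorem zeroSet_hausdorff_continuous (K U : Set ℂ) (hK : IsCompact K) (hU : IsOpen U)
    (hKU : K ⊆ U) (f : ℂ → ℂ) (hf : DifferentiableOn ℂ f U)
    (hf0 : ∀ z ∈ K, ¬ f =ᶠ[nhds z] 0)
    (hint : {z ∈ K | f z = 0} ⊆ interior K) :
    ∀ ε > 0, ∃ η > 0, ∀ (V : Set ℂ) (g : ℂ → ℂ), IsOpen V → K ⊆ V →
      DifferentiableOn ℂ g V → (∀ z ∈ K, ‖g z - f z‖ < η) →
      Metric.hausdorffDist {z ∈ K | g z = 0} {z ∈ K | f z = 0} < ε := by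
  intro ε hε
  set Z : Set ℂ := {z ∈ K | f z = 0} with hZdef
  have hfcK : ContinuousOn f K := (hf.continuousOn).mono hKU
  have hZcompact : IsCompact Z := by
    have heq : Z = K ∩ f ⁻¹' {0} := by
      ext z; simp [hZdef, Set.mem_setOf_eq, Set.mem_inter_iff]
    have hcl : IsClosed (K ∩ f ⁻¹' {0}) :=
      hfcK.preimage_isClosed_of_isClosed hK.isClosed isClosed_singleton
    rw [heq]
    exact hK.of_isClosed_subset hcl Set.inter_subset_left
  by_cases hZne : Z.Nonempty
  case neg =>
    refine ⟨1, one_pos, fun V g hV hKV hg hclose => ?_⟩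
    rw [Set.not_nonempty_iff_eq_empty] at hZne
    rw [hZne, Metric.hausdorffDist_empty]
    exact hε
  case pos =>
  -- Part (a): a lower bound m₀ for ‖f‖ on the compact set of points of K far from Z
  obtain ⟨m₀, hm₀, hm₀lb⟩ :
      ∃ m₀ > 0, ∀ z ∈ K, ε / 2 ≤ Metric.infDist z Z → m₀ ≤ ‖f z‖ := by
    set C : Set ℂ := {z ∈ K | ε / 2 ≤ Metric.infDist z Z} with hCdef
    have hCcl : IsClosed C := by
      have : C = K ∩ {z | ε / 2 ≤ Metric.infDist z Z} := rfl
      rw [this]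
      exact hK.isClosed.inter (isClosed_le continuous_const (Metric.continuous_infDist_pt Z))
    have hCcp : IsCompact C := hK.of_isClosed_subset hCcl (fun z hz => hz.1)
    rcases Set.eq_empty_or_nonempty C with hCe | hCne
    · refine ⟨1, one_pos, fun z hz hd => absurd (show z ∈ C from ⟨hz, hd⟩) ?_⟩
      simp [hCe]
    · obtain ⟨x₀, hx₀C, hx₀min⟩ := hCcp.exists_isMinOn hCne
        ((hfcK.mono (fun z hz => hz.1)).norm)
      have hfx₀ : f x₀ ≠ 0 := by
        intro h0
        have : x₀ ∈ Z := ⟨hx₀C.1, h0⟩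
        have : Metric.infDist x₀ Z = 0 := Metric.infDist_zero_of_mem this
        have := hx₀C.2
        linarith [half_pos hε]
      exact ⟨‖f x₀‖, norm_pos_iff.mpr hfx₀, fun z hz hd => hx₀min ⟨hz, hd⟩⟩
  -- Part (b): for each zero of f, a small circle on which f is bounded below
  have key : ∀ z₀ ∈ Z, ∃ r : ℝ, ∃ m : ℝ, 0 < r ∧ r ≤ ε / 8 ∧ 0 < m ∧
      Metric.closedBall z₀ r ⊆ interior K ∧
      ∀ z ∈ Metric.sphere z₀ r, m ≤ ‖f z‖ := by
    intro z₀ hz₀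
    have hz₀K : z₀ ∈ K := hz₀.1
    have hz₀int : z₀ ∈ interior K := hint hz₀
    -- radius ρ with closedBall z₀ ρ ⊆ interior K
    obtain ⟨ρ, hρ, hρsub⟩ := Metric.isOpen_iff.mp isOpen_interior z₀ hz₀int
    -- isolated zero: δ with f ≠ 0 on punctured ball
    have hana : AnalyticAt ℂ f z₀ := hf.analyticAt (hU.mem_nhds (hKU hz₀K))
    have hne : ∀ᶠ z in nhdsWithin z₀ {z₀}ᶜ, f z ≠ 0 := by
      rcases hana.eventually_eq_zero_or_eventually_ne_zero with h | h
      · exact absurd (Filter.eventuallyEq_iff_exists_mem.mpr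
          ⟨{z | f z = 0}, h, fun z hz => hz⟩) (hf0 z₀ hz₀K)
      · exact h
    rw [eventually_nhdsWithin_iff] at hne
    obtain ⟨δ, hδ, hδne⟩ := Metric.eventually_nhds_iff.mp hne
    set r : ℝ := min (min (δ / 2) (ρ / 2)) (ε / 8) with hrdef
    have hr : 0 < r := lt_min (lt_min (half_pos hδ) (half_pos hρ)) (by linarith)
    have hrε : r ≤ ε / 8 := min_le_right _ _
    have hrρ : r < ρ := lt_of_le_of_lt ((min_le_left _ _).trans (min_le_right _ _)) (by linarith)
    have hrδ : r < δ := lt_of_le_of_lt ((min_le_left _ _).trans (min_le_left _ _)) (by linarith)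
    have hballint : Metric.closedBall z₀ r ⊆ interior K := fun z hz =>
      hρsub (lt_of_le_of_lt (Metric.mem_closedBall.mp hz) hrρ)
    have hsphne : ∀ z ∈ Metric.sphere z₀ r, f z ≠ 0 := by
      intro z hz
      have hd : dist z z₀ = r := Metric.mem_sphere.mp hz
      refine hδne (by rw [hd]; exact hrδ) ?_
      intro h
      rw [h, dist_self] at hd
      exact hr.ne hd
    have hsphK : Metric.sphere z₀ r ⊆ K :=
      (Metric.sphere_subset_closedBall.trans hballint).trans interior_subset
    obtain ⟨x₁, hx₁, hx₁min⟩ := (isCompact_sphere z₀ r).exists_isMinOn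
      ((NormedSpace.sphere_nonempty.mpr hr.le))
      ((hfcK.mono hsphK).norm)
    exact ⟨r, ‖f x₁‖, hr, hrε, norm_pos_iff.mpr (hsphne x₁ hx₁), hballint,
      fun z hz => hx₁min hz⟩
  choose! r m hr hrε hm hballint hsph using key
  -- finite subcover of Z by the balls
  obtain ⟨t, htsub, htcover⟩ := hZcompact.elim_nhds_subcover
    (fun z₀ => Metric.ball z₀ (r z₀))
    (fun z₀ hz₀ => Metric.ball_mem_nhds z₀ (hr z₀ hz₀))
  have htne : t.Nonempty := by
    obtain ⟨z, hz⟩ := hZne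
    obtain ⟨i, hi, _⟩ := Set.mem_iUnion₂.mp (htcover hz)
    exact ⟨i, hi⟩
  set η : ℝ := min m₀ (t.inf' htne (fun x => m x / 2)) with hηdef
  have hη : 0 < η := by
    refine lt_min hm₀ ?_
    rw [Finset.lt_inf'_iff]
    intro x hx
    exact half_pos (hm x (htsub x hx))
  refine ⟨η, hη, fun V g hV hKV hg hclose => ?_⟩
  have hclose' : ∀ z ∈ K, ‖g z - f z‖ < η := by
    intro z hz
    exact hclose z hz
  have hhd : Metric.hausdorffDist {z ∈ K | g z = 0} Z ≤ ε / 2 := by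
    apply Metric.hausdorffDist_le_of_mem_dist (by linarith)
    · -- every zero of g is close to Z
      rintro x ⟨hxK, hxg⟩
      by_contra hcon
      push_neg at hcon
      have hfar : ε / 2 ≤ Metric.infDist x Z := by
        by_contra hlt
        push_neg at hlt
        obtain ⟨y, hyZ, hyd⟩ := (Metric.infDist_lt_iff hZne).mp hlt
        exact absurd hyd (not_lt.mpr (hcon y hyZ).le)
      have h1 : m₀ ≤ ‖f x‖ := hm₀lb x hxK hfar
      have h2 : ‖g x - f x‖ < η := hclose' x hxK
      rw [hxg, zero_sub, norm_neg] at h2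
      have : η ≤ m₀ := min_le_left _ _
      linarith
    · -- every zero of f is close to a zero of g
      rintro x hxZ
      obtain ⟨i, hit, hxball⟩ := Set.mem_iUnion₂.mp (htcover hxZ)
      have hiZ : i ∈ Z := htsub i hit
      have hηm : η ≤ m i / 2 := (min_le_right _ _).trans (Finset.inf'_le _ hit)
      have hballK : Metric.closedBall i (r i) ⊆ K :=
        (hballint i hiZ).trans interior_subset
      have hballV : Metric.closedBall i (r i) ⊆ V := hballK.trans hKV
      obtain ⟨w, hwball, hwg⟩ := aux_exists_zero_of_close hV hg (hr i hiZ) hballV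
        (c := m i / 2)
        (fun z hz => by
          have hzK : z ∈ K := hballK (Metric.sphere_subset_closedBall hz)
          have h1 : m i ≤ ‖f z‖ := hsph i hiZ z hz
          have h2 : ‖g z - f z‖ < η := hclose' z hzK
          calc m i / 2 = m i - m i / 2 := by ring
          _ ≤ ‖f z‖ - ‖g z - f z‖ := by
              have : ‖g z - f z‖ ≤ m i / 2 := le_of_lt (lt_of_lt_of_le h2 hηm)
              linarith
          _ ≤ ‖g z‖ := by
              have := norm_sub_norm_le (g z) (f z)
              have h3 : ‖f z‖ - ‖g z‖ ≤ ‖g z - f z‖ := by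
                have := norm_sub_norm_le (f z) (g z)
                rwa [norm_sub_rev] at this
              linarith)
        (by
          have hiK : i ∈ K := hiZ.1
          have h2 : ‖g i - f i‖ < η := hclose' i hiK
          rw [hiZ.2, sub_zero] at h2
          exact lt_of_lt_of_le h2 hηm)
      refine ⟨w, ⟨hballK hwball, hwg⟩, ?_⟩
      have hd1 : dist x i < r i := Metric.mem_ball.mp hxball
      have hd2 : dist i w ≤ r i := by
        rw [dist_comm]; exact Metric.mem_closedBall.mp hwball
      calc dist x w ≤ dist x i + dist i w := dist_triangle x i w
      _ ≤ r i + r i := by linarith [le_of_lt hd1]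
      _ ≤ ε / 8 + ε / 8 := by linarith [hrε i hiZ, hrε i hiZ]
      _ ≤ ε / 2 := by linarith
  calc Metric.hausdorffDist {z ∈ K | g z = 0} {z ∈ K | f z = 0} ≤ ε / 2 := hhd
  _ < ε := by linarith
end

section
/- Let f be a 1-periodic function, holomorphic on a neighborhood of the strip {|Im z| ≤ δ} for some δ > 0, not identically zero, and let l ≥ 1 be the maximal multiplicity of the zeros of f on ℝ/ℤ. Then for every 0 < α < 1/l there exists ε₀ > 0 such that for all 0 < ε < ε₀, the Lebesgue measure of {x ∈ [0,1) : |f(x)| < ε} is less than ε^α. -/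
open MeasureTheory Classical

noncomputable def ordAt (f : ℂ → ℂ) (z : ℂ) : ℕ :=
  if h : AnalyticAt ℂ f z then (analyticOrderAt f z).toNat else 0

private lemma strip_convex (δ : ℝ) : Convex ℝ {z : ℂ | |z.im| < δ} := by
  intro z hz w hw a b ha hb hab
  simp only [Set.mem_setOf_eq, Complex.add_im, Complex.smul_im] at *
  rcases ha.eq_or_lt with h | h
  · subst h
    have hb1 : b = 1 := by linarith
    simpa [hb1] using hw
  · calc |a * z.im + b * w.im| ≤ |a * z.im| + |b * w.im| := abs_add_le _ _
      _ = a * |z.im| + b * |w.im| := by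
          rw [abs_mul, abs_mul, abs_of_nonneg ha, abs_of_nonneg hb]
      _ < a * δ + b * δ := by
          rcases hb.eq_or_lt with h2 | h2
          · have : a = 1 := by linarith
            subst this
            simp only [← h2]
            nlinarith
          · exact add_lt_add (by nlinarith) (by nlinarith)
      _ = δ := by rw [← add_mul, hab, one_mul]

private lemma order_ne_top (δ : ℝ) (hδ : 0 < δ) (U : Set ℂ) (hU : IsOpen U)
    (hsub : {z : ℂ | |z.im| ≤ δ} ⊆ U) (f : ℂ → ℂ) (hf : DifferentiableOn ℂ f U)
    (hf0 : ∃ z : ℂ, |z.im| ≤ δ ∧ f z ≠ 0) {x₀ : ℂ} (hx₀ : |x₀.im| < δ)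
    (hA : AnalyticAt ℂ f x₀) : analyticOrderAt f x₀ ≠ ⊤ := by
  intro htop
  obtain ⟨z₀, hz₀, hz₀ne⟩ := hf0
  set S : Set ℂ := {z : ℂ | |z.im| < δ} with hS
  have hSopen : IsOpen S := isOpen_lt (continuous_abs.comp Complex.continuous_im) continuous_const
  have hSsub : S ⊆ U := fun z hz => hsub (show |z.im| ≤ δ from le_of_lt hz)
  have hAOn : AnalyticOnNhd ℂ f S := fun z hz => hf.analyticAt (hU.mem_nhds (hSsub hz))
  have heq : Set.EqOn f 0 S :=
    hAOn.eqOn_zero_of_preconnected_of_eventuallyEq_zero (strip_convex δ).isPreconnected hx₀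
      (analyticOrderAt_eq_top.mp htop)
  -- approach z₀ along the vertical segment
  have hz₀U : z₀ ∈ U := hsub hz₀
  have hcont : ContinuousAt f z₀ := (hf.differentiableAt (hU.mem_nhds hz₀U)).continuousAt
  set γ : ℝ → ℂ := fun t => (z₀.re : ℂ) + (t * z₀.im : ℝ) * Complex.I with hγ
  have hγ1 : γ 1 = z₀ := by simp [hγ, Complex.re_add_im]
  have hγcont : Continuous γ := by fun_prop
  have h1 : Filter.Tendsto (fun t => f (γ t)) (nhdsWithin 1 (Set.Iio 1)) (nhds (f z₀)) := by
    have hγt : Filter.Tendsto γ (nhds 1) (nhds z₀) := by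
      have := hγcont.continuousAt (x := (1:ℝ))
      rwa [ContinuousAt, hγ1] at this
    exact (hcont.tendsto.comp hγt).mono_left nhdsWithin_le_nhds
  have h2 : Filter.Tendsto (fun t => f (γ t)) (nhdsWithin 1 (Set.Iio 1)) (nhds 0) := by
    have hev : ∀ᶠ t in nhdsWithin 1 (Set.Iio (1:ℝ)), f (γ t) = 0 := by
      filter_upwards [Ioo_mem_nhdsLT_of_mem (Set.mem_Ioc.mpr ⟨zero_lt_one, le_refl 1⟩)]
        with t ht
      have hmem : γ t ∈ S := by
        simp only [hS, Set.mem_setOf_eq, hγ, Complex.add_im, Complex.ofReal_im,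
          Complex.mul_im, Complex.I_im, Complex.I_re, Complex.ofReal_re]
        have : |t * z₀.im| ≤ t * δ := by
          rw [abs_mul, abs_of_nonneg ht.1.le]
          exact mul_le_mul_of_nonneg_left hz₀ ht.1.le
        calc |(0:ℝ) + (t * z₀.im * 1 + 0 * 0)| = |t * z₀.im| := by ring_nf
          _ ≤ t * δ := this
          _ < 1 * δ := by exact mul_lt_mul_of_pos_right ht.2 hδ
          _ = δ := one_mul δ
      exact heq hmem
    exact Filter.Tendsto.congr' (Filter.EventuallyEq.symm hev) tendsto_const_nhds
  exact hz₀ne (tendsto_nhds_unique h1 h2)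

private lemma local_bound {f : ℂ → ℂ} {x₀ : ℝ} (hA : AnalyticAt ℂ f (x₀ : ℂ))
    (hne : analyticOrderAt f x₀ ≠ ⊤) (l : ℕ) (hk : (analyticOrderAt f x₀).toNat ≤ l) :
    ∃ r c : ℝ, 0 < r ∧ r ≤ 1 ∧ 0 < c ∧
      ∀ y : ℝ, |y - x₀| < r → c * |y - x₀| ^ l ≤ ‖f y‖ := by
  set k := (analyticOrderAt f x₀).toNat with hkdef
  have hko : analyticOrderAt f x₀ = (k : ℕ∞) := (ENat.coe_toNat hne).symm
  obtain ⟨g, hg, hg0, hfg⟩ := hA.analyticOrderAt_eq_natCast.mp hko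
  set c : ℝ := ‖g x₀‖ / 2 with hc
  have hcpos : 0 < c := by
    have : 0 < ‖g x₀‖ := by
      simpa using (norm_pos_iff.mpr hg0)
    linarith
  have hev : ∀ᶠ z in nhds (x₀ : ℂ), f z = (z - x₀) ^ k • g z ∧ c < ‖g z‖ := by
    refine hfg.and ?_
    have hgc : ContinuousAt (fun z => ‖g z‖) x₀ :=
      continuous_norm.continuousAt.comp hg.continuousAt
    have : c < ‖g x₀‖ := by rw [hc]; linarith
    exact ContinuousAt.eventually_lt continuousAt_const hgc this
  obtain ⟨r₁, hr₁, hball⟩ := Metric.eventually_nhds_iff.mp hev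
  refine ⟨min r₁ 1, c, lt_min hr₁ zero_lt_one, min_le_right _ _, hcpos, ?_⟩
  intro y hy
  have hdist : dist (y : ℂ) (x₀ : ℂ) < r₁ := by
    rw [Complex.dist_eq, ← Complex.ofReal_sub, Complex.norm_real, Real.norm_eq_abs]
    exact lt_of_lt_of_le hy (min_le_left _ _)
  obtain ⟨hfy, hgy⟩ := hball hdist
  have habs : ‖f y‖ = |y - x₀| ^ k * ‖g y‖ := by
    rw [hfy, smul_eq_mul, norm_mul, norm_pow, ← Complex.ofReal_sub, Complex.norm_real, Real.norm_eq_abs]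
  have hle1 : |y - x₀| ≤ 1 := le_of_lt (lt_of_lt_of_le hy (min_le_right _ _))
  have hpow : |y - x₀| ^ l ≤ |y - x₀| ^ k :=
    pow_le_pow_of_le_one (abs_nonneg _) hle1 hk
  calc c * |y - x₀| ^ l ≤ c * |y - x₀| ^ k := by
        exact mul_le_mul_of_nonneg_left hpow hcpos.le
    _ ≤ |y - x₀| ^ k * ‖g y‖ := by
        rw [mul_comm c]
        exact mul_le_mul_of_nonneg_left hgy.le (pow_nonneg (abs_nonneg _) _)
    _ = ‖f y‖ := habs.symm
/-- (Łojasiewicz inequality for complex analytic periodic functions) If `f` is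
1-periodic, holomorphic on a neighborhood of the strip `{|Im z| ≤ δ}`, not identically
zero, and all its real zeros have multiplicity at most `l ≥ 1`, then for every
`0 < α < 1/l` there is `ε₀ > 0` such that for all `0 < ε < ε₀` the Lebesgue measure of
`{x ∈ [0,1) : |f x| < ε}` is less than `ε^α`. -/
theorem lojasiewicz (δ : ℝ) (hδ : 0 < δ) (U : Set ℂ) (hU : IsOpen U)
    (hsub : {z : ℂ | |z.im| ≤ δ} ⊆ U) (f : ℂ → ℂ) (hf : DifferentiableOn ℂ f U)
    (hper : ∀ z, f (z + 1) = f z) (hf0 : ∃ z : ℂ, |z.im| ≤ δ ∧ f z ≠ 0)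
    (l : ℕ) (hl : 1 ≤ l) (hmax : ∀ x : ℝ, ordAt f x ≤ l)
    (α : ℝ) (hα0 : 0 < α) (hα : α < 1 / l) :
    ∃ ε₀ > 0, ∀ ε : ℝ, 0 < ε → ε < ε₀ →
      volume {x ∈ Set.Ico (0:ℝ) 1 | ‖f x‖ < ε} < ENNReal.ofReal (ε ^ α) := by
  classical
  have hlR : (0:ℝ) < l := by exact_mod_cast hl
  have hAx : ∀ x : ℝ, AnalyticAt ℂ f (x : ℂ) := fun x =>
    hf.analyticAt (hU.mem_nhds (hsub (show |(x:ℂ).im| ≤ δ by simpa using hδ.le)))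
  have hloc : ∀ x : ℝ, ∃ r c : ℝ, 0 < r ∧ r ≤ 1 ∧ 0 < c ∧
      ∀ y : ℝ, |y - x| < r → c * |y - x| ^ l ≤ ‖f y‖ := by
    intro x
    have hne : analyticOrderAt f x ≠ ⊤ :=
      order_ne_top δ hδ U hU hsub f hf hf0 (show |(x:ℂ).im| < δ by simpa using hδ) (hAx x)
    have hk : (analyticOrderAt f x).toNat ≤ l := by
      have h := hmax x
      unfold ordAt at h
      rwa [dif_pos (hAx x)] at h
    exact local_bound (hAx x) hne l hk
  choose r c hr hr1 hc hbound using hloc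
  obtain ⟨t, ht⟩ := isCompact_Icc.elim_finite_subcover (fun x : ℝ => Metric.ball x (r x))
    (fun x => Metric.isOpen_ball)
    (fun x _ => Set.mem_iUnion.mpr ⟨x, Metric.mem_ball_self (hr x)⟩)
  have ht0 : t.Nonempty := by
    obtain ⟨i, hi, -⟩ := Set.mem_iUnion₂.mp (ht (Set.mem_Icc.mpr ⟨le_refl 0, zero_le_one⟩))
    exact ⟨i, hi⟩
  set c₀ : ℝ := t.inf' ht0 c with hc₀def
  have hc₀ : 0 < c₀ := (Finset.lt_inf'_iff ht0).mpr fun b hb => hc b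
  set N : ℝ := (t.card : ℝ) with hNdef
  have hN : 1 ≤ N := by
    rw [hNdef]
    exact_mod_cast Finset.card_pos.mpr ht0
  set q : ℝ := (l : ℝ)⁻¹ with hqdef
  have hq : 0 < q := inv_pos.mpr hlR
  set β : ℝ := q - α with hβdef
  have hβ : 0 < β := by
    have : α < q := by rwa [hqdef, ← one_div]
    linarith
  set K : ℝ := c₀ ^ q / (2 * N) with hKdef
  have hK : 0 < K := div_pos (Real.rpow_pos_of_pos hc₀ q) (by linarith)
  refine ⟨K ^ β⁻¹, Real.rpow_pos_of_pos hK _, ?_⟩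
  intro ε hε hεK
  set ρ : ℝ := (ε / c₀) ^ q with hρdef
  have hsubset : {x ∈ Set.Ico (0:ℝ) 1 | ‖f x‖ < ε} ⊆
      ⋃ i ∈ t, Metric.ball i ρ := by
    rintro x ⟨hx, hfx⟩
    obtain ⟨i, hi, hxi⟩ := Set.mem_iUnion₂.mp (ht (Set.Ico_subset_Icc_self hx))
    have hb := hbound i x (by rwa [Metric.mem_ball, Real.dist_eq] at hxi)
    have h1 : c₀ * |x - i| ^ l < ε := by
      have hle : c₀ * |x - i| ^ l ≤ c i * |x - i| ^ l :=
        mul_le_mul_of_nonneg_right (Finset.inf'_le c hi) (pow_nonneg (abs_nonneg _) l)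
      exact lt_of_le_of_lt (hle.trans hb) hfx
    have h2 : |x - i| ^ l < ε / c₀ := (lt_div_iff₀' hc₀).mpr h1
    have h3 : |x - i| < ρ := by
      have heq : (|x - i| ^ l) ^ q = |x - i| :=
        Real.pow_rpow_inv_natCast (abs_nonneg _) (by omega)
      rw [← heq, hρdef]
      exact Real.rpow_lt_rpow (pow_nonneg (abs_nonneg _) l) h2 hq
    exact Set.mem_iUnion₂.mpr ⟨i, hi, by rwa [Metric.mem_ball, Real.dist_eq]⟩
  have hmeas : volume {x ∈ Set.Ico (0:ℝ) 1 | ‖f x‖ < ε} ≤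
      ENNReal.ofReal (N * (2 * ρ)) := by
    calc volume {x ∈ Set.Ico (0:ℝ) 1 | ‖f x‖ < ε}
        ≤ volume (⋃ i ∈ t, Metric.ball i ρ) := measure_mono hsubset
      _ ≤ ∑ i ∈ t, volume (Metric.ball i ρ) := measure_biUnion_finset_le t _
      _ = ∑ i ∈ t, ENNReal.ofReal (2 * ρ) := by
          simp [Real.volume_ball]
      _ = (t.card : ENNReal) * ENNReal.ofReal (2 * ρ) := by
          rw [Finset.sum_const, nsmul_eq_mul]
      _ = ENNReal.ofReal (N * (2 * ρ)) := by
          rw [hNdef, ← ENNReal.ofReal_natCast t.card, ← ENNReal.ofReal_mul (Nat.cast_nonneg _)]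
  refine lt_of_le_of_lt hmeas ?_
  rw [ENNReal.ofReal_lt_ofReal_iff (Real.rpow_pos_of_pos hε α)]
  -- the real inequality
  have hεβ : ε ^ β < K := by
    have := Real.rpow_lt_rpow hε.le hεK hβ
    rwa [Real.rpow_inv_rpow hK.le (ne_of_gt hβ)] at this
  have hsplit : ρ = ε ^ q / c₀ ^ q := by
    rw [hρdef, Real.div_rpow hε.le hc₀.le]
  have hεβ' : ε ^ q / ε ^ α < c₀ ^ q / (2 * N) := by
    rw [← Real.rpow_sub hε]
    exact hεβ
  have hmain : ε ^ q * (2 * N) < c₀ ^ q * ε ^ α :=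
    (div_lt_div_iff₀ (Real.rpow_pos_of_pos hε α) (by linarith)).mp hεβ'
  have hcq : (0:ℝ) < c₀ ^ q := Real.rpow_pos_of_pos hc₀ q
  rw [hsplit]
  calc N * (2 * (ε ^ q / c₀ ^ q)) = (ε ^ q * (2 * N)) / c₀ ^ q := by ring
    _ < (c₀ ^ q * ε ^ α) / c₀ ^ q := by
        apply div_lt_div_of_pos_right hmain hcq
    _ = ε ^ α := by field_simp
end

section
/- (Openness of α-transversality) Let δ > 0 and let f be 1-periodic, holomorphic on a neighborhood of the strip {|Im z| ≤ δ}, not identically zero, with maximal zero multiplicity l(f) on 𝕋. Then for any 0 ≤ α < 1/l(f) there exist ε₀ > 0 and η > 0 such that every g holomorphic on a neighborhood of the strip with sup_{|Im z| ≤ δ}|g(z) − f(z)| < η satisfies: for all 0 < ε < ε₀, the Lebesgue measure of {x ∈ 𝕋 : |g(x)| < ε} is less than ε^α. -/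
open MeasureTheory Classical Set Filter Metric Real


/-- Two-point diameter estimate: if `|deriv|`-type bound holds via MVT. -/
lemma two_point {v : ℝ → ℝ} {a b lam : ℝ}
    (hd : ∀ x ∈ Icc a b, DifferentiableAt ℝ v x)
    (hlb : ∀ x ∈ Icc a b, lam ≤ |deriv v x|)
    {x y : ℝ} (hx : x ∈ Icc a b) (hy : y ∈ Icc a b) (hxy : x ≤ y) :
    lam * (y - x) ≤ |v y - v x| := by
  rcases eq_or_lt_of_le hxy with rfl | hlt
  · simp
  · have hsub : Icc x y ⊆ Icc a b := Icc_subset_Icc hx.1 hy.2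
    have hc : ContinuousOn v (Icc x y) := fun t ht =>
      ((hd t (hsub ht)).continuousAt).continuousWithinAt
    have hdiff : DifferentiableOn ℝ v (Ioo x y) := fun t ht =>
      (hd t (hsub (Ioo_subset_Icc_self ht))).differentiableWithinAt
    obtain ⟨c, hc1, hc2⟩ := exists_deriv_eq_slope v hlt hc hdiff
    have hcab : c ∈ Icc a b := hsub (Ioo_subset_Icc_self hc1)
    have := hlb c hcab
    have hpos : (0:ℝ) < y - x := by linarith
    calc lam * (y - x) ≤ |deriv v c| * (y - x) := by nlinarith
      _ = |deriv v c * (y - x)| := by rw [abs_mul, abs_of_pos hpos]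
      _ = |v y - v x| := by rw [hc2]; field_simp

/-- Sublevel set estimate: if the k-th derivative of `u` is bounded below in absolute
value by `lam` on `[a,b]`, then `{|u| ≤ ε}` has measure at most `4^k (ε/lam)^(1/k)`. -/
lemma sublevel : ∀ (k : ℕ), 1 ≤ k → ∀ (u : ℝ → ℝ) (a b lam ε : ℝ), 0 < lam → 0 < ε →
    (∀ n, ∀ x ∈ Icc a b, DifferentiableAt ℝ (iteratedDeriv n u) x) →
    (∀ x ∈ Icc a b, lam ≤ |iteratedDeriv k u x|) →
    volume {x ∈ Icc a b | |u x| ≤ ε} ≤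
      ENNReal.ofReal ((4:ℝ)^k * (ε/lam) ^ (1/(k:ℝ))) := by
  intro k hk
  induction k, hk using Nat.le_induction with
  | base =>
    intro u a b lam ε hlam hε hd hlb
    have hlb' : ∀ x ∈ Icc a b, lam ≤ |deriv u x| := by
      intro x hx; have := hlb x hx; rwa [iteratedDeriv_one] at this
    have hd' : ∀ x ∈ Icc a b, DifferentiableAt ℝ u x := by
      intro x hx; have := hd 0 x hx; rwa [iteratedDeriv_zero] at this
    set E := {x ∈ Icc a b | |u x| ≤ ε} with hE
    rcases Set.eq_empty_or_nonempty E with h | ⟨e₀, he₀⟩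
    · rw [h]; simp
    · have hsub : E ⊆ Icc (e₀ - 2*ε/lam) (e₀ + 2*ε/lam) := by
        intro x hx
        have key : lam * |x - e₀| ≤ 2 * ε := by
          rcases le_total x e₀ with hle | hle
          · have hma := two_point hd' hlb' hx.1 he₀.1 hle
            have h2 : |u e₀ - u x| ≤ 2 * ε := by
              have hu1 : |u x| ≤ ε := hx.2
              have hu2 : |u e₀| ≤ ε := he₀.2
              calc |u e₀ - u x| ≤ |u e₀| + |u x| := abs_sub _ _
                _ ≤ 2 * ε := by linarith
            rw [abs_of_nonpos (by linarith)]
            linarith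
          · have hma := two_point hd' hlb' he₀.1 hx.1 hle
            have h2 : |u x - u e₀| ≤ 2 * ε := by
              have hu1 : |u x| ≤ ε := hx.2
              have hu2 : |u e₀| ≤ ε := he₀.2
              calc |u x - u e₀| ≤ |u x| + |u e₀| := abs_sub _ _
                _ ≤ 2 * ε := by linarith
            rw [abs_of_nonneg (by linarith)]
            linarith
        have : |x - e₀| ≤ 2*ε/lam := by
          rw [le_div_iff₀ hlam]; nlinarith [abs_nonneg (x - e₀)]
        rw [abs_le] at this
        constructor <;> [linarith [this.1]; linarith [this.2]]
      calc volume E ≤ volume (Icc (e₀ - 2*ε/lam) (e₀ + 2*ε/lam)) := measure_mono hsub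
        _ = ENNReal.ofReal (4*ε/lam) := by rw [Real.volume_Icc]; ring_nf
        _ ≤ _ := by
            apply ENNReal.ofReal_le_ofReal
            rw [Nat.cast_one, div_one, Real.rpow_one, pow_one]
            rw [div_le_iff₀ hlam]
            field_simp
            norm_num
  | succ k hk IH =>
    intro u a b lam ε hlam hε hd hlb
    have hcast : ((k+1 : ℕ):ℝ) = (k:ℝ)+1 := by push_cast; ring
    have hkR : (0:ℝ) < (k:ℝ) := by exact_mod_cast hk
    -- the positive-sign case
    have key : ∀ (u : ℝ → ℝ),
        (∀ n, ∀ x ∈ Icc a b, DifferentiableAt ℝ (iteratedDeriv n u) x) →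
        (∀ x ∈ Icc a b, lam ≤ iteratedDeriv (k+1) u x) →
        volume {x ∈ Icc a b | |u x| ≤ ε} ≤
          ENNReal.ofReal ((4:ℝ)^(k+1) * (ε/lam) ^ (1/((k:ℝ)+1))) := by
      clear hd hlb u
      intro u hd hpos
      set s : ℝ := (ε/lam) ^ (1/((k:ℝ)+1)) with hs_def
      have hεl : 0 < ε / lam := div_pos hε hlam
      have hs : 0 < s := Real.rpow_pos_of_pos hεl _
      have hs_pow : s ^ (k+1 : ℕ) = ε / lam := by
        rw [hs_def, ← Real.rpow_natCast (((ε/lam) ^ (1/((k:ℝ)+1)))) (k+1),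
          ← Real.rpow_mul hεl.le]
        push_cast
        rw [one_div, inv_mul_cancel₀ (by positivity), Real.rpow_one]
      have hks : (ε/(lam*s)) ^ (1/(k:ℝ)) = s := by
        have h1 : ε/(lam*s) = s^(k:ℕ) := by
          rw [div_eq_iff (by positivity : lam * s ≠ 0)]
          have h2 : ε = (ε/lam) * lam := by field_simp
          rw [h2, ← hs_pow]; ring
        rw [h1, ← Real.rpow_natCast s k, ← Real.rpow_mul hs.le, mul_one_div,
          div_self (by positivity : (k:ℝ) ≠ 0), Real.rpow_one]
      set v := iteratedDeriv k u with hv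
      have hdv : ∀ x ∈ Icc a b, DifferentiableAt ℝ v x := fun x hx => hd k x hx
      have hderiv_v : ∀ x : ℝ, deriv v x = iteratedDeriv (k+1) u x := by
        intro x; rw [iteratedDeriv_succ]
      have hlbv : ∀ x ∈ Icc a b, lam ≤ |deriv v x| := by
        intro x hx; rw [hderiv_v]; exact le_trans (hpos x hx) (le_abs_self _)
      set B := {x ∈ Icc a b | |v x| ≤ lam * s} with hB
      have hBsub : B ⊆ Icc a b := fun x hx => hx.1
      have hBdiam : ∀ x ∈ B, ∀ y ∈ B, x ≤ y → y - x ≤ 2 * s := by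
        intro x hx y hy hxy
        have h1 := two_point hdv hlbv hx.1 hy.1 hxy
        have h2 : |v y - v x| ≤ 2 * (lam * s) := by
          have := hx.2; have := hy.2
          calc |v y - v x| ≤ |v y| + |v x| := abs_sub _ _
            _ ≤ 2 * (lam * s) := by linarith
        nlinarith
      have hIH : ∀ a' b', Icc a' b' ⊆ Icc a b → (∀ x ∈ Icc a' b', lam * s ≤ |v x|) →
          volume {x ∈ Icc a' b' | |u x| ≤ ε} ≤ ENNReal.ofReal ((4:ℝ)^k * s) := by
        intro a' b' hsub hlow
        have := IH u a' b' (lam*s) ε (by positivity) hε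
          (fun n x hx => hd n x (hsub hx)) hlow
        rwa [hks] at this
      have h4k : ((4:ℝ)^k * s) ≤ (4:ℝ)^(k+1) * s := by
        have : (4:ℝ)^k ≤ 4^(k+1) := by
          apply pow_le_pow_right₀ <;> norm_num
        nlinarith
      rcases Set.eq_empty_or_nonempty B with hBe | hBne
      · have hlow : ∀ x ∈ Icc a b, lam * s ≤ |v x| := by
          intro x hx
          by_contra h
          exact (Set.eq_empty_iff_forall_notMem.mp hBe x) ⟨hx, (not_le.mp h).le⟩
        exact le_trans (hIH a b Set.Subset.rfl hlow) (ENNReal.ofReal_le_ofReal h4k)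
      · have hBc : IsClosed B := by
          have hvc : ContinuousOn v (Icc a b) := fun x hx =>
            (hdv x hx).continuousAt.continuousWithinAt
          have hBeq : B = Icc a b ∩ v ⁻¹' (Icc (-(lam*s)) (lam*s)) := by
            ext x
            simp only [hB, Set.mem_setOf_eq, Set.mem_inter_iff, Set.mem_preimage,
              Set.mem_Icc, abs_le]
          rw [hBeq]
          exact hvc.preimage_isClosed_of_isClosed isClosed_Icc isClosed_Icc
        have hbdd : BddBelow B := (bddBelow_Icc).mono hBsub
        have habove : BddAbove B := (bddAbove_Icc).mono hBsub
        set c := sInf B with hc_def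
        set d := sSup B with hd_def
        have hcB : c ∈ B := hBc.csInf_mem hBne hbdd
        have hdB : d ∈ B := hBc.csSup_mem hBne habove
        have hcd : c ≤ d := csInf_le_csSup hBne hbdd habove
        have hdiamcd : d - c ≤ 2*s := hBdiam c hcB d hdB hcd
        have hcover : {x ∈ Icc a b | |u x| ≤ ε} ⊆
            {x ∈ Icc a c | |u x| ≤ ε} ∪ (Icc c d ∪ {x ∈ Icc d b | |u x| ≤ ε}) := by
          intro x hx
          rcases le_or_gt x c with h1 | h1
          · exact Or.inl ⟨⟨hx.1.1, h1⟩, hx.2⟩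
          rcases le_or_gt x d with h2 | h2
          · exact Or.inr (Or.inl ⟨h1.le, h2⟩)
          · exact Or.inr (Or.inr ⟨⟨h2.le, hx.1.2⟩, hx.2⟩)
        have hleft : volume {x ∈ Icc a c | |u x| ≤ ε} ≤ ENNReal.ofReal ((4:ℝ)^k * s) := by
          apply ENNReal.le_of_forall_pos_le_add
          intro t ht _
          have htpos : (0:ℝ) < t := ht
          have hsplit : {x ∈ Icc a c | |u x| ≤ ε} ⊆
              {x ∈ Icc a (c - t) | |u x| ≤ ε} ∪ Icc (c-t) c := by
            intro x hx
            rcases le_or_gt x (c - t) with h1 | h1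
            · exact Or.inl ⟨⟨hx.1.1, h1⟩, hx.2⟩
            · exact Or.inr ⟨h1.le, hx.1.2⟩
          have hsub' : Icc a (c-t) ⊆ Icc a b :=
            Icc_subset_Icc le_rfl (by linarith [hcB.1.2])
          have hlow : ∀ x ∈ Icc a (c-t), lam * s ≤ |v x| := by
            intro x hx
            have hxb : x ∈ Icc a b := hsub' hx
            have hxc : x < c := lt_of_le_of_lt hx.2 (by linarith)
            by_contra h
            have hxB : x ∈ B := ⟨hxb, (not_le.mp h).le⟩
            exact absurd (csInf_le hbdd hxB) (not_le.mpr hxc)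
          calc volume {x ∈ Icc a c | |u x| ≤ ε}
              ≤ volume {x ∈ Icc a (c-t) | |u x| ≤ ε} + volume (Icc (c-t) c) :=
                le_trans (measure_mono hsplit) (measure_union_le _ _)
            _ ≤ ENNReal.ofReal ((4:ℝ)^k * s) + ↑t := by
                apply add_le_add (hIH a (c-t) hsub' hlow)
                rw [Real.volume_Icc, ← ENNReal.ofReal_coe_nnreal]
                apply ENNReal.ofReal_le_ofReal; linarith
        have hright : volume {x ∈ Icc d b | |u x| ≤ ε} ≤ ENNReal.ofReal ((4:ℝ)^k * s) := by
          apply ENNReal.le_of_forall_pos_le_add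
          intro t ht _
          have htpos : (0:ℝ) < t := ht
          have hsplit : {x ∈ Icc d b | |u x| ≤ ε} ⊆
              Icc d (d+t) ∪ {x ∈ Icc (d+t) b | |u x| ≤ ε} := by
            intro x hx
            rcases le_or_gt x (d + t) with h1 | h1
            · exact Or.inl ⟨hx.1.1, h1⟩
            · exact Or.inr ⟨⟨h1.le, hx.1.2⟩, hx.2⟩
          have hsub' : Icc (d+t) b ⊆ Icc a b :=
            Icc_subset_Icc (by linarith [hdB.1.1]) le_rfl
          have hlow : ∀ x ∈ Icc (d+t) b, lam * s ≤ |v x| := by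
            intro x hx
            have hxb : x ∈ Icc a b := hsub' hx
            have hxd : d < x := lt_of_lt_of_le (by linarith) hx.1
            by_contra h
            have hxB : x ∈ B := ⟨hxb, (not_le.mp h).le⟩
            exact absurd (le_csSup habove hxB) (not_le.mpr hxd)
          calc volume {x ∈ Icc d b | |u x| ≤ ε}
              ≤ volume (Icc d (d+t)) + volume {x ∈ Icc (d+t) b | |u x| ≤ ε} :=
                le_trans (measure_mono hsplit) (measure_union_le _ _)
            _ ≤ ENNReal.ofReal ((4:ℝ)^k * s) + ↑t := by
                rw [add_comm (ENNReal.ofReal _)]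
                apply add_le_add _ (hIH (d+t) b hsub' hlow)
                rw [Real.volume_Icc, ← ENNReal.ofReal_coe_nnreal]
                apply ENNReal.ofReal_le_ofReal; linarith
        calc volume {x ∈ Icc a b | |u x| ≤ ε}
            ≤ volume {x ∈ Icc a c | |u x| ≤ ε} +
              (volume (Icc c d) + volume {x ∈ Icc d b | |u x| ≤ ε}) := by
              refine le_trans (measure_mono hcover) (le_trans (measure_union_le _ _) ?_)
              exact add_le_add le_rfl (measure_union_le _ _)
          _ ≤ ENNReal.ofReal ((4:ℝ)^k * s) +
              (ENNReal.ofReal (2*s) + ENNReal.ofReal ((4:ℝ)^k * s)) := by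
              refine add_le_add hleft (add_le_add ?_ hright)
              rw [Real.volume_Icc]
              exact ENNReal.ofReal_le_ofReal (by linarith)
          _ ≤ ENNReal.ofReal ((4:ℝ)^(k+1) * s) := by
              rw [← ENNReal.ofReal_add (by positivity) (by positivity),
                ← ENNReal.ofReal_add (by positivity) (by positivity)]
              apply ENNReal.ofReal_le_ofReal
              have h4 : (1:ℝ) ≤ 4^k := one_le_pow₀ (by norm_num)
              have : (4:ℝ)^(k+1) = 4 * 4^k := by ring
              nlinarith
    rw [hcast]
    by_cases hsign : ∀ x ∈ Icc a b, lam ≤ iteratedDeriv (k+1) u x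
    · exact key u hd hsign
    · push_neg at hsign
      obtain ⟨x₀, hx₀, hx₀'⟩ := hsign
      have habs : ∀ x ∈ Icc a b, lam ≤ iteratedDeriv (k+1) u x ∨
          iteratedDeriv (k+1) u x ≤ -lam := by
        intro x hx
        rcases abs_cases (iteratedDeriv (k+1) u x) with ⟨h1, _⟩ | ⟨h1, _⟩
        · left; have := hlb x hx; linarith
        · right; have := hlb x hx; linarith
      have hx₀neg : iteratedDeriv (k+1) u x₀ ≤ -lam := by
        rcases habs x₀ hx₀ with h | h
        · linarith
        · exact h
      have hneg : ∀ x ∈ Icc a b, lam ≤ iteratedDeriv (k+1) (fun y => -(u y)) x := by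
        intro x hx
        rw [iteratedDeriv_fun_neg]
        rcases habs x hx with h | h
        · exfalso
          have huIcc : uIcc x₀ x ⊆ Icc a b := uIcc_subset_Icc hx₀ hx
          have hwc : ContinuousOn (iteratedDeriv (k+1) u) (uIcc x₀ x) := fun t ht =>
            (hd (k+1) t (huIcc ht)).continuousAt.continuousWithinAt
          have h0 : (0:ℝ) ∈ uIcc (iteratedDeriv (k+1) u x₀) (iteratedDeriv (k+1) u x) := by
            rw [Set.mem_uIcc]; left; constructor <;> linarith
          obtain ⟨ξ, hξ, hξ0⟩ := intermediate_value_uIcc hwc h0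
          have hlbξ := hlb ξ (huIcc hξ)
          rw [hξ0] at hlbξ
          simp at hlbξ; linarith
        · linarith
      have hdneg : ∀ n, ∀ x ∈ Icc a b, DifferentiableAt ℝ (iteratedDeriv n fun y => -(u y)) x := by
        intro n x hx
        have heq : (iteratedDeriv n fun y => -(u y)) = fun y => -(iteratedDeriv n u y) :=
          funext (iteratedDeriv_fun_neg n u)
        rw [heq]
        exact (hd n x hx).neg
      have hres := key (fun y => -(u y)) hdneg hneg
      have hset : {x ∈ Icc a b | |(-(u x))| ≤ ε} = {x ∈ Icc a b | |u x| ≤ ε} := by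
        ext x; simp [abs_neg]
      rwa [hset] at hres

lemma iter_analytic {g : ℂ → ℂ} {V : Set ℂ} (hV : IsOpen V) (hg : DifferentiableOn ℂ g V)
    (n : ℕ) : AnalyticOnNhd ℂ (iteratedDeriv n g) V := by
  induction n with
  | zero => simpa [iteratedDeriv_zero] using hg.analyticOnNhd hV
  | succ n ih => rw [iteratedDeriv_succ]; exact ih.deriv

lemma iter_sub {g f : ℂ → ℂ} {O : Set ℂ} (hO : IsOpen O) (hg : DifferentiableOn ℂ g O)
    (hf : DifferentiableOn ℂ f O) (n : ℕ) :
    ∀ z ∈ O, iteratedDeriv n (fun w => g w - f w) z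
      = iteratedDeriv n g z - iteratedDeriv n f z := by
  induction n with
  | zero => intro z _; simp [iteratedDeriv_zero]
  | succ n ih =>
    intro z hz
    rw [iteratedDeriv_succ, iteratedDeriv_succ, iteratedDeriv_succ]
    have hev : iteratedDeriv n (fun w => g w - f w) =ᶠ[nhds z]
        (fun w => iteratedDeriv n g w - iteratedDeriv n f w) :=
      Filter.eventually_of_mem (hO.mem_nhds hz) (fun w hw => ih w hw)
    rw [hev.deriv_eq]
    exact deriv_sub ((iter_analytic hO hg n) z hz).differentiableAt
      ((iter_analytic hO hf n) z hz).differentiableAt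


/-- Bridge: iterated derivatives of `t ↦ re (c̄ * g t)` on `ℝ`. -/
lemma bridge {g : ℂ → ℂ} {V : Set ℂ} (hV : IsOpen V) (hg : DifferentiableOn ℂ g V)
    (hRV : ∀ t : ℝ, (t:ℂ) ∈ V) (c : ℂ) (n : ℕ) :
    (∀ t : ℝ, iteratedDeriv n (fun s : ℝ => ((starRingEnd ℂ) c * g s).re) t
      = ((starRingEnd ℂ) c * iteratedDeriv n g t).re) ∧
    (∀ t : ℝ, DifferentiableAt ℝ
      (iteratedDeriv n (fun s : ℝ => ((starRingEnd ℂ) c * g s).re)) t) := by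
  have hstep : ∀ (m : ℕ) (t : ℝ), HasDerivAt
      (fun s : ℝ => ((starRingEnd ℂ) c * iteratedDeriv m g s).re)
      (((starRingEnd ℂ) c * iteratedDeriv (m+1) g t).re) t := by
    intro m t
    have h1 : HasDerivAt (iteratedDeriv m g) (iteratedDeriv (m+1) g t) (t:ℂ) := by
      rw [iteratedDeriv_succ]
      exact ((iter_analytic hV hg m t (hRV t)).differentiableAt).hasDerivAt
    exact ((h1.const_mul ((starRingEnd ℂ) c))).real_of_complex
  induction n with
  | zero =>
    refine ⟨fun t => by simp [iteratedDeriv_zero], fun t => ?_⟩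
    rw [iteratedDeriv_zero]
    exact (hstep 0 t).differentiableAt
  | succ n ih =>
    have heq : iteratedDeriv (n+1) (fun s : ℝ => ((starRingEnd ℂ) c * g s).re)
        = fun t : ℝ => ((starRingEnd ℂ) c * iteratedDeriv (n+1) g t).re := by
      funext t
      rw [iteratedDeriv_succ]
      have : deriv (iteratedDeriv n (fun s : ℝ => ((starRingEnd ℂ) c * g s).re)) t
          = deriv (fun s : ℝ => ((starRingEnd ℂ) c * iteratedDeriv n g s).re) t := by
        congr 1
        funext s; exact ih.1 s
      rw [this, (hstep n t).deriv]
    refine ⟨fun t => by rw [heq], fun t => ?_⟩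
    rw [heq]
    exact (hstep (n+1) t).differentiableAt

/-- Cauchy estimate for iterated derivatives. -/
lemma cauchy_bound {h : ℂ → ℂ} {z : ℂ} {R M : ℝ} (hR : 0 < R)
    (hd : DifferentiableOn ℂ h (Metric.closedBall z R))
    (hM : ∀ w ∈ Metric.closedBall z R, ‖h w‖ ≤ M) (n : ℕ) :
    ‖iteratedDeriv n h z‖ ≤ (Nat.factorial n : ℝ) * M / R ^ n := by
  lift R to NNReal using hR.le with R' hR'
  have hRpos : 0 < R' := by exact_mod_cast hR
  have hp : HasFPowerSeriesOnBall h (cauchyPowerSeries h z R') z R' :=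
    hd.hasFPowerSeriesOnBall hRpos
  have hM0 : 0 ≤ M := le_trans (norm_nonneg _) (hM z (Metric.mem_closedBall_self hR.le))
  have hid : iteratedDeriv n h z = (Nat.factorial n) • (cauchyPowerSeries h z R' n fun _ => (1:ℂ)) := by
    rw [iteratedDeriv_eq_iteratedFDeriv, ← hp.factorial_smul (1:ℂ) n]
  have hint : ∀ θ : ℝ, ‖h (circleMap z R' θ)‖ ≤ M := by
    intro θ
    apply hM
    exact sphere_subset_closedBall (circleMap_mem_sphere z hR.le θ)
  have hcont : Continuous fun θ : ℝ => ‖h (circleMap z R' θ)‖ := by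
    apply Continuous.norm
    apply hd.continuousOn.comp_continuous (continuous_circleMap z R')
    intro θ; exact sphere_subset_closedBall (circleMap_mem_sphere z hR.le θ)
  have hIle : (∫ θ : ℝ in (0)..2 * π, ‖h (circleMap z R' θ)‖) ≤ 2 * π * M := by
    have := intervalIntegral.integral_mono_on (by positivity : (0:ℝ) ≤ 2*π)
      (hcont.intervalIntegrable 0 (2*π)) (intervalIntegrable_const (μ := volume) (c := M))
      (fun θ _ => hint θ)
    simpa using this
  have hnorm : ‖cauchyPowerSeries h z R' n‖ ≤ M / (R':ℝ) ^ n := by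
    refine le_trans (norm_cauchyPowerSeries_le h z R' n) ?_
    rw [abs_of_pos hR, div_eq_mul_inv, ← inv_pow]
    apply mul_le_mul_of_nonneg_right _ (by positivity)
    calc (2*π)⁻¹ * ∫ θ : ℝ in (0)..2 * π, ‖h (circleMap z R' θ)‖
        ≤ (2*π)⁻¹ * (2 * π * M) := by
          apply mul_le_mul_of_nonneg_left hIle (by positivity)
      _ = M := by field_simp
  calc ‖iteratedDeriv n h z‖ = (Nat.factorial n : ℝ) * ‖cauchyPowerSeries h z R' n fun _ => (1:ℂ)‖ := by
        rw [hid, ← Nat.cast_smul_eq_nsmul ℝ, norm_smul]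
        simp
    _ ≤ (Nat.factorial n : ℝ) * ‖cauchyPowerSeries h z R' n‖ := by
        apply mul_le_mul_of_nonneg_left _ (by positivity)
        have := (cauchyPowerSeries h z R' n).le_opNorm fun _ => (1:ℂ)
        simpa using this
    _ ≤ (Nat.factorial n : ℝ) * (M / (R':ℝ) ^ n) := by
        apply mul_le_mul_of_nonneg_left hnorm (by positivity)
    _ = (Nat.factorial n : ℝ) * M / (R':ℝ) ^ n := by ring

lemma analyticAt_deriv {g : ℂ → ℂ} {z₀ : ℂ} (hg : AnalyticAt ℂ g z₀) :
    AnalyticAt ℂ (deriv g) z₀ :=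
  ((ContinuousLinearMap.apply ℂ ℂ (1 : ℂ)).analyticAt _).comp hg.fderiv

lemma pow_mul_iteratedDeriv {z₀ : ℂ} : ∀ (k : ℕ) (g : ℂ → ℂ), AnalyticAt ℂ g z₀ →
    iteratedDeriv k (fun z => (z - z₀)^k * g z) z₀ = (Nat.factorial k : ℂ) * g z₀ := by
  intro k
  induction k with
  | zero => intro g hg; simp [iteratedDeriv_zero]
  | succ k ih =>
    intro g hg
    rw [iteratedDeriv_succ']
    have hev : deriv (fun z => (z - z₀)^(k+1) * g z) =ᶠ[nhds z₀]
        (fun z => (z - z₀)^k * (((k:ℂ)+1) * g z + (z - z₀) * deriv g z)) := by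
      filter_upwards [hg.eventually_analyticAt] with z hz
      have h1 : HasDerivAt (fun w : ℂ => (w - z₀)^(k+1)) (((k:ℂ)+1) * (z - z₀)^k) z := by
        have := ((hasDerivAt_id z).sub_const z₀).fun_pow (k+1)
        simpa using this
      have h2 : HasDerivAt g (deriv g z) z := hz.differentiableAt.hasDerivAt
      rw [(h1.fun_mul h2).deriv]; ring
    rw [Filter.EventuallyEq.iteratedDeriv_eq k hev]
    have hana : AnalyticAt ℂ (fun z => ((k:ℂ)+1) * g z + (z - z₀) * deriv g z) z₀ := by
      apply AnalyticAt.add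
      · exact analyticAt_const.mul hg
      · exact ((analyticAt_id.sub analyticAt_const)).mul (analyticAt_deriv hg)
    rw [ih _ hana]
    push_cast [Nat.factorial_succ]
    simp [sub_self]
    ring

lemma order_iteratedDeriv_ne_zero {f : ℂ → ℂ} {z₀ : ℂ} (hf : AnalyticAt ℂ f z₀) {k : ℕ}
    (hk : analyticOrderAt f z₀ = k) : iteratedDeriv k f z₀ ≠ 0 := by
  obtain ⟨g, hg, hgz, hfg⟩ := hf.analyticOrderAt_eq_natCast.mp hk
  have heq : iteratedDeriv k f z₀ = iteratedDeriv k (fun z => (z - z₀)^k * g z) z₀ := by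
    apply Filter.EventuallyEq.iteratedDeriv_eq
    filter_upwards [hfg] with z hz
    simpa [smul_eq_mul] using hz
  rw [heq, pow_mul_iteratedDeriv k g hg]
  have : (Nat.factorial k : ℂ) ≠ 0 := by exact_mod_cast Nat.factorial_ne_zero k
  exact mul_ne_zero this hgz

lemma order_not_top {δ : ℝ} (hδ : 0 < δ) {U : Set ℂ} (hU : IsOpen U)
    (hsub : {z : ℂ | |z.im| ≤ δ} ⊆ U) {f : ℂ → ℂ} (hf : DifferentiableOn ℂ f U)
    (hf0 : ∃ z : ℂ, |z.im| ≤ δ ∧ f z ≠ 0) (x : ℝ) :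
    ¬ (∀ᶠ z in nhds (x:ℂ), f z = 0) := by
  intro hzero
  set Ω : Set ℂ := {z : ℂ | |z.im| < δ} with hΩ
  have hΩpre : Ω = Complex.im ⁻¹' (Set.Ioo (-δ) δ) := by
    ext z; simp [hΩ, abs_lt]
  have hΩo : IsOpen Ω := by
    rw [hΩpre]; exact isOpen_Ioo.preimage Complex.continuous_im
  have hΩU : Ω ⊆ U := fun z hz => hsub (le_of_lt (show |z.im| < δ from hz))
  have hconv : Convex ℝ Ω := by
    rw [hΩpre]
    exact (convex_Ioo (-δ) δ).linear_preimage Complex.imLm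
  obtain ⟨z, hzim, hz0⟩ := hf0
  have hwit : ∃ w ∈ Ω, f w ≠ 0 := by
    rcases lt_or_eq_of_le hzim with hlt | heq
    · exact ⟨z, hlt, hz0⟩
    · have hcz : ContinuousAt f z :=
        (hf.continuousOn.continuousAt (hU.mem_nhds (hsub hzim)))
      have hmap : Continuous (fun s : ℝ => (z.re : ℂ) + s * z.im * Complex.I) := by
        continuity
      have hone : (z.re : ℂ) + (1:ℝ) * z.im * Complex.I = z := by
        push_cast; rw [one_mul]; exact Complex.re_add_im z
      have hcomp : ContinuousAt (fun s : ℝ => f ((z.re : ℂ) + s * z.im * Complex.I)) 1 := by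
        apply ContinuousAt.comp _ hmap.continuousAt
        rw [hone]; exact hcz
      have hne : ∀ᶠ s : ℝ in nhds 1, f ((z.re : ℂ) + s * z.im * Complex.I) ≠ 0 := by
        exact hcomp.eventually_ne (by rw [hone]; exact hz0)
      obtain ⟨r, hr, hball⟩ := Metric.eventually_nhds_iff.mp hne
      set s : ℝ := 1 - (min r 1)/2 with hs_def
      have hs01 : 0 ≤ s ∧ s < 1 := by
        constructor
        · have : min r 1 ≤ 1 := min_le_right _ _
          simp only [hs_def]; linarith
        · have : 0 < min r 1 := lt_min hr one_pos
          simp only [hs_def]; linarith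
      have hsr : dist s 1 < r := by
        rw [Real.dist_eq, hs_def]
        have h1 : 0 < min r 1 := lt_min hr one_pos
        have h2 : min r 1 ≤ r := min_le_left _ _
        rw [abs_of_nonpos (by linarith)]
        linarith
      refine ⟨(z.re : ℂ) + s * z.im * Complex.I, ?_, hball hsr⟩
      have him : ((z.re : ℂ) + s * z.im * Complex.I).im = s * z.im := by
        simp
      simp only [hΩ, Set.mem_setOf_eq, him, abs_mul]
      calc |s| * |z.im| ≤ s * δ := by
            rw [abs_of_nonneg hs01.1, ← heq]
        _ < 1 * δ := by
            apply mul_lt_mul_of_pos_right hs01.2 hδ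
        _ = δ := one_mul δ
  obtain ⟨w, hwΩ, hw0⟩ := hwit
  have hana : AnalyticOnNhd ℂ f Ω := (hf.mono hΩU).analyticOnNhd hΩo
  have hx : (x:ℂ) ∈ Ω := by
    simp only [hΩ, Set.mem_setOf_eq, Complex.ofReal_im, abs_zero]
    exact hδ
  have hzero' : f =ᶠ[nhds (x:ℂ)] 0 := hzero
  have := hana.eqOn_zero_of_preconnected_of_eventuallyEq_zero hconv.isPreconnected hx hzero'
  exact hw0 (this hwΩ)

set_option maxHeartbeats 1000000 in
/-- (Openness of α-transversality) If `f` is 1-periodic, holomorphic on a neighborhood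
of the strip `{|Im z| ≤ δ}`, not identically zero, with real zeros of multiplicity at
most `l ≥ 1`, then for every `0 ≤ α < 1/l` there are `ε₀ > 0` and `η > 0` such that
every 1-periodic `g` holomorphic on a neighborhood of the strip with
`sup_{|Im z| ≤ δ} |g z - f z| < η` satisfies: for all `0 < ε < ε₀`, the Lebesgue
measure of `{x ∈ [0,1) : |g x| < ε}` is less than `ε^α`. -/
theorem alpha_transversality_open (δ : ℝ) (hδ : 0 < δ) (U : Set ℂ) (hU : IsOpen U)
    (hsub : {z : ℂ | |z.im| ≤ δ} ⊆ U) (f : ℂ → ℂ) (hf : DifferentiableOn ℂ f U)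
    (hper : ∀ z, f (z + 1) = f z) (hf0 : ∃ z : ℂ, |z.im| ≤ δ ∧ f z ≠ 0)
    (l : ℕ) (hl : 1 ≤ l) (hmax : ∀ x : ℝ, ordAt f x ≤ l)
    (α : ℝ) (hα0 : 0 ≤ α) (hα : α < 1 / l) :
    ∃ ε₀ > 0, ∃ η > 0, ∀ (V : Set ℂ) (g : ℂ → ℂ), IsOpen V →
      {z : ℂ | |z.im| ≤ δ} ⊆ V → DifferentiableOn ℂ g V → (∀ z, g (z + 1) = g z) →
      (∀ z : ℂ, |z.im| ≤ δ → ‖g z - f z‖ < η) →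
      ∀ ε : ℝ, 0 < ε → ε < ε₀ →
        volume {x ∈ Set.Ico (0:ℝ) 1 | ‖g x‖ < ε} < ENNReal.ofReal (ε ^ α) := by
  have hl0 : (0:ℝ) < l := by exact_mod_cast hl
  have hxU : ∀ x : ℝ, (x:ℂ) ∈ U := fun x => hsub (by simpa using hδ.le)
  have hfa : ∀ x : ℝ, AnalyticAt ℂ f (x:ℂ) := fun x => (hf.analyticOnNhd hU) _ (hxU x)
  have hnt : ∀ x : ℝ, analyticOrderAt f x ≠ ⊤ := by
    intro x h
    exact order_not_top hδ hU hsub hf hf0 x (analyticOrderAt_eq_top.mp h)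
  have hordk : ∀ x : ℝ, analyticOrderAt f x = (ordAt f ↑x : ℕ∞) := by
    intro x
    have h1 : ordAt f ↑x = (analyticOrderAt f x).toNat := by rw [ordAt, dif_pos (hfa x)]
    rw [h1, ENat.coe_toNat (hnt x)]
  have hcne : ∀ x : ℝ, iteratedDeriv (ordAt f ↑x) f ↑x ≠ 0 := fun x =>
    order_iteratedDeriv_ne_zero (hfa x) (hordk x)
  have hcontF : ∀ (n : ℕ) (x : ℝ), ContinuousAt (fun t : ℝ => iteratedDeriv n f ↑t) x := by
    intro n x
    exact (((iter_analytic hU hf n) _ (hxU x)).continuousAt).comp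
      Complex.continuous_ofReal.continuousAt
  have hsel : ∀ x : ℝ, ∃ r > 0, ∀ t : ℝ, dist t x ≤ r →
      ‖iteratedDeriv (ordAt f ↑x) f ↑t - iteratedDeriv (ordAt f ↑x) f ↑x‖
        ≤ ‖iteratedDeriv (ordAt f ↑x) f ↑x‖ / 8 := by
    intro x
    have hm8 : 0 < ‖iteratedDeriv (ordAt f ↑x) f ↑x‖ / 8 := by
      have := hcne x
      have : 0 < ‖iteratedDeriv (ordAt f ↑x) f ↑x‖ := norm_pos_iff.mpr this
      linarith
    obtain ⟨r, hr, hball⟩ := Metric.continuousAt_iff.mp (hcontF (ordAt f ↑x) x) _ hm8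
    refine ⟨r/2, by linarith, fun t ht => ?_⟩
    have h2 := hball (show dist t x < r by linarith)
    rw [dist_eq_norm] at h2
    exact h2.le
  choose r hrpos hrclose using hsel
  have hcov : Icc (0:ℝ) 1 ⊆ ⋃ x ∈ Icc (0:ℝ) 1, Metric.ball x (r x) := by
    intro t ht
    exact Set.mem_biUnion ht (Metric.mem_ball_self (hrpos t))
  obtain ⟨T, hTsub, hTfin, hTcov⟩ := isCompact_Icc.elim_finite_subcover_image
    (fun x _ => Metric.isOpen_ball) hcov
  set F := hTfin.toFinset with hF
  have hFmem : ∀ {x}, x ∈ F ↔ x ∈ T := fun {x} => Set.Finite.mem_toFinset hTfin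
  have hFne : F.Nonempty := by
    have h0 : (0:ℝ) ∈ Icc (0:ℝ) 1 := by constructor <;> norm_num
    obtain ⟨x, hxT, _⟩ := Set.mem_iUnion₂.mp (hTcov h0)
    exact ⟨x, hFmem.mpr hxT⟩
  set m : ℝ := F.inf' hFne (fun x => ‖iteratedDeriv (ordAt f ↑x) f ↑x‖) with hm_def
  have hm_le : ∀ x ∈ F, m ≤ ‖iteratedDeriv (ordAt f ↑x) f ↑x‖ := fun x hx =>
    Finset.inf'_le _ hx
  have hmpos : 0 < m := by
    rw [hm_def, Finset.lt_inf'_iff]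
    intro x _
    exact norm_pos_iff.mpr (hcne x)
  set δ' := min δ 1 with hδ'_def
  have hδ'pos : 0 < δ' := lt_min hδ one_pos
  set D : ℝ := (Nat.factorial l : ℝ) / δ' ^ l with hD_def
  have hDpos : 0 < D := by positivity
  have hDbound : ∀ n : ℕ, n ≤ l → (Nat.factorial n : ℝ) / δ ^ n ≤ D := by
    intro n hn
    rw [hD_def]
    apply div_le_div₀ (by positivity) ?_ (by positivity) ?_
    · exact_mod_cast Nat.factorial_le hn
    · calc δ' ^ l ≤ δ' ^ n := pow_le_pow_of_le_one hδ'pos.le (min_le_right _ _) hn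
        _ ≤ δ ^ n := pow_le_pow_left₀ hδ'pos.le (min_le_left _ _) n
  set η : ℝ := m / (8 * D) with hη_def
  have hηpos : 0 < η := by positivity
  set Q : ℝ := 4 / (3 * m) with hQ_def
  have hQpos : 0 < Q := by positivity
  set C' : ℝ := 4 ^ l * Q ^ (1/(l:ℝ)) with hC'_def
  have hC'pos : 0 < C' := by positivity
  set N : ℕ := F.card with hN_def
  have hNpos : 0 < N := Finset.card_pos.mpr hFne
  have hNR : (0:ℝ) < N := by exact_mod_cast hNpos
  set Ct : ℝ := N * C' + 1 with hCt_def
  have hCtpos : 0 < Ct := by positivity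
  set β : ℝ := 1/(l:ℝ) - α with hβ_def
  have hβpos : 0 < β := by rw [hβ_def]; have := hα; simp only [one_div] at *; linarith
  refine ⟨min ((3/4)*m) (min 1 ((1/Ct) ^ (1/β))), ?_, η, hηpos, ?_⟩
  · apply lt_min (by positivity)
    exact lt_min one_pos (Real.rpow_pos_of_pos (by positivity) _)
  intro V g hV hsubV hg hgper hgf ε hε hεε₀
  have hε1 : ε < (3/4)*m := lt_of_lt_of_le hεε₀ (min_le_left _ _)
  have hεCt : ε < (1/Ct) ^ (1/β) :=
    lt_of_lt_of_le hεε₀ (le_trans (min_le_right _ _) (min_le_right _ _))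
  have hRV : ∀ t : ℝ, (t:ℂ) ∈ V := fun t => hsubV (by simpa using hδ.le)
  have hOpen : IsOpen (U ∩ V) := hU.inter hV
  have hfUV : DifferentiableOn ℂ f (U ∩ V) := hf.mono Set.inter_subset_left
  have hgUV : DifferentiableOn ℂ g (U ∩ V) := hg.mono Set.inter_subset_right
  have htransfer : ∀ (n : ℕ), n ≤ l → ∀ t : ℝ,
      ‖iteratedDeriv n g ↑t - iteratedDeriv n f ↑t‖ ≤ m / 8 := by
    intro n hn t
    have himle : ∀ z ∈ Metric.closedBall (t:ℂ) δ, |z.im| ≤ δ := by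
      intro z hz
      have h1 := Complex.abs_im_le_norm (z - ↑t)
      have h2 : ‖z - ↑t‖ ≤ δ := by
        rw [← Complex.dist_eq]
        exact Metric.mem_closedBall.mp hz
      simpa using le_trans h1 h2
    have hball : Metric.closedBall (t:ℂ) δ ⊆ U ∩ V := fun z hz =>
      ⟨hsub (himle z hz), hsubV (himle z hz)⟩
    have hdh : DifferentiableOn ℂ (fun w => g w - f w) (Metric.closedBall (t:ℂ) δ) :=
      (hgUV.mono hball).sub (hfUV.mono hball)
    have hMb : ∀ w ∈ Metric.closedBall (t:ℂ) δ, ‖g w - f w‖ ≤ η := by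
      intro w hw
      exact (hgf w (himle w hw)).le
    have hcb := cauchy_bound hδ hdh hMb n
    have heq := iter_sub hOpen hgUV hfUV n ↑t ⟨hxU t, hRV t⟩
    rw [heq] at hcb
    calc ‖iteratedDeriv n g ↑t - iteratedDeriv n f ↑t‖
        ≤ (Nat.factorial n : ℝ) * η / δ ^ n := hcb
      _ = ((Nat.factorial n : ℝ) / δ ^ n) * η := by ring
      _ ≤ D * η := mul_le_mul_of_nonneg_right (hDbound n hn) hηpos.le
      _ = m/8 := by rw [hη_def]; field_simp
  have hpiece : ∀ x ∈ F,
      volume {t : ℝ | t ∈ Icc (x - r x) (x + r x) ∧ ‖g ↑t‖ < ε}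
        ≤ ENNReal.ofReal (C' * ε ^ (1/(l:ℝ))) := by
    intro x hxF
    set n := ordAt f ↑x with hn_def
    set c := iteratedDeriv n f ↑x with hc_def
    set mx := ‖c‖ with hmx_def
    have hmxpos : 0 < mx := norm_pos_iff.mpr (hcne x)
    have hmmx : m ≤ mx := hm_le x hxF
    have hnl : n ≤ l := hmax x
    have hgc : ∀ t ∈ Icc (x - r x) (x + r x), ‖iteratedDeriv n g ↑t - c‖ ≤ mx/4 := by
      intro t ht
      have hdist : dist t x ≤ r x := by
        rw [Real.dist_eq, abs_le]
        exact ⟨by linarith [ht.1], by linarith [ht.2]⟩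
      have h1 := hrclose x t hdist
      have h2 := htransfer n hnl t
      calc ‖iteratedDeriv n g ↑t - c‖
          ≤ ‖iteratedDeriv n g ↑t - iteratedDeriv n f ↑t‖ + ‖iteratedDeriv n f ↑t - c‖ := by
            have heq3 : iteratedDeriv n g ↑t - c
                = (iteratedDeriv n g ↑t - iteratedDeriv n f ↑t)
                  + (iteratedDeriv n f ↑t - c) := by ring
            rw [heq3]; exact norm_add_le _ _
        _ ≤ m/8 + mx/8 := add_le_add h2 h1
        _ ≤ mx/4 := by linarith
    rcases Nat.eq_zero_or_pos n with hn0 | hn1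
    · have hempty : {t : ℝ | t ∈ Icc (x - r x) (x + r x) ∧ ‖g ↑t‖ < ε} = ∅ := by
        ext t
        simp only [Set.mem_setOf_eq, Set.mem_empty_iff_false, iff_false, not_and]
        intro ht habs
        have hgt := hgc t ht
        rw [hn0, iteratedDeriv_zero] at hgt
        have h3 : mx - ‖g ↑t - c‖ ≤ ‖g ↑t‖ := by
          have h5 := norm_sub_norm_le c (g ↑t)
          have h4 : ‖c - g ↑t‖ = ‖g ↑t - c‖ := norm_sub_rev _ _
          rw [h4] at h5
          rw [hmx_def]
          linarith
        linarith [hε1, hmmx]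
      rw [hempty]; simp
    · set u : ℝ → ℝ := fun t => ((starRingEnd ℂ) c * g ↑t).re with hu_def
      have hbr := fun n' => bridge hV hg hRV c n'
      have hdu : ∀ n' : ℕ, ∀ t ∈ Icc (x - r x) (x + r x),
          DifferentiableAt ℝ (iteratedDeriv n' u) t := fun n' t _ => (hbr n').2 t
      have hlow : ∀ t ∈ Icc (x - r x) (x + r x),
          (3/4) * mx^2 ≤ |iteratedDeriv n u t| := by
        intro t ht
        rw [(hbr n).1 t]
        have hsplit : (starRingEnd ℂ) c * iteratedDeriv n g ↑t
            = (starRingEnd ℂ) c * c + (starRingEnd ℂ) c * (iteratedDeriv n g ↑t - c) := by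
          ring
        rw [hsplit, Complex.add_re]
        have h1 : ((starRingEnd ℂ) c * c).re = mx^2 := by
          have hcc : (starRingEnd ℂ) c * c = ((Complex.normSq c : ℝ) : ℂ) := by
            rw [mul_comm, Complex.mul_conj]
          rw [hcc, Complex.ofReal_re, Complex.normSq_eq_norm_sq, hmx_def]
        have h2 : |((starRingEnd ℂ) c * (iteratedDeriv n g ↑t - c)).re| ≤ mx * (mx/4) := by
          calc |((starRingEnd ℂ) c * (iteratedDeriv n g ↑t - c)).re|
              ≤ ‖(starRingEnd ℂ) c * (iteratedDeriv n g ↑t - c)‖ :=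
                Complex.abs_re_le_norm _
            _ = mx * ‖iteratedDeriv n g ↑t - c‖ := by
                rw [norm_mul, Complex.norm_conj, hmx_def]
            _ ≤ mx * (mx/4) := mul_le_mul_of_nonneg_left (hgc t ht) hmxpos.le
        have h2' := abs_le.mp h2
        have hge : (3/4)*mx^2 ≤ ((starRingEnd ℂ) c * c).re
            + ((starRingEnd ℂ) c * (iteratedDeriv n g ↑t - c)).re := by
          rw [h1]; nlinarith [h2'.1]
        exact le_trans hge (le_abs_self _)
      have hcontain : {t : ℝ | t ∈ Icc (x - r x) (x + r x) ∧ ‖g ↑t‖ < ε}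
          ⊆ {t : ℝ | t ∈ Icc (x - r x) (x + r x) ∧ |u t| ≤ mx * ε} := by
        rintro t ⟨ht, habs⟩
        refine ⟨ht, ?_⟩
        calc |u t| ≤ ‖(starRingEnd ℂ) c * g ↑t‖ := Complex.abs_re_le_norm _
          _ = mx * ‖g ↑t‖ := by
              rw [norm_mul, Complex.norm_conj, hmx_def]
          _ ≤ mx * ε := mul_le_mul_of_nonneg_left habs.le hmxpos.le
      have hsl := sublevel n hn1 u (x - r x) (x + r x) ((3/4)*mx^2) (mx*ε)
        (by positivity) (by positivity) hdu hlow
      refine le_trans (le_trans (measure_mono hcontain) hsl)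
        (ENNReal.ofReal_le_ofReal ?_)
      have hargpos : 0 < mx*ε/((3/4)*mx^2) := by positivity
      have hx1 : mx*ε/((3/4)*mx^2) = (4*ε)/(3*mx) := by
        rw [div_eq_div_iff (by positivity) (by positivity)]
        ring
      have h7 : Q*ε = (4*ε)/(3*m) := by rw [hQ_def]; ring
      have hQε : mx*ε/((3/4)*mx^2) ≤ Q*ε := by
        rw [hx1, h7]
        gcongr
      have hQε1 : Q * ε ≤ 1 := by
        rw [h7, div_le_one (by positivity)]
        linarith
      have hQεpos : 0 < Q * ε := by positivity
      calc (4:ℝ)^n * (mx*ε/((3/4)*mx^2)) ^ (1/(n:ℝ))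
          ≤ 4^l * (Q*ε) ^ (1/(l:ℝ)) := by
            apply mul_le_mul
            · apply pow_le_pow_right₀ (by norm_num) hnl
            · calc (mx*ε/((3/4)*mx^2)) ^ (1/(n:ℝ))
                  ≤ (Q*ε) ^ (1/(n:ℝ)) :=
                    Real.rpow_le_rpow hargpos.le hQε (by positivity)
                _ ≤ (Q*ε) ^ (1/(l:ℝ)) := by
                    apply Real.rpow_le_rpow_of_exponent_ge hQεpos hQε1
                    apply one_div_le_one_div_of_le
                    · exact_mod_cast hn1
                    · exact_mod_cast hnl
            · positivity
            · positivity
        _ = C' * ε ^ (1/(l:ℝ)) := by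
            rw [hC'_def, Real.mul_rpow hQpos.le hε.le]; ring
  have hEsub : {t ∈ Set.Ico (0:ℝ) 1 | ‖g ↑t‖ < ε} ⊆
      ⋃ x ∈ F, {t : ℝ | t ∈ Icc (x - r x) (x + r x) ∧ ‖g ↑t‖ < ε} := by
    rintro t ⟨ht, habs⟩
    have htIcc : t ∈ Icc (0:ℝ) 1 := ⟨ht.1, ht.2.le⟩
    obtain ⟨x, hxT, hxball⟩ := Set.mem_iUnion₂.mp (hTcov htIcc)
    apply Set.mem_biUnion (hFmem.mpr hxT)
    refine ⟨?_, habs⟩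
    have hd := Metric.mem_ball.mp hxball
    rw [Real.dist_eq, abs_lt] at hd
    exact ⟨by linarith [hd.1], by linarith [hd.2]⟩
  have hεα : 0 < ε ^ α := Real.rpow_pos_of_pos hε α
  calc volume {t ∈ Set.Ico (0:ℝ) 1 | ‖g ↑t‖ < ε}
      ≤ ∑ x ∈ F, volume {t : ℝ | t ∈ Icc (x - r x) (x + r x) ∧ ‖g ↑t‖ < ε} :=
        (measure_mono hEsub).trans (measure_biUnion_finset_le F _)
    _ ≤ F.card • ENNReal.ofReal (C' * ε ^ (1/(l:ℝ))) :=
        Finset.sum_le_card_nsmul F _ _ (fun x hx => hpiece x hx)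
    _ = ENNReal.ofReal ((N:ℝ) * (C' * ε ^ (1/(l:ℝ)))) := by
        rw [nsmul_eq_mul, hN_def,
          ENNReal.ofReal_mul (by positivity : (0:ℝ) ≤ (F.card:ℝ)),
          ENNReal.ofReal_natCast]
    _ < ENNReal.ofReal (ε ^ α) := by
        rw [ENNReal.ofReal_lt_ofReal_iff hεα]
        have h1 : ε ^ (1/(l:ℝ)) = ε ^ β * ε ^ α := by
          rw [← Real.rpow_add hε]
          congr 1
          rw [hβ_def]; ring
        have h2 : ε ^ β < 1/Ct := by
          have h3 := Real.rpow_lt_rpow hε.le hεCt hβpos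
          rwa [← Real.rpow_mul (by positivity : (0:ℝ) ≤ 1/Ct), one_div β,
            inv_mul_cancel₀ hβpos.ne', Real.rpow_one] at h3
        calc (N:ℝ) * (C' * ε ^ (1/(l:ℝ)))
            = ((N:ℝ) * C' * ε ^ β) * ε ^ α := by rw [h1]; ring
          _ < ((N:ℝ) * C' * (1/Ct)) * ε ^ α := by
              apply mul_lt_mul_of_pos_right _ hεα
              apply mul_lt_mul_of_pos_left h2 (by positivity)
          _ ≤ 1 * ε ^ α := by
              apply mul_le_mul_of_nonneg_right _ hεα.le
              rw [hCt_def, mul_one_div, div_le_one (by positivity)]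
              linarith
          _ = ε ^ α := one_mul _
end

section
/- Local factorization near a zero cluster: Let f be holomorphic near a compact set K with a zero x₀ ∈ int K of multiplicity l, and with no other zeros in a closed ball B(x₀, r) ⊆ int K. Then there exist η' > 0, 0 < η'' < r and κ > 0 such that for every g holomorphic near K with ‖g − f‖_K < η' and every zero z̃ of g in B(x₀, r), there is a monic polynomial p of degree at most l with p(z̃) = 0 such that |g(z)| ≥ κ·|p(z)| for all z with |z − x₀| < η''. -/
open MeasureTheory Classical

private lemma listProd_cont (L : List ℂ) : Continuous fun z : ℂ => (L.map fun a => z - a).prod := by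
  induction L with
  | nil => simpa using continuous_const
  | cons a L ih =>
    simp only [List.map_cons, List.prod_cons]
    exact (continuous_id.sub continuous_const).mul ih

private lemma listProd_lower (φ : ℂ → ℂ) (m : ℝ) (hm : 0 ≤ m) :
    ∀ L : List ℂ, (∀ x ∈ L, m ≤ ‖φ x‖) →
      m ^ L.length ≤ ‖(L.map φ).prod‖ := by
  intro L
  induction L with
  | nil => simp
  | cons a L ih =>
    intro h
    have h1 := h a (List.mem_cons_self)
    have h2 := ih fun x hx => h x (List.mem_cons_of_mem a hx)
    simp only [List.map_cons, List.prod_cons, List.length_cons, norm_mul]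
    calc m ^ (L.length + 1) = m * m ^ L.length := by ring
    _ ≤ ‖φ a‖ * ‖(L.map φ).prod‖ :=
        mul_le_mul h1 h2 (by positivity) (by positivity)

private lemma listProd_upper (φ : ℂ → ℂ) (B : ℝ) (hB : 0 ≤ B) :
    ∀ L : List ℂ, (∀ x ∈ L, ‖φ x‖ ≤ B) →
      ‖(L.map φ).prod‖ ≤ B ^ L.length := by
  intro L
  induction L with
  | nil => simp
  | cons a L ih =>
    intro h
    have h1 := h a (List.mem_cons_self)
    have h2 := ih fun x hx => h x (List.mem_cons_of_mem a hx)
    simp only [List.map_cons, List.prod_cons, List.length_cons, norm_mul]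
    calc ‖φ a‖ * ‖(L.map φ).prod‖ ≤ B * B ^ L.length :=
          mul_le_mul h1 h2 (by positivity) hB
    _ = B ^ (L.length + 1) := by ring

private lemma listProd_diff (φ ψ : ℂ → ℂ) (B ε : ℝ) (hB : 0 ≤ B) (hε : 0 ≤ ε) :
    ∀ L : List ℂ, (∀ x ∈ L, ‖φ x‖ ≤ B) → (∀ x ∈ L, ‖ψ x‖ ≤ B) →
      (∀ x ∈ L, ‖φ x - ψ x‖ ≤ ε) →
      ‖(L.map φ).prod - (L.map ψ).prod‖ ≤ L.length * ε * (max 1 B) ^ L.length := by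
  intro L
  induction L with
  | nil => simp
  | cons a L ih =>
    intro h1 h2 h3
    have hC1 : (1:ℝ) ≤ max 1 B := le_max_left _ _
    have hC0 : (0:ℝ) ≤ max 1 B := by linarith
    have hBC : B ≤ max 1 B := le_max_right _ _
    have i3 := h3 a (List.mem_cons_self)
    have ju := listProd_upper φ B hB L (fun x hx => h1 x (List.mem_cons_of_mem a hx))
    have j2 := h2 a (List.mem_cons_self)
    have jih := ih (fun x hx => h1 x (List.mem_cons_of_mem a hx))
      (fun x hx => h2 x (List.mem_cons_of_mem a hx)) (fun x hx => h3 x (List.mem_cons_of_mem a hx))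
    simp only [List.map_cons, List.prod_cons, List.length_cons]
    have key : φ a * (L.map φ).prod - ψ a * (L.map ψ).prod
        = (φ a - ψ a) * (L.map φ).prod + ψ a * ((L.map φ).prod - (L.map ψ).prod) := by ring
    rw [key]
    have hBn : B ^ L.length ≤ (max 1 B) ^ (L.length + 1) := by
      calc B ^ L.length ≤ (max 1 B) ^ L.length := pow_le_pow_left₀ hB hBC _
      _ ≤ (max 1 B) ^ (L.length + 1) := pow_le_pow_right₀ hC1 (Nat.le_succ _)
    have t1 : ‖(φ a - ψ a) * (L.map φ).prod‖ ≤ ε * (max 1 B) ^ (L.length + 1) := by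
      rw [norm_mul]
      calc ‖φ a - ψ a‖ * ‖(L.map φ).prod‖ ≤ ε * B ^ L.length :=
            mul_le_mul i3 ju (by positivity) hε
      _ ≤ ε * (max 1 B) ^ (L.length + 1) := mul_le_mul_of_nonneg_left hBn hε
    have t2 : ‖ψ a * ((L.map φ).prod - (L.map ψ).prod)‖
        ≤ L.length * ε * (max 1 B) ^ (L.length + 1) := by
      rw [norm_mul]
      calc ‖ψ a‖ * ‖(L.map φ).prod - (L.map ψ).prod‖
          ≤ (max 1 B) * (L.length * ε * (max 1 B) ^ L.length) :=
            mul_le_mul (j2.trans hBC) jih (by positivity) hC0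
      _ = L.length * ε * (max 1 B) ^ (L.length + 1) := by ring
    calc ‖(φ a - ψ a) * (L.map φ).prod + ψ a * ((L.map φ).prod - (L.map ψ).prod)‖
        ≤ ‖(φ a - ψ a) * (L.map φ).prod‖
          + ‖ψ a * ((L.map φ).prod - (L.map ψ).prod)‖ := norm_add_le _ _
    _ ≤ ε * (max 1 B) ^ (L.length + 1) + L.length * ε * (max 1 B) ^ (L.length + 1) := by linarith
    _ = (↑(L.length + 1)) * ε * (max 1 B) ^ (L.length + 1) := by push_cast; ring


set_option maxHeartbeats 2000000 in
/-- Local factorization near a zero cluster: if `f` is holomorphic near a compact set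
`K` with a zero `x₀ ∈ int K` of multiplicity `l` and no other zeros in
`closedBall x₀ r ⊆ int K`, then there are `η' > 0`, `0 < η'' < r` and `κ > 0` such
that for every `g` holomorphic near `K` with `‖g - f‖_K < η'` and every zero `w` of
`g` in `closedBall x₀ r`, there is a monic polynomial `p` of degree at most `l` with
`p w = 0` and `|g z| ≥ κ |p z|` for all `|z - x₀| < η''`. -/
theorem local_factorization (K U : Set ℂ) (hK : IsCompact K) (hU : IsOpen U)
    (hKU : K ⊆ U) (f : ℂ → ℂ) (hf : DifferentiableOn ℂ f U)
    (x₀ : ℂ) (hx₀ : x₀ ∈ interior K) (l : ℕ) (hl : 1 ≤ l) (hord : ordAt f x₀ = l)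
    (r : ℝ) (hr : 0 < r) (hball : Metric.closedBall x₀ r ⊆ interior K)
    (hzeros : ∀ z ∈ Metric.closedBall x₀ r, z ≠ x₀ → f z ≠ 0) :
    ∃ η' > 0, ∃ η'' : ℝ, 0 < η'' ∧ η'' < r ∧ ∃ κ > 0,
      ∀ (V : Set ℂ) (g : ℂ → ℂ), IsOpen V → K ⊆ V → DifferentiableOn ℂ g V →
        (∀ z ∈ K, ‖g z - f z‖ < η') →
        ∀ w ∈ Metric.closedBall x₀ r, g w = 0 →
          ∃ p : Polynomial ℂ, p.Monic ∧ p.natDegree ≤ l ∧ p.eval w = 0 ∧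
            ∀ z : ℂ, ‖z - x₀‖ < η'' →
              κ * ‖p.eval z‖ ≤ ‖g z‖ := by
  classical
  have hx₀K : x₀ ∈ K := interior_subset hx₀
  have hx₀U : x₀ ∈ U := hKU hx₀K
  have hKr : Metric.closedBall x₀ r ⊆ K := fun z hz => interior_subset (hball hz)
  have hUx : U ∈ nhds x₀ := hU.mem_nhds hx₀U
  have hfa : AnalyticAt ℂ f x₀ := hf.analyticAt hUx
  have h1 : (analyticOrderAt f x₀).toNat = l := by rw [ordAt, dif_pos hfa] at hord; exact hord
  have h2 : analyticOrderAt f x₀ ≠ ⊤ := by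
    intro h; rw [h] at h1; simp at h1; omega
  have hord' : analyticOrderAt f x₀ = (l : ℕ∞) := by rw [← ENat.coe_toNat h2, h1]
  obtain ⟨u, hu_an, hu0, hu_eq⟩ := hfa.analyticOrderAt_eq_natCast.mp hord'
  -- the dslope chain at x₀
  set F : ℕ → ℂ → ℂ := fun i => (fun h => dslope h x₀)^[i] f with hFdef
  have hFsucc : ∀ i, F (i + 1) = dslope (F i) x₀ := fun i => Function.iterate_succ_apply' _ _ _
  have key : ∀ i, i ≤ l → DifferentiableOn ℂ (F i) U ∧
      (∀ᶠ w in nhdsWithin x₀ {x₀}ᶜ, F i w = (w - x₀) ^ (l - i) * u w) ∧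
      (i < l → F i x₀ = 0) := by
    intro i
    induction i with
    | zero =>
      intro _
      refine ⟨hf, ?_, fun _ => ?_⟩
      · refine (hu_eq.filter_mono nhdsWithin_le_nhds).mono fun w hw => ?_
        simpa [hFdef, smul_eq_mul] using hw
      · have := hu_eq.self_of_nhds
        simpa [hFdef, zero_pow (by omega : l ≠ 0)] using this
    | succ i ih =>
      intro hil
      obtain ⟨hd, he, hz⟩ := ih (Nat.le_of_succ_le hil)
      have hilt : i < l := hil
      have hd' : DifferentiableOn ℂ (F (i + 1)) U := by
        rw [hFsucc]; exact (Complex.differentiableOn_dslope hUx).mpr hd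
      have he' : ∀ᶠ w in nhdsWithin x₀ {x₀}ᶜ, F (i+1) w = (w - x₀) ^ (l - (i+1)) * u w := by
        filter_upwards [he, self_mem_nhdsWithin] with w hw hw'
        have hwx : w ≠ x₀ := hw'
        have hsub : l - i = (l - (i + 1)) + 1 := by omega
        rw [hFsucc, dslope_of_ne _ hwx, slope_def_field, hz hilt, sub_zero, hw, hsub,
          pow_succ]
        field_simp [sub_ne_zero.mpr hwx]
      refine ⟨hd', he', fun hl' => ?_⟩
      have hc : ContinuousAt (F (i + 1)) x₀ := (hd'.continuousOn.continuousAt hUx)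
      have t1 : Filter.Tendsto (F (i + 1)) (nhdsWithin x₀ {x₀}ᶜ) (nhds (F (i + 1) x₀)) :=
        hc.tendsto.mono_left nhdsWithin_le_nhds
      have t2 : Filter.Tendsto (fun w => (w - x₀) ^ (l - (i+1)) * u w)
          (nhdsWithin x₀ {x₀}ᶜ) (nhds 0) := by
        have hc2 : ContinuousAt (fun w => (w - x₀) ^ (l - (i+1)) * u w) x₀ :=
          (((continuousAt_id.sub continuousAt_const).pow _).mul hu_an.continuousAt)
        have h3 : Filter.Tendsto (fun w => (w - x₀) ^ (l - (i+1)) * u w)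
            (nhdsWithin x₀ {x₀}ᶜ) (nhds ((x₀ - x₀) ^ (l - (i+1)) * u x₀)) :=
          hc2.tendsto.mono_left nhdsWithin_le_nhds
        simpa [zero_pow (by omega : l - (i+1) ≠ 0)] using h3
      exact tendsto_nhds_unique t1 (t2.congr' (he'.mono fun w hw => hw.symm))
  obtain ⟨hFl_diff, hFl_ev, _⟩ := key l le_rfl
  have hFlx : F l x₀ = u x₀ := by
    have hc : ContinuousAt (F l) x₀ := (hFl_diff.continuousOn.continuousAt hUx)
    have t1 : Filter.Tendsto (F l) (nhdsWithin x₀ {x₀}ᶜ) (nhds (F l x₀)) :=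
      hc.tendsto.mono_left nhdsWithin_le_nhds
    have t2 : Filter.Tendsto (fun w => (w - x₀) ^ (l - l) * u w)
        (nhdsWithin x₀ {x₀}ᶜ) (nhds (u x₀)) := by
      have hc2 : ContinuousAt (fun w => (w - x₀) ^ (l - l) * u w) x₀ :=
        (((continuousAt_id.sub continuousAt_const).pow _).mul hu_an.continuousAt)
      have h3 : Filter.Tendsto (fun w => (w - x₀) ^ (l - l) * u w)
          (nhdsWithin x₀ {x₀}ᶜ) (nhds ((x₀ - x₀) ^ (l - l) * u x₀)) :=
        hc2.tendsto.mono_left nhdsWithin_le_nhds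
      simpa using h3
    exact tendsto_nhds_unique t1 (t2.congr' (hFl_ev.mono fun w hw => hw.symm))
  have hffact : ∀ i, i ≤ l → ∀ w, f w = (w - x₀) ^ i * F i w := by
    intro i
    induction i with
    | zero => intro _ w; simp [hFdef]
    | succ i ih =>
      intro hil w
      have hilt : i < l := hil
      have h1 := ih (Nat.le_of_succ_le hil) w
      have h2 : (w - x₀) • dslope (F i) x₀ w = F i w - F i x₀ := sub_smul_dslope (F i) x₀ w
      rw [(key i (Nat.le_of_succ_le hil)).2.2 hilt, sub_zero, smul_eq_mul] at h2
      rw [h1, ← h2, hFsucc, pow_succ]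
      ring
  -- constants
  set ρ₂ : ℝ := r / 2 with hρ₂def
  have hρ₂ : 0 < ρ₂ := by positivity
  have hρ₂r : ρ₂ ≤ r := by rw [hρ₂def]; linarith
  have hfc : ContinuousOn f K := hf.continuousOn.mono hKU
  have hsphK : Metric.sphere x₀ ρ₂ ⊆ K := by
    intro z hz
    have hd : dist z x₀ = ρ₂ := hz
    exact hKr (Metric.mem_closedBall.mpr (by rw [hd]; exact hρ₂r))
  obtain ⟨zM, hzM, hzMmax'⟩ := (isCompact_sphere x₀ ρ₂).exists_isMaxOn
    (NormedSpace.sphere_nonempty.mpr hρ₂.le)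
    (continuous_norm.comp_continuousOn (hfc.mono hsphK))
  have hzMmax : ∀ z ∈ Metric.sphere x₀ ρ₂, ‖f z‖ ≤ ‖f zM‖ :=
    fun z hz => hzMmax' hz
  set M : ℝ := ‖f zM‖ with hMdef
  have hM0 : 0 ≤ M := norm_nonneg _
  set c₀ : ℝ := ‖u x₀‖ with hc₀def
  have hc₀ : 0 < c₀ := norm_pos_iff.mpr hu0
  have hmax1 : (0:ℝ) < max 1 r := lt_of_lt_of_le one_pos (le_max_left _ _)
  set Cd : ℝ := ((l:ℝ) + 1) * (max 1 r) ^ (l+1) / ((ρ₂/2) ^ (l+1) * (ρ₂/2) ^ (l+1)) with hCddef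
  have hCd : 0 < Cd := by
    apply div_pos (mul_pos (by positivity) (pow_pos hmax1 _)) (by positivity)
  set ρ : ℝ := min (r/8) (c₀ / (2 * ρ₂ * M * Cd + 1)) with hρdef
  have hρpos : 0 < ρ := lt_min (by positivity) (div_pos hc₀ (by positivity))
  have hρr8 : ρ ≤ r / 8 := min_le_left _ _
  have hρρ₂2 : ρ ≤ ρ₂ / 2 := by rw [hρ₂def]; linarith
  have hρ2 : ρ < ρ₂ := by linarith
  have hρr : ρ < r := by linarith
  have hρbound : ρ * (2 * ρ₂ * M * Cd) ≤ c₀ := by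
    have hm := min_le_right (r/8) (c₀ / (2 * ρ₂ * M * Cd + 1))
    have hD0 : 0 ≤ 2 * ρ₂ * M * Cd := by positivity
    have h := mul_le_mul_of_nonneg_right hm hD0
    calc ρ * (2 * ρ₂ * M * Cd) ≤ c₀ / (2 * ρ₂ * M * Cd + 1) * (2 * ρ₂ * M * Cd) := h
    _ ≤ c₀ := by
        rw [div_mul_eq_mul_div, div_le_iff₀ (by positivity)]
        nlinarith
  -- annulus minimum
  set A : Set ℂ := Metric.closedBall x₀ r \ Metric.ball x₀ ρ with hAdef
  have hAK : A ⊆ K := fun z hz => hKr hz.1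
  have hAcomp : IsCompact A := (isCompact_closedBall x₀ r).diff Metric.isOpen_ball
  have hAne : A.Nonempty := by
    refine ⟨x₀ + (r:ℂ), ?_, ?_⟩
    · simp [Metric.mem_closedBall, Complex.dist_eq, Complex.norm_real, abs_of_pos hr]
    · simp only [Metric.mem_ball, Complex.dist_eq]
      simp [Complex.norm_real, abs_of_pos hr]
      linarith
  obtain ⟨zδ, hzδ, hzδmin'⟩ := hAcomp.exists_isMinOn hAne
    (continuous_norm.comp_continuousOn (hfc.mono hAK))
  have hzδmin : ∀ z ∈ A, ‖f zδ‖ ≤ ‖f z‖ := fun z hz => hzδmin' hz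
  set δ : ℝ := ‖f zδ‖ with hδdef
  have hδpos : 0 < δ := by
    apply norm_pos_iff.mpr
    apply hzeros zδ hzδ.1
    intro h
    exact hzδ.2 (by simp [h, Metric.mem_ball, hρpos])
  set η'₂ : ℝ := c₀ * (ρ₂/2) ^ (l+1) / (8 * ρ₂) with hη'₂def
  have hη'₂pos : 0 < η'₂ := by positivity
  set η' : ℝ := min (δ/2) η'₂ with hη'def
  have hη'pos : 0 < η' := lt_min (by positivity) hη'₂pos
  have hη'δ : η' ≤ δ/2 := min_le_left _ _
  have hη'2 : η' ≤ η'₂ := min_le_right _ _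
  set κ : ℝ := (δ/2) / (max 1 r) ^ l with hκdef
  have hκpos : 0 < κ := by positivity
  refine ⟨η', hη'pos, ρ, hρpos, hρr, κ, hκpos, ?_⟩
  intro V g hV hKV hg hgf w hw hgw
  have hKrV : Metric.closedBall x₀ r ⊆ V := fun z hz => hKV (hKr hz)
  have hballV : Metric.closedBall x₀ ρ ⊆ V := fun z hz =>
    hKrV (Metric.closedBall_subset_closedBall hρr.le hz)
  -- the annulus bound on g
  have hgA : ∀ z ∈ A, δ/2 ≤ ‖g z‖ := by
    intro z hz
    have h1 : δ ≤ ‖f z‖ := hzδmin z hz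
    have h2 : ‖g z - f z‖ < η' := hgf z (hAK hz)
    have h3 := norm_sub_norm_le (f z) (g z)
    rw [norm_sub_rev] at h3
    linarith
  have hannA : ∀ z : ℂ, ρ ≤ dist z x₀ → dist z x₀ ≤ r → z ∈ A := by
    intro z h1 h2
    exact ⟨Metric.mem_closedBall.mpr h2, fun hmem => absurd (Metric.mem_ball.mp hmem) (not_lt.mpr h1)⟩
  have hgAne : ∀ z ∈ A, g z ≠ 0 := by
    intro z hz hzz
    have := hgA z hz
    rw [hzz] at this
    simp at this
    linarith
  have hwball : w ∈ Metric.ball x₀ ρ := by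
    by_contra hcon
    have hA : w ∈ A := ⟨hw, hcon⟩
    exact hgAne w hA hgw
  have hsphρA : ∀ z ∈ Metric.sphere x₀ ρ, z ∈ A := by
    intro z hz
    have hd : dist z x₀ = ρ := hz
    exact hannA z (le_of_eq hd.symm) (by rw [hd]; linarith)
  have hsphρ₂A : ∀ z ∈ Metric.sphere x₀ ρ₂, z ∈ A := by
    intro z hz
    have hd : dist z x₀ = ρ₂ := hz
    exact hannA z (by rw [hd]; linarith) (by rw [hd]; exact hρ₂r)
  -- the peeling claim
  have claim : ∀ n : ℕ, ∀ G : ℂ → ℂ, DifferentiableOn ℂ G V →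
      (∀ z ∈ Metric.sphere x₀ ρ, G z ≠ 0) →
      (∃ zs : List ℂ, zs.length ≤ n ∧ (∀ a ∈ zs, a ∈ Metric.ball x₀ ρ) ∧
        ∃ H : ℂ → ℂ, DifferentiableOn ℂ H V ∧
          (∀ z, G z = ((zs.map fun a => z - a).prod) * H z) ∧
          ∀ z ∈ Metric.closedBall x₀ ρ, H z ≠ 0) ∨
      (∃ zs : List ℂ, zs.length = n + 1 ∧ (∀ a ∈ zs, a ∈ Metric.ball x₀ ρ) ∧
        ∃ H : ℂ → ℂ, DifferentiableOn ℂ H V ∧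
          (∀ z, G z = ((zs.map fun a => z - a).prod) * H z)) := by
    intro n
    induction n with
    | zero =>
      intro G hGd hGs
      by_cases hzz : ∃ z ∈ Metric.closedBall x₀ ρ, G z = 0
      · obtain ⟨z', hz', hGz'⟩ := hzz
        have hz'ball : z' ∈ Metric.ball x₀ ρ := by
          rcases lt_or_eq_of_le (Metric.mem_closedBall.mp hz') with h | h
          · exact Metric.mem_ball.mpr h
          · exact absurd hGz' (hGs z' h)
        right
        refine ⟨[z'], rfl, by simpa using hz'ball, dslope G z',
          (Complex.differentiableOn_dslope (hV.mem_nhds (hballV hz'))).mpr hGd, fun z => ?_⟩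
        have h2 : (z - z') • dslope G z' z = G z - G z' := sub_smul_dslope G z' z
        rw [hGz', sub_zero, smul_eq_mul] at h2
        simpa using h2.symm
      · left
        push_neg at hzz
        exact ⟨[], by simp, by simp, G, hGd, fun z => by simp, hzz⟩
    | succ n ih =>
      intro G hGd hGs
      by_cases hzz : ∃ z ∈ Metric.closedBall x₀ ρ, G z = 0
      · obtain ⟨z', hz', hGz'⟩ := hzz
        have hz'ball : z' ∈ Metric.ball x₀ ρ := by
          rcases lt_or_eq_of_le (Metric.mem_closedBall.mp hz') with h | h
          · exact Metric.mem_ball.mpr h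
          · exact absurd hGz' (hGs z' h)
        have hGfact : ∀ z, G z = (z - z') * dslope G z' z := by
          intro z
          have h2 : (z - z') • dslope G z' z = G z - G z' := sub_smul_dslope G z' z
          rw [hGz', sub_zero, smul_eq_mul] at h2
          exact h2.symm
        have hd1 : DifferentiableOn ℂ (dslope G z') V :=
          (Complex.differentiableOn_dslope (hV.mem_nhds (hballV hz'))).mpr hGd
        have hs1 : ∀ z ∈ Metric.sphere x₀ ρ, dslope G z' z ≠ 0 := by
          intro z hzs h0
          exact hGs z hzs (by rw [hGfact z, h0, mul_zero])
        rcases ih (dslope G z') hd1 hs1 with ⟨zs, hlen, hmem, H, hHd, hHf, hHnz⟩ |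
          ⟨zs, hlen, hmem, H, hHd, hHf⟩
        · left
          refine ⟨z' :: zs, by simpa using hlen, ?_, H, hHd, fun z => ?_, hHnz⟩
          · intro a ha
            rcases List.mem_cons.mp ha with h | h
            · rw [h]; exact hz'ball
            · exact hmem a h
          · rw [hGfact z, hHf z]
            simp only [List.map_cons, List.prod_cons]
            ring
        · right
          refine ⟨z' :: zs, by simpa using hlen, ?_, H, hHd, fun z => ?_⟩
          · intro a ha
            rcases List.mem_cons.mp ha with h | h
            · rw [h]; exact hz'ball
            · exact hmem a h
          · rw [hGfact z, hHf z]
            simp only [List.map_cons, List.prod_cons]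
            ring
      · left
        push_neg at hzz
        exact ⟨[], by simp, by simp, G, hGd, fun z => by simp, hzz⟩
  -- first peel at w
  have hwV : w ∈ V := hKV (hKr hw)
  have hg1d : DifferentiableOn ℂ (dslope g w) V :=
    (Complex.differentiableOn_dslope (hV.mem_nhds hwV)).mpr hg
  have hgfact1 : ∀ z, g z = (z - w) * dslope g w z := by
    intro z
    have h2 : (z - w) • dslope g w z = g z - g w := sub_smul_dslope g w z
    rw [hgw, sub_zero, smul_eq_mul] at h2
    exact h2.symm
  have hg1s : ∀ z ∈ Metric.sphere x₀ ρ, dslope g w z ≠ 0 := by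
    intro z hzs h0
    exact hgAne z (hsphρA z hzs) (by rw [hgfact1 z, h0, mul_zero])
  rcases claim (l - 1) (dslope g w) hg1d hg1s with
    ⟨zs, hlen, hmem, H, hHd, hHf, hHnz⟩ | ⟨zs, hlen, hmem, H, hHd, hHf⟩
  · -- main case: build p and prove the bound
    set L : List ℂ := w :: zs with hLdef
    have hLlen : L.length ≤ l := by
      simp only [hLdef, List.length_cons]
      omega
    have hLmem : ∀ a ∈ L, a ∈ Metric.ball x₀ ρ := by
      intro a ha
      rcases List.mem_cons.mp ha with h | h
      · rw [h]; exact hwball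
      · exact hmem a h
    have hfactg : ∀ z, g z = ((L.map fun a => z - a).prod) * H z := by
      intro z
      rw [hgfact1 z, hHf z, hLdef]
      simp only [List.map_cons, List.prod_cons]
      ring
    set ρ₃ : ℝ := 3 / 4 * r with hρ₃def
    have hρ₃pos : 0 < ρ₃ := by positivity
    have hρ₂ρ₃ : ρ₂ < ρ₃ := by rw [hρ₂def, hρ₃def]; linarith
    have hρ₃r : ρ₃ ≤ r := by rw [hρ₃def]; linarith
    have hPneA : ∀ z ∈ A, ((L.map fun a => z - a).prod) ≠ 0 := by
      intro z hz h0
      apply hgAne z hz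
      rw [hfactg z, h0, zero_mul]
    have hHnz3 : ∀ z ∈ Metric.closedBall x₀ ρ₃, H z ≠ 0 := by
      intro z hz
      by_cases hc : dist z x₀ < ρ
      · exact hHnz z (Metric.mem_closedBall.mpr hc.le)
      · have hzA : z ∈ A := hannA z (not_lt.mp hc) ((Metric.mem_closedBall.mp hz).trans hρ₃r)
        intro h0
        apply hgAne z hzA
        rw [hfactg z, h0, mul_zero]
    -- |H| ≥ κ on the sphere of radius ρ₂
    have hsphHκ : ∀ z ∈ Metric.sphere x₀ ρ₂, κ ≤ ‖H z‖ := by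
      intro z hz
      have hzA : z ∈ A := hsphρ₂A z hz
      have hgz : δ / 2 ≤ ‖g z‖ := hgA z hzA
      have hPub : ‖(L.map fun a => z - a).prod‖ ≤ (max 1 r) ^ l := by
        have h1 : ‖(L.map fun a => z - a).prod‖ ≤ (max 1 r) ^ L.length := by
          apply listProd_upper _ _ hmax1.le
          intro a ha
          have h2 : dist z a ≤ dist z x₀ + dist a x₀ := by
            calc dist z a ≤ dist z x₀ + dist x₀ a := dist_triangle z x₀ a
            _ = dist z x₀ + dist a x₀ := by rw [dist_comm x₀ a]
          have h3 : dist z x₀ = ρ₂ := hz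
          have h4 : dist a x₀ < ρ := Metric.mem_ball.mp (hLmem a ha)
          have h5 : ‖z - a‖ = dist z a := (Complex.dist_eq z a).symm
          have h6 : ρ₂ + ρ ≤ r := by rw [hρ₂def]; linarith
          have h7 : r ≤ max 1 r := le_max_right _ _
          rw [h5]
          linarith
        calc ‖(L.map fun a => z - a).prod‖ ≤ (max 1 r) ^ L.length := h1
        _ ≤ (max 1 r) ^ l := pow_le_pow_right₀ (le_max_left _ _) hLlen
      have hPpos : 0 < ‖(L.map fun a => z - a).prod‖ :=
        norm_pos_iff.mpr (hPneA z hzA)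
      have hκP : κ * ‖(L.map fun a => z - a).prod‖ ≤ δ / 2 := by
        rw [hκdef]
        rw [div_mul_eq_mul_div, div_le_iff₀ (by positivity)]
        calc δ / 2 * ‖(L.map fun a => z - a).prod‖ ≤ δ / 2 * (max 1 r) ^ l :=
          mul_le_mul_of_nonneg_left hPub (by positivity)
        _ = δ / 2 * (max 1 r) ^ l := rfl
      have hgprod : ‖g z‖
          = ‖(L.map fun a => z - a).prod‖ * ‖H z‖ := by
        rw [hfactg z, norm_mul]
      have : κ * ‖(L.map fun a => z - a).prod‖
          ≤ ‖(L.map fun a => z - a).prod‖ * ‖H z‖ := by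
        rw [← hgprod]; linarith
      rw [mul_comm κ _] at this
      exact le_of_mul_le_mul_left this hPpos
    -- maximum modulus for H⁻¹ on the ball of radius ρ₂
    have hb3V : Metric.ball x₀ ρ₃ ⊆ V := fun z hz =>
      hKrV (Metric.closedBall_subset_closedBall hρ₃r (Metric.ball_subset_closedBall hz))
    have hHid : DifferentiableOn ℂ (fun z => (H z)⁻¹) (Metric.ball x₀ ρ₃) :=
      (hHd.mono hb3V).inv fun z hz => hHnz3 z (Metric.ball_subset_closedBall hz)
    have hdcl : DiffContOnCl ℂ (fun z => (H z)⁻¹) (Metric.ball x₀ ρ₂) := by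
      apply DifferentiableOn.diffContOnCl
      rw [closure_ball x₀ hρ₂.ne']
      exact hHid.mono (Metric.closedBall_subset_ball hρ₂ρ₃)
    have hκinv : ∀ z ∈ Metric.closedBall x₀ ρ₂, ‖(H z)⁻¹‖ ≤ κ⁻¹ := by
      intro z hz
      apply Complex.norm_le_of_forall_mem_frontier_norm_le Metric.isBounded_ball hdcl
      · intro ζ hζ
        rw [frontier_ball x₀ hρ₂.ne'] at hζ
        rw [norm_inv]
        exact inv_anti₀ hκpos (hsphHκ ζ hζ)
      · rw [closure_ball x₀ hρ₂.ne']; exact hz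
    have hHκ : ∀ z ∈ Metric.closedBall x₀ ρ, κ ≤ ‖H z‖ := by
      intro z hz
      have hz2 : z ∈ Metric.closedBall x₀ ρ₂ :=
        Metric.closedBall_subset_closedBall (by linarith) hz
      have h0 : H z ≠ 0 := hHnz z hz
      have h1 := hκinv z hz2
      rw [norm_inv] at h1
      have h2 : 0 < ‖H z‖ := norm_pos_iff.mpr h0
      have h3 := inv_anti₀ (by positivity) h1
      rwa [inv_inv, inv_inv] at h3
    -- build the polynomial
    refine ⟨((L : Multiset ℂ).map fun a => Polynomial.X - Polynomial.C a).prod, ?_, ?_, ?_, ?_⟩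
    · exact Polynomial.monic_multiset_prod_of_monic _ _ fun a _ => Polynomial.monic_X_sub_C a
    · rw [Polynomial.natDegree_multiset_prod_X_sub_C_eq_card]
      simpa using hLlen
    · rw [Polynomial.eval_multiset_prod, Multiset.map_map]
      apply Multiset.prod_eq_zero
      refine Multiset.mem_map.mpr ⟨w, ?_, by simp⟩
      simp [hLdef]
    · intro z hzρ
      have hpeval : Polynomial.eval z (((L : Multiset ℂ).map
          fun a => Polynomial.X - Polynomial.C a).prod) = (L.map fun a => z - a).prod := by
        rw [Polynomial.eval_multiset_prod, Multiset.map_map]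
        simp only [Function.comp, Polynomial.eval_sub, Polynomial.eval_X, Polynomial.eval_C]
        rw [Multiset.map_coe, Multiset.prod_coe]
      rw [hpeval]
      have hzcb : z ∈ Metric.closedBall x₀ ρ := by
        rw [Metric.mem_closedBall, Complex.dist_eq]
        exact hzρ.le
      have hκH := hHκ z hzcb
      have hgz : ‖g z‖
          = ‖(L.map fun a => z - a).prod‖ * ‖H z‖ := by
        rw [hfactg z, norm_mul]
      rw [hgz]
      calc κ * ‖(L.map fun a => z - a).prod‖
          ≤ ‖H z‖ * ‖(L.map fun a => z - a).prod‖ :=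
            mul_le_mul_of_nonneg_right hκH (norm_nonneg _)
      _ = ‖(L.map fun a => z - a).prod‖ * ‖H z‖ := mul_comm _ _
  · -- contradiction case
    exfalso
    set L : List ℂ := w :: zs with hLdef
    have hlen' : zs.length = l := by omega
    have hLlen : L.length = l + 1 := by simp [hLdef, hlen']
    have hLmem : ∀ a ∈ L, a ∈ Metric.ball x₀ ρ := by
      intro a ha
      rcases List.mem_cons.mp ha with h | h
      · rw [h]; exact hwball
      · exact hmem a h
    have hfactg : ∀ z, g z = ((L.map fun a => z - a).prod) * H z := by
      intro z
      rw [hgfact1 z, hHf z, hLdef]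
      simp only [List.map_cons, List.prod_cons]
      ring
    -- bounds on the sphere of radius ρ₂
    have hfar : ∀ z ∈ Metric.sphere x₀ ρ₂, ∀ a ∈ L,
        ρ₂ / 2 ≤ ‖z - a‖ ∧ ‖z - a‖ ≤ r := by
      intro z hz a ha
      have h3 : dist z x₀ = ρ₂ := hz
      have h4 : dist a x₀ < ρ := Metric.mem_ball.mp (hLmem a ha)
      have htri1 : dist z x₀ ≤ dist z a + dist a x₀ := dist_triangle z a x₀
      have htri2 : dist z a ≤ dist z x₀ + dist a x₀ := by
        calc dist z a ≤ dist z x₀ + dist x₀ a := dist_triangle z x₀ a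
        _ = dist z x₀ + dist a x₀ := by rw [dist_comm x₀ a]
      have h5 : ‖z - a‖ = dist z a := (Complex.dist_eq z a).symm
      constructor
      · rw [h5]; linarith
      · rw [h5]
        have h6 : ρ₂ + ρ ≤ r := by rw [hρ₂def]; linarith
        linarith
    have hPlow : ∀ z ∈ Metric.sphere x₀ ρ₂,
        (ρ₂/2) ^ (l+1) ≤ ‖(L.map fun a => z - a).prod‖ := by
      intro z hz
      have := listProd_lower (fun a => z - a) (ρ₂/2) (by positivity) L
        (fun a ha => (hfar z hz a ha).1)
      rwa [hLlen] at this
    have hPne : ∀ z ∈ Metric.sphere x₀ ρ₂, ((L.map fun a => z - a).prod) ≠ 0 := by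
      intro z hz h0
      have := hPlow z hz
      rw [h0] at this
      simp at this
      nlinarith [pow_pos (by positivity : (0:ℝ) < ρ₂/2) (l+1)]
    have hzx : ∀ z ∈ Metric.sphere x₀ ρ₂, z ≠ x₀ := by
      intro z hz h0
      have h3 : dist z x₀ = ρ₂ := hz
      rw [h0] at h3
      simp at h3
      linarith
    -- pointwise bound on Φ - Ψ
    have hΦΨ : ∀ z ∈ Metric.sphere x₀ ρ₂,
        ‖((L.map fun a => z - a).prod)⁻¹ - ((z - x₀) ^ (l+1))⁻¹‖ ≤ ρ * Cd := by
      intro z hz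
      have h3 : dist z x₀ = ρ₂ := hz
      have hzz : ‖z - x₀‖ = ρ₂ := by rw [← Complex.dist_eq]; exact h3
      have hBabs : ‖(z - x₀) ^ (l+1)‖ = ρ₂ ^ (l+1) := by
        rw [norm_pow, hzz]
      have hBne : (z - x₀) ^ (l+1) ≠ 0 :=
        pow_ne_zero _ (sub_ne_zero.mpr (hzx z hz))
      have hBlow : (ρ₂/2) ^ (l+1) ≤ ‖(z - x₀) ^ (l+1)‖ := by
        rw [hBabs]
        exact pow_le_pow_left₀ (by positivity) (by linarith) _
      have hconst : ((L.map fun _ => (z - x₀)).prod) = (z - x₀) ^ (l+1) := by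
        rw [List.map_const', List.prod_replicate, hLlen]
      have hnum : ‖(z - x₀) ^ (l+1) - (L.map fun a => z - a).prod‖
          ≤ ((l:ℝ)+1) * ρ * (max 1 r) ^ (l+1) := by
        have := listProd_diff (fun _ => z - x₀) (fun a => z - a) r ρ hr.le hρpos.le L
          (fun a _ => by rw [hzz]; exact hρ₂r)
          (fun a ha => (hfar z hz a ha).2)
          (fun a ha => by
            have h8 : (z - x₀) - (z - a) = a - x₀ := by ring
            rw [h8, ← Complex.dist_eq]
            exact (Metric.mem_ball.mp (hLmem a ha)).le)
        rw [hconst, hLlen] at this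
        convert this using 2
        push_cast
        ring
      rw [inv_sub_inv (hPne z hz) hBne, norm_div, norm_mul]
      have hden : (ρ₂/2) ^ (l+1) * (ρ₂/2) ^ (l+1)
          ≤ ‖(L.map fun a => z - a).prod‖ * ‖(z - x₀) ^ (l+1)‖ := by
        apply mul_le_mul (hPlow z hz) hBlow (by positivity) (norm_nonneg _)
      calc ‖(z - x₀) ^ (l+1) - (L.map fun a => z - a).prod‖ /
            (‖(L.map fun a => z - a).prod‖ * ‖(z - x₀) ^ (l+1)‖)
          ≤ (((l:ℝ)+1) * ρ * (max 1 r) ^ (l+1)) / ((ρ₂/2) ^ (l+1) * (ρ₂/2) ^ (l+1)) :=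
            div_le_div₀ (by positivity) hnum (by positivity) hden
      _ = ρ * Cd := by rw [hCddef]; ring
    -- continuity / integrability
    have hsphV : Metric.sphere x₀ ρ₂ ⊆ V := fun z hz => hKV (hsphK hz)
    have hcbrV : Metric.closedBall x₀ ρ₂ ⊆ V := fun z hz =>
      hKrV (Metric.closedBall_subset_closedBall hρ₂r hz)
    have hcbrU : Metric.closedBall x₀ ρ₂ ⊆ U := fun z hz =>
      hKU (hKr (Metric.closedBall_subset_closedBall hρ₂r hz))
    have hgc : ContinuousOn g (Metric.sphere x₀ ρ₂) := hg.continuousOn.mono hsphV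
    have hfcs : ContinuousOn f (Metric.sphere x₀ ρ₂) := hfc.mono hsphK
    have hΦc : ContinuousOn (fun z => ((L.map fun a => z - a).prod)⁻¹) (Metric.sphere x₀ ρ₂) :=
      (listProd_cont L).continuousOn.inv₀ hPne
    have hΨc : ContinuousOn (fun z => ((z - x₀) ^ (l+1))⁻¹) (Metric.sphere x₀ ρ₂) := by
      apply ContinuousOn.inv₀
      · exact ((continuous_id.sub continuous_const).pow (l+1)).continuousOn
      · intro z hz
        exact pow_ne_zero _ (sub_ne_zero.mpr (hzx z hz))
    have ci_g : CircleIntegrable (fun z => g z * ((L.map fun a => z - a).prod)⁻¹) x₀ ρ₂ :=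
      ContinuousOn.circleIntegrable hρ₂.le (hgc.mul hΦc)
    have ci_f : CircleIntegrable (fun z => f z * ((L.map fun a => z - a).prod)⁻¹) x₀ ρ₂ :=
      ContinuousOn.circleIntegrable hρ₂.le (hfcs.mul hΦc)
    have ci_fΨ : CircleIntegrable (fun z => f z * ((z - x₀) ^ (l+1))⁻¹) x₀ ρ₂ :=
      ContinuousOn.circleIntegrable hρ₂.le (hfcs.mul hΨc)
    -- I(g) = 0
    have E0 : (∮ z in C(x₀, ρ₂), g z * ((L.map fun a => z - a).prod)⁻¹) = 0 := by
      have heq : Set.EqOn (fun z => g z * ((L.map fun a => z - a).prod)⁻¹) H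
          (Metric.sphere x₀ ρ₂) := by
        intro z hz
        simp only
        rw [hfactg z, mul_comm ((L.map fun a => z - a).prod) (H z), mul_assoc,
          mul_inv_cancel₀ (hPne z hz), mul_one]
      rw [circleIntegral.integral_congr hρ₂.le heq]
      exact Complex.circleIntegral_eq_zero_of_differentiable_on_off_countable hρ₂.le
        Set.countable_empty (hHd.continuousOn.mono hcbrV)
        (fun z hz => hHd.differentiableAt (hV.mem_nhds (hcbrV (Metric.ball_subset_closedBall hz.1))))
    -- I(f, Ψ) = 2πi u(x₀)
    have E1 : (∮ z in C(x₀, ρ₂), f z * ((z - x₀) ^ (l+1))⁻¹)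
        = (2 * Real.pi * Complex.I : ℂ) * F l x₀ := by
      have hdc : DiffContOnCl ℂ (F l) (Metric.ball x₀ ρ₂) := by
        apply DifferentiableOn.diffContOnCl
        rw [closure_ball x₀ hρ₂.ne']
        exact hFl_diff.mono hcbrU
      have hcif := hdc.circleIntegral_sub_inv_smul (Metric.mem_ball_self hρ₂)
      have heq : Set.EqOn (fun z => f z * ((z - x₀) ^ (l+1))⁻¹)
          (fun z => (z - x₀)⁻¹ • F l z) (Metric.sphere x₀ ρ₂) := by
        intro z hz
        simp only [smul_eq_mul]
        rw [hffact l le_rfl z, pow_succ]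
        have hne : z - x₀ ≠ 0 := sub_ne_zero.mpr (hzx z hz)
        field_simp
      rw [circleIntegral.integral_congr hρ₂.le heq, hcif, smul_eq_mul]
    -- the two error bounds
    have E2 : ‖(∮ z in C(x₀, ρ₂), f z * ((L.map fun a => z - a).prod)⁻¹)
        - (∮ z in C(x₀, ρ₂), f z * ((z - x₀) ^ (l+1))⁻¹)‖
          ≤ 2 * Real.pi * ρ₂ * (M * (ρ * Cd)) := by
      rw [← circleIntegral.integral_sub ci_f ci_fΨ]
      apply circleIntegral.norm_integral_le_of_norm_le_const hρ₂.le
      intro z hz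
      have hfM : ‖f z‖ ≤ M := hzMmax z hz
      have hd := hΦΨ z hz
      have : f z * ((L.map fun a => z - a).prod)⁻¹ - f z * ((z - x₀) ^ (l+1))⁻¹
          = f z * (((L.map fun a => z - a).prod)⁻¹ - ((z - x₀) ^ (l+1))⁻¹) := by ring
      rw [this, norm_mul]
      exact mul_le_mul hfM hd (norm_nonneg _) hM0
    have E3 : ‖(∮ z in C(x₀, ρ₂), g z * ((L.map fun a => z - a).prod)⁻¹)
        - (∮ z in C(x₀, ρ₂), f z * ((L.map fun a => z - a).prod)⁻¹)‖
          ≤ 2 * Real.pi * ρ₂ * (η'₂ / (ρ₂/2) ^ (l+1)) := by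
      rw [← circleIntegral.integral_sub ci_g ci_f]
      apply circleIntegral.norm_integral_le_of_norm_le_const hρ₂.le
      intro z hz
      have hgfz : ‖g z - f z‖ ≤ η'₂ := le_trans (hgf z (hsphK hz)).le hη'2
      have hinv : ‖((L.map fun a => z - a).prod)⁻¹‖ ≤ ((ρ₂/2) ^ (l+1))⁻¹ := by
        rw [norm_inv]
        exact inv_anti₀ (by positivity) (hPlow z hz)
      have : g z * ((L.map fun a => z - a).prod)⁻¹ - f z * ((L.map fun a => z - a).prod)⁻¹
          = (g z - f z) * ((L.map fun a => z - a).prod)⁻¹ := by ring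
      rw [this, norm_mul]
      calc ‖g z - f z‖ * ‖((L.map fun a => z - a).prod)⁻¹‖
          ≤ η'₂ * ((ρ₂/2) ^ (l+1))⁻¹ :=
            mul_le_mul hgfz hinv (norm_nonneg _) hη'₂pos.le
      _ = η'₂ / (ρ₂/2) ^ (l+1) := (div_eq_mul_inv η'₂ _).symm
    -- combine
    have hval : ‖(2 * Real.pi * Complex.I : ℂ) * F l x₀‖ = 2 * Real.pi * c₀ := by
      rw [hFlx]
      simp only [norm_mul, Complex.norm_I, Complex.norm_two,
        Complex.norm_real, Real.norm_eq_abs, mul_one]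
      rw [abs_of_pos Real.pi_pos, hc₀def]
    set Ifψ := (∮ z in C(x₀, ρ₂), f z * ((z - x₀) ^ (l+1))⁻¹) with hIfψdef
    set Ifφ := (∮ z in C(x₀, ρ₂), f z * ((L.map fun a => z - a).prod)⁻¹) with hIfφdef
    set Igφ := (∮ z in C(x₀, ρ₂), g z * ((L.map fun a => z - a).prod)⁻¹) with hIgφdef
    have htri : ‖Ifψ‖ ≤ ‖Ifφ - Ifψ‖ + ‖Igφ - Ifφ‖ + ‖Igφ‖ := by
      have h9 : Ifψ = (Ifψ - Ifφ) + (Ifφ - Igφ) + Igφ := by ring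
      calc ‖Ifψ‖ = ‖(Ifψ - Ifφ) + (Ifφ - Igφ) + Igφ‖ := by rw [← h9]
      _ ≤ ‖(Ifψ - Ifφ) + (Ifφ - Igφ)‖ + ‖Igφ‖ := norm_add_le _ _
      _ ≤ ‖Ifψ - Ifφ‖ + ‖Ifφ - Igφ‖ + ‖Igφ‖ := by
          have := norm_add_le (Ifψ - Ifφ) (Ifφ - Igφ)
          linarith
      _ = ‖Ifφ - Ifψ‖ + ‖Igφ - Ifφ‖ + ‖Igφ‖ := by
          rw [norm_sub_rev Ifψ Ifφ, norm_sub_rev Ifφ Igφ]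
    have hE2' : ‖Ifφ - Ifψ‖ ≤ 2 * Real.pi * ρ₂ * (M * (ρ * Cd)) := E2
    have hE3' : ‖Igφ - Ifφ‖ ≤ 2 * Real.pi * ρ₂ * (η'₂ / (ρ₂/2) ^ (l+1)) := E3
    have hIg : ‖Igφ‖ = 0 := by rw [E0]; exact norm_zero
    have hIψ : ‖Ifψ‖ = 2 * Real.pi * c₀ := by rw [E1]; exact hval
    have h10 : 2 * Real.pi * c₀ ≤ 2 * Real.pi * ρ₂ * (M * (ρ * Cd))
        + 2 * Real.pi * ρ₂ * (η'₂ / (ρ₂/2) ^ (l+1)) := by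
      rw [← hIψ]
      linarith [htri]
    have h6 : 2 * Real.pi * ρ₂ * (M * (ρ * Cd)) ≤ Real.pi * c₀ := by
      have : 2 * Real.pi * ρ₂ * (M * (ρ * Cd)) = Real.pi * (ρ * (2 * ρ₂ * M * Cd)) := by ring
      rw [this]
      exact mul_le_mul_of_nonneg_left hρbound Real.pi_pos.le
    have h7 : 2 * Real.pi * ρ₂ * (η'₂ / (ρ₂/2) ^ (l+1)) = Real.pi * c₀ / 4 := by
      have hX : ((ρ₂:ℝ)/2) ^ (l+1) ≠ 0 := by positivity
      rw [hη'₂def]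
      field_simp
      ring
    have h8 : 0 < Real.pi * c₀ := mul_pos Real.pi_pos hc₀
    linarith
end
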